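/- arXiv:2605.02668 — 7 statements merged into one kernel-verified Lean document; each statement's English description precedes it below -/
import Mathlib

section
/- Let n ≥ 2, let i, j, k ∈ {0,…,n−1} be pairwise distinct and p, q ∈ N with p ≥ δ(i>j) and q ≥ δ(j>k). Let σ be the permutation of {i,j,k} such that σ(i) < σ(j) < σ(k). Then ω_c(β_{(i,j)_p}, β_{(j,k)_q}) = ε(σ)·(−1)^{δ(σ(j) ∈ R_c)} − 2p·(δ(j ∈ R_c) − δ(k ∈ R_c)) + 2q·(δ(i ∈ R_c) − δ(j ∈ R_c)). In particular this value is always odd, hence nonzero. -/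
/- Statement 0: For a Coxeter element `c` of the affine symmetric group (type Ã_{n-1}),
given by a word listing each simple generator once, the skew-symmetrized Euler form
satisfies ω_c(α_{i-1}, α_i) = 1 if i ∈ L_c and = -1 if i ∈ R_c, where
i ∈ L_c ⟺ c(i) > i and i ∈ R_c ⟺ c(i) < i (indices of simple roots mod n). -/

open scoped Classical

noncomputable section

/-- The affine transposition exchanging the residue class of `i` (mod `n`) with that of `j`,
sending `x ≡ i` to `x + (j - i)` and `x ≡ j` to `x + (i - j)`. -/
def affT (n : ℕ) (i j : ℤ) : ℤ → ℤ := fun x =>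
  if (x : ZMod n) = (i : ZMod n) then x + (j - i)
  else if (x : ZMod n) = (j : ZMod n) then x + (i - j)
  else x

/-- The simple generator `s_i` of the affine symmetric group, as an affine permutation. -/
def gen (n : ℕ) (i : ZMod n) : ℤ → ℤ := affT n (i.val : ℤ) ((i.val : ℤ) + 1)

/-- The Coxeter element determined by a word `c` listing the generators, as an affine
permutation (product = composition, first letter acting last on the left). -/
def coxC (n : ℕ) (c : List (ZMod n)) : ℤ → ℤ :=
  (c.map (gen n)).foldr (· ∘ ·) id

/-- Indices `i`, `j` label adjacent (noncommuting) simple generators mod `n`. -/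
def adjIdx (n : ℕ) (i j : ℤ) : Prop :=
  ((i : ZMod n) = (j : ZMod n) + 1 ∨ (j : ZMod n) = (i : ZMod n) + 1) ∧
    (i : ZMod n) ≠ (j : ZMod n)

/-- `s_i` appears before `s_j` in the word `c`. -/
def before (n : ℕ) (c : List (ZMod n)) (i j : ℤ) : Prop :=
  c.idxOf (i : ZMod n) < c.idxOf (j : ZMod n)

/-- The Euler form `E_c` on pairs of simple roots: `1` on the diagonal, the Cartan matrix
entry (here `-1` for adjacent generators in type Ã) if `s_i` appears after `s_j` in `c`,
and `0` if `s_i` appears before `s_j`. -/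
def eulerS (n : ℕ) (c : List (ZMod n)) (i j : ℤ) : ℝ :=
  if (i : ZMod n) = (j : ZMod n) then 1
  else if adjIdx n i j ∧ before n c j i then -1 else 0

/-- The skew-symmetrization `ω_c = E_c(·,·) - E_c(·,·)ᵀ` on pairs of simple roots. -/
def omegaS (n : ℕ) (c : List (ZMod n)) (i j : ℤ) : ℝ :=
  eulerS n c i j - eulerS n c j i

/-- The simple root `α_i` (index taken mod `n`) as a vector in `V = (ZMod n) → ℝ`. -/
def alphaV (n : ℕ) (i : ℤ) : ZMod n → ℝ := fun k => if k = (i : ZMod n) then 1 else 0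

/-- The bilinear form `ω_c` on `V`, extended bilinearly from its values on simple roots. -/
def omegaF (n : ℕ) (c : List (ZMod n)) (v w : ZMod n → ℝ) : ℝ :=
  ∑ i ∈ Finset.range n, ∑ j ∈ Finset.range n,
    v ((i : ℕ) : ZMod n) * w ((j : ℕ) : ZMod n) * omegaS n c (i : ℤ) (j : ℤ)
/- Statement 3: ω_c(β_{(i,j)_p}, β_{(j,k)_q}) = ε(σ)·(-1)^{δ(σ(j)∈R_c)}
   − 2p(δ(j∈R_c) − δ(k∈R_c)) + 2q(δ(i∈R_c) − δ(j∈R_c)); the value is an odd integer,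
   hence nonzero. Here σ sorts {i,j,k}, so σ(j) is the median, and ε(σ) its sign. -/

/-- The vector `α_i + ⋯ + α_{j-1}` (for `i < j`). -/
def beta0 (n : ℕ) (i j : ℤ) : ZMod n → ℝ :=
  fun k => ∑ t ∈ Finset.Ico i j, if k = (t : ZMod n) then 1 else 0

/-- The root `β_{(i,j)_p} = (-1)^{δ(i>j)} β_{(i,j)} + pδ`, with
`β_{(i,j)} = α_{min(i,j)} + ⋯ + α_{max(i,j)-1}` and `δ = α_0 + ⋯ + α_{n-1}`. -/
def betaT (n : ℕ) (i j : ℤ) (p : ℕ) : ZMod n → ℝ :=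
  fun k => (if i < j then beta0 n i j k else -(beta0 n j i k)) + (p : ℝ)

/-- The median of three integers: the value `σ(j)` where `σ` sorts `(i,j,k)`. -/
def med3 (i j k : ℤ) : ℤ := max (min i j) (min (max i j) k)

/-- The sign `ε(σ)` of the permutation `σ` of `{i,j,k}` with `σ(i) < σ(j) < σ(k)`. -/
def sgn3 (i j k : ℤ) : ℝ :=
  if (i < j ∧ j < k) ∨ (j < k ∧ k < i) ∨ (k < i ∧ i < j) then 1 else -1

/-- `(-1)^{δ(a ∈ R_c)}`, where `a ∈ R̄_c ⟺ c(a) < a`. -/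
def rsgn (n : ℕ) (c : List (ZMod n)) (a : ℤ) : ℝ := if coxC n c a < a then -1 else 1

/-- The Kronecker indicator `δ(a ∈ R_c)`, where `a ∈ R̄_c ⟺ c(a) < a`. -/
def rInd (n : ℕ) (c : List (ZMod n)) (a : ℤ) : ℝ := if coxC n c a < a then 1 else 0


section PartA

variable {n : ℕ} {c : List (ZMod n)}

lemma coxC_nil (x : ℤ) : coxC n [] x = x := rfl

lemma coxC_cons (g : ZMod n) (l : List (ZMod n)) (x : ℤ) :
    coxC n (g :: l) x = gen n g (coxC n l x) := rfl

lemma coxC_append (l₁ l₂ : List (ZMod n)) (x : ℤ) :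
    coxC n (l₁ ++ l₂) x = coxC n l₁ (coxC n l₂ x) := by
  induction l₁ with
  | nil => rfl
  | cons g l ih => simp [List.cons_append, coxC_cons, ih]

lemma cast_val_int [NeZero n] (g : ZMod n) : (((g.val : ℤ)) : ZMod n) = g := by
  push_cast
  exact ZMod.natCast_rightInverse g

lemma gen_up [NeZero n] {g : ZMod n} {x : ℤ} (h : (x : ZMod n) = g) :
    gen n g x = x + 1 := by
  simp [gen, affT, cast_val_int, h]

lemma gen_down (hn : 2 ≤ n) {g : ZMod n} {x : ℤ} (h : (x : ZMod n) = g + 1) :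
    gen n g x = x - 1 := by
  haveI : NeZero n := ⟨by omega⟩
  haveI : Fact (1 < n) := ⟨by omega⟩
  have hv : ((g.val : ℕ) : ZMod n) = g := ZMod.natCast_rightInverse g
  have c1 : (((g.val : ℤ)) : ZMod n) = g := by push_cast [hv]; ring
  have c2 : ((((g.val : ℤ)) + 1 : ℤ) : ZMod n) = g + 1 := by push_cast [hv]; ring
  have h1 : g + 1 ≠ g := by
    intro hh
    have h0 : (1 : ZMod n) = 0 := by linear_combination hh
    exact one_ne_zero h0
  simp only [gen, affT, c1, c2, h]
  rw [if_neg h1]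
  simp only [if_true, eq_self_iff_true]
  ring

lemma gen_fixed (hn : 2 ≤ n) {g : ZMod n} {x : ℤ} (h1 : (x : ZMod n) ≠ g)
    (h2 : (x : ZMod n) ≠ g + 1) : gen n g x = x := by
  haveI : NeZero n := ⟨by omega⟩
  have hv : ((g.val : ℕ) : ZMod n) = g := ZMod.natCast_rightInverse g
  have c1 : (((g.val : ℤ)) : ZMod n) = g := by push_cast [hv]; ring
  have c2 : ((((g.val : ℤ)) + 1 : ℤ) : ZMod n) = g + 1 := by push_cast [hv]; ring
  simp only [gen, affT, c1, c2]
  rw [if_neg h1, if_neg h2]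

lemma coxC_up (hn : 2 ≤ n) {l : List (ZMod n)} (hl : l.Nodup) {x : ℤ}
    (hx : ((x : ZMod n) - 1) ∉ l) :
    x ≤ coxC n l x ∧ ∀ t : ℤ, x ≤ t → t < coxC n l x → (t : ZMod n) ∈ l := by
  haveI : NeZero n := ⟨by omega⟩
  induction l with
  | nil => refine ⟨le_refl _, fun t ht1 ht2 => absurd (lt_of_le_of_lt ht1 ht2) (by simp [coxC_nil])⟩
  | cons g l ih =>
    rw [List.nodup_cons] at hl
    rw [List.mem_cons, not_or] at hx
    obtain ⟨h1, h2⟩ := ih hl.2 hx.2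
    set y := coxC n l x with hy
    rw [coxC_cons, ← hy]
    by_cases hg1 : (y : ZMod n) = g
    · rw [gen_up hg1]
      refine ⟨by omega, fun t ht1 ht2 => ?_⟩
      rcases lt_or_eq_of_le (show t ≤ y by omega) with h | h
      · exact List.mem_cons_of_mem _ (h2 t ht1 h)
      · rw [h, hg1]; exact List.mem_cons_self
    · by_cases hg2 : (y : ZMod n) = g + 1
      · exfalso
        rcases lt_or_eq_of_le h1 with h | h
        · have hm : ((y - 1 : ℤ) : ZMod n) ∈ l := h2 (y - 1) (by omega) (by omega)
          have : ((y - 1 : ℤ) : ZMod n) = g := by push_cast [hg2]; ring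
          rw [this] at hm
          exact hl.1 hm
        · apply hx.1
          rw [← h] at hg2
          rw [hg2]; ring
      · rw [gen_fixed hn hg1 hg2]
        exact ⟨h1, fun t ht1 ht2 => List.mem_cons_of_mem _ (h2 t ht1 ht2)⟩

lemma coxC_down (hn : 2 ≤ n) {l : List (ZMod n)} (hl : l.Nodup) {x : ℤ}
    (hx : (x : ZMod n) ∉ l) :
    coxC n l x ≤ x ∧ ∀ t : ℤ, coxC n l x ≤ t → t < x → (t : ZMod n) ∈ l := by
  haveI : NeZero n := ⟨by omega⟩
  induction l with
  | nil => refine ⟨le_refl _, fun t ht1 ht2 => absurd (lt_of_le_of_lt ht1 ht2) (by simp [coxC_nil])⟩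
  | cons g l ih =>
    rw [List.nodup_cons] at hl
    rw [List.mem_cons, not_or] at hx
    obtain ⟨h1, h2⟩ := ih hl.2 hx.2
    set y := coxC n l x with hy
    rw [coxC_cons, ← hy]
    by_cases hg1 : (y : ZMod n) = g
    · exfalso
      rcases lt_or_eq_of_le h1 with h | h
      · have hm : ((y : ℤ) : ZMod n) ∈ l := h2 y (le_refl _) h
        rw [hg1] at hm
        exact hl.1 hm
      · exact hx.1 (by rw [h] at hg1; exact hg1)
    · by_cases hg2 : (y : ZMod n) = g + 1
      · rw [gen_down hn hg2]
        refine ⟨by omega, fun t ht1 ht2 => ?_⟩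
        rcases lt_or_eq_of_le (show y - 1 ≤ t by omega) with h | h
        · exact List.mem_cons_of_mem _ (h2 t (by omega) ht2)
        · rw [← h]
          have : ((y - 1 : ℤ) : ZMod n) = g := by push_cast [hg2]; ring
          rw [this]; exact List.mem_cons_self
      · rw [gen_fixed hn hg1 hg2]
        exact ⟨h1, fun t ht1 ht2 => List.mem_cons_of_mem _ (h2 t ht1 ht2)⟩

lemma coxC_fix (hn : 2 ≤ n) {l : List (ZMod n)} (hl : l.Nodup) {x : ℤ}
    (hx1 : (x : ZMod n) ∉ l) (hx2 : ((x : ZMod n) - 1) ∉ l) : coxC n l x = x :=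
  le_antisymm (coxC_down hn hl hx1).1 (coxC_up hn hl hx2).1

lemma mem_of_full (hn : 2 ≤ n) (hnd : c.Nodup) (hlen : c.length = n) (x : ZMod n) :
    x ∈ c := by
  haveI : NeZero n := ⟨by omega⟩
  have : c.toFinset = Finset.univ := by
    apply Finset.eq_univ_of_card
    rw [List.toFinset_card_of_nodup hnd, hlen, ZMod.card]
  rw [← List.mem_toFinset, this]
  exact Finset.mem_univ x

/-- Decomposition of the word at the occurrence of `a`, knowing `b` occurs earlier. -/
lemma word_split (hn : 2 ≤ n) (hnd : c.Nodup) (hlen : c.length = n) {a b : ZMod n}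
    (hab : a ≠ b) (h : c.idxOf b < c.idxOf a) :
    ∃ t d : List (ZMod n), c = t ++ a :: d ∧ t.Nodup ∧ d.Nodup ∧
      a ∉ t ∧ a ∉ d ∧ b ∉ d := by
  have ha : a ∈ c := mem_of_full hn hnd hlen a
  have hb : b ∈ c := mem_of_full hn hnd hlen b
  have hm : c.idxOf a < c.length := List.idxOf_lt_length_iff.2 ha
  set m := c.idxOf a with hmdef
  refine ⟨c.take m, c.drop (m + 1), ?_, ?_, ?_, ?_, ?_, ?_⟩
  case _ =>
    conv_lhs => rw [← List.take_append_drop m c]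
    rw [List.drop_eq_getElem_cons hm, List.getElem_idxOf hm]
  all_goals {
    have hc : c = c.take m ++ a :: c.drop (m + 1) := by
      conv_lhs => rw [← List.take_append_drop m c]
      rw [List.drop_eq_getElem_cons hm, List.getElem_idxOf hm]
    rw [hc] at hnd
    rw [List.nodup_append] at hnd
    obtain ⟨hnt, hnad, hdisj⟩ := hnd
    rw [List.nodup_cons] at hnad
    first
    | exact hnt
    | exact hnad.2
    | exact hnad.1
    | exact fun hmem => (hdisj _ hmem _ (List.mem_cons_self) rfl)
    | · -- b ∉ drop
        intro hbd
        have hbt : b ∉ c.take m := by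
          intro hbt
          exact hdisj _ hbt _ (List.mem_cons_of_mem _ hbd) rfl
        have : c.idxOf b = (c.take m).length + (a :: c.drop (m+1)).idxOf b := by
          conv_lhs => rw [hc]
          exact List.idxOf_append_of_notMem hbt
        rw [List.length_take, min_eq_left (le_of_lt hm)] at this
        omega
  }

lemma coxC_gt (hn : 2 ≤ n) (hnd : c.Nodup) (hlen : c.length = n) (x : ℤ)
    (h : c.idxOf ((x : ZMod n) - 1) < c.idxOf ((x : ZMod n))) :
    x < coxC n c x := by
  haveI : NeZero n := ⟨by omega⟩
  haveI : Fact (1 < n) := ⟨by omega⟩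
  have hab : (x : ZMod n) ≠ (x : ZMod n) - 1 := by
    intro hh
    have : (1 : ZMod n) = 0 := by linear_combination hh
    exact one_ne_zero this
  obtain ⟨t, d, hc, hnt, hnd', hat, had, hbd⟩ := word_split hn hnd hlen hab h
  rw [hc, coxC_append, coxC_cons]
  have hfix : coxC n d x = x := coxC_fix hn hnd' had hbd
  rw [hfix, gen_up rfl]
  have : x + 1 ≤ coxC n t (x + 1) := by
    refine (coxC_up hn hnt ?_).1
    have : (((x + 1 : ℤ)) : ZMod n) - 1 = (x : ZMod n) := by push_cast; ring
    rw [this]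
    exact hat
  omega

lemma coxC_lt (hn : 2 ≤ n) (hnd : c.Nodup) (hlen : c.length = n) (x : ℤ)
    (h : c.idxOf ((x : ZMod n)) < c.idxOf ((x : ZMod n) - 1)) :
    coxC n c x < x := by
  haveI : NeZero n := ⟨by omega⟩
  haveI : Fact (1 < n) := ⟨by omega⟩
  have hab : (x : ZMod n) - 1 ≠ (x : ZMod n) := by
    intro hh
    have : (1 : ZMod n) = 0 := by linear_combination hh.symm
    exact one_ne_zero this
  obtain ⟨t, d, hc, hnt, hnd', hat, had, hbd⟩ := word_split hn hnd hlen hab h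
  rw [hc, coxC_append, coxC_cons]
  have hfix : coxC n d x = x := coxC_fix hn hnd' hbd had
  rw [hfix, gen_down hn (by ring)]
  have : coxC n t (x - 1) ≤ x - 1 := by
    refine (coxC_down hn hnt ?_).1
    have : (((x - 1 : ℤ)) : ZMod n) = (x : ZMod n) - 1 := by push_cast; ring
    rw [this]
    exact hat
  omega

end PartA

section PartA2

variable {n : ℕ} {c : List (ZMod n)}

lemma omegaS_congr {a b a' b' : ℤ} (h1 : (a : ZMod n) = (a' : ZMod n))
    (h2 : (b : ZMod n) = (b' : ZMod n)) : omegaS n c a b = omegaS n c a' b' := by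
  unfold omegaS eulerS adjIdx before
  rw [h1, h2]

lemma gen_period (g : ZMod n) (x t : ℤ) : gen n g (x + n * t) = gen n g x + n * t := by
  have hc : ((x + n * t : ℤ) : ZMod n) = (x : ZMod n) := by
    push_cast [ZMod.natCast_self]
    ring
  simp only [gen, affT, hc]
  split_ifs <;> ring

lemma coxC_period (x t : ℤ) : coxC n c (x + n * t) = coxC n c x + n * t := by
  induction c with
  | nil => rfl
  | cons g l ih => rw [coxC_cons, coxC_cons, ih, gen_period]

lemma rInd_congr {a b : ℤ} (h : (a : ZMod n) = (b : ZMod n)) :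
    rInd n c a = rInd n c b := by
  rw [ZMod.intCast_eq_intCast_iff_dvd_sub] at h
  obtain ⟨t, ht⟩ := h
  have hb : b = a + n * t := by omega
  unfold rInd
  rw [hb, coxC_period]
  by_cases hlt : coxC n c a < a
  · rw [if_pos hlt, if_pos (by omega)]
  · rw [if_neg hlt, if_neg (by omega)]

lemma omegaS_succ (hn : 3 ≤ n) (hnd : c.Nodup) (hlen : c.length = n) (b : ℤ) :
    omegaS n c b (b + 1) = 1 - 2 * rInd n c (b + 1) := by
  haveI : NeZero n := ⟨by omega⟩
  haveI : Fact (1 < n) := ⟨by omega⟩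
  have hc1 : ((b + 1 : ℤ) : ZMod n) = (b : ZMod n) + 1 := by push_cast; ring
  have hne : (b : ZMod n) ≠ (b : ZMod n) + 1 := by
    intro hh
    exact one_ne_zero (show (1 : ZMod n) = 0 by linear_combination hh.symm)
  have hmem1 : (b : ZMod n) ∈ c := mem_of_full (by omega) hnd hlen _
  have hmem2 : (b : ZMod n) + 1 ∈ c := mem_of_full (by omega) hnd hlen _
  have hij : c.idxOf ((b : ZMod n)) ≠ c.idxOf ((b : ZMod n) + 1) := fun hh =>
    hne ((List.idxOf_inj hmem1).1 hh)
  simp only [omegaS, eulerS, adjIdx, before, rInd, hc1]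
  rw [if_neg hne, if_neg (Ne.symm hne)]
  rcases lt_or_gt_of_ne hij with h | h
  · have hgt : b + 1 < coxC n c (b + 1) := by
      apply coxC_gt (by omega) hnd hlen
      rw [hc1]
      simpa using h
    rw [if_neg (by rintro ⟨-, hb'⟩; omega), if_pos ⟨⟨Or.inl trivial, Ne.symm hne⟩, h⟩,
      if_neg (by omega)]
    norm_num
  · have hlt : coxC n c (b + 1) < b + 1 := by
      apply coxC_lt (by omega) hnd hlen
      rw [hc1]
      simpa using h
    rw [if_pos ⟨⟨Or.inr trivial, hne⟩, h⟩, if_neg (by rintro ⟨-, hb'⟩; omega),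
      if_pos (by omega)]
    norm_num

end PartA2

section PartB

variable {n : ℕ} {c : List (ZMod n)}

lemma sum_zmod_eq [NeZero n] (f : ZMod n → ℝ) :
    ∑ i ∈ Finset.range n, f ((i : ℕ) : ZMod n) = ∑ x : ZMod n, f x := by
  apply Finset.sum_nbij' (i := fun i => ((i : ℕ) : ZMod n)) (j := fun x => x.val)
  · intro a _; exact Finset.mem_univ _
  · intro a _; exact Finset.mem_range.2 (ZMod.val_lt a)
  · intro a ha; exact ZMod.val_cast_of_lt (Finset.mem_range.1 ha)
  · intro a _; exact ZMod.natCast_rightInverse a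
  · intro a _; rfl

lemma omegaS_skew (a b : ℤ) : omegaS n c a b = -omegaS n c b a := by
  unfold omegaS; ring

lemma omegaS_zero [NeZero n] {x y : ZMod n} (h1 : y ≠ x + 1) (h2 : x ≠ y + 1) :
    omegaS n c (x.val : ℤ) (y.val : ℤ) = 0 := by
  by_cases hxy : x = y
  · rw [hxy]; exact sub_self _
  · unfold omegaS eulerS adjIdx
    rw [cast_val_int, cast_val_int]
    rw [if_neg hxy, if_neg (Ne.symm hxy), if_neg, if_neg]
    · ring
    · rintro ⟨⟨h | h, -⟩, -⟩
      · exact h1 h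
      · exact h2 h
    · rintro ⟨⟨h | h, -⟩, -⟩
      · exact h2 h
      · exact h1 h

lemma omegaF_key [NeZero n] (hn : 3 ≤ n) (hnd : c.Nodup) (hlen : c.length = n)
    (v w : ZMod n → ℝ) :
    omegaF n c v w = ∑ x : ZMod n,
      (1 - 2 * rInd n c ((x.val : ℤ) + 1)) * (v x * w (x + 1) - v (x + 1) * w x) := by
  set F : ZMod n → ZMod n → ℝ :=
    fun x y => v x * w y * omegaS n c (x.val : ℤ) (y.val : ℤ) with hF
  have step1 : omegaF n c v w = ∑ x : ZMod n, ∑ y : ZMod n, F x y := by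
    rw [omegaF]
    rw [← sum_zmod_eq (fun x => ∑ y : ZMod n, F x y)]
    apply Finset.sum_congr rfl
    intro i _
    rw [← sum_zmod_eq (fun y => F ((i : ℕ) : ZMod n) y)]
    apply Finset.sum_congr rfl
    intro j _
    rw [hF]
    congr 1
    apply omegaS_congr <;>
      rw [cast_val_int] <;> push_cast <;> rfl
  have h2ne : ∀ x : ZMod n, (x + 1 : ZMod n) ≠ x - 1 := by
    intro x hh
    have h0 : ((2 : ℤ) : ZMod n) = 0 := by push_cast; linear_combination hh
    rw [ZMod.intCast_zmod_eq_zero_iff_dvd] at h0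
    have := Int.le_of_dvd (by norm_num) h0
    omega
  have step2 : ∀ x : ZMod n, ∑ y : ZMod n, F x y = F x (x + 1) + F x (x - 1) := by
    intro x
    have hsub : ∑ y : ZMod n, F x y = ∑ y ∈ ({x + 1, x - 1} : Finset (ZMod n)), F x y := by
      symm
      apply Finset.sum_subset (Finset.subset_univ _)
      intro y _ hy
      rw [Finset.mem_insert, Finset.mem_singleton, not_or] at hy
      have hz : omegaS n c (x.val : ℤ) (y.val : ℤ) = 0 := by
        apply omegaS_zero hy.1
        intro hh
        exact hy.2 (by rw [hh]; ring)
      rw [hF]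
      simp only [hz, mul_zero]
    rw [hsub, Finset.sum_pair (h2ne x)]
  simp only [step1, step2]
  rw [Finset.sum_add_distrib]
  have step3 : ∑ x : ZMod n, F x (x - 1) = ∑ x : ZMod n, F (x + 1) x := by
    rw [← Equiv.sum_comp (Equiv.addRight (1 : ZMod n)) (fun x => F x (x - 1))]
    apply Finset.sum_congr rfl
    intro x _
    simp only [Equiv.coe_addRight]
    congr 1
    ring
  rw [step3]
  rw [← Finset.sum_add_distrib]
  apply Finset.sum_congr rfl
  intro x _
  have hcongr1 : omegaS n c (x.val : ℤ) (((x + 1 : ZMod n)).val : ℤ) =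
      omegaS n c (x.val : ℤ) ((x.val : ℤ) + 1) := by
    apply omegaS_congr
    · rfl
    · rw [cast_val_int]
      push_cast
      rw [show ((x.val : ℕ) : ZMod n) = x from ZMod.natCast_rightInverse x]
  have hcongr2 : omegaS n c (((x + 1 : ZMod n)).val : ℤ) (x.val : ℤ) =
      -omegaS n c (x.val : ℤ) ((x.val : ℤ) + 1) := by
    rw [omegaS_skew, hcongr1]
  rw [hF]
  simp only [hcongr1, hcongr2]
  rw [omegaS_succ hn hnd hlen]
  ring

end PartB

section PartB2

variable {n : ℕ} {c : List (ZMod n)}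

/-- Indicator of the integer interval `[u, v)`. -/
def chi (u v t : ℤ) : ℝ := if u ≤ t ∧ t < v then 1 else 0

lemma chi_shift (a b t : ℤ) : chi a b (t + 1) = chi (a - 1) (b - 1) t := by
  unfold chi
  have h : (a ≤ t + 1 ∧ t + 1 < b) ↔ (a - 1 ≤ t ∧ t < b - 1) := by omega
  simp only [h]

lemma key_int [NeZero n] (hn : 3 ≤ n) (hnd : c.Nodup) (hlen : c.length = n)
    (v w : ZMod n → ℝ) :
    omegaF n c v w = ∑ t ∈ Finset.Ico (0 : ℤ) (n : ℤ),
      (1 - 2 * rInd n c (t + 1)) * (v ((t : ZMod n)) * w (((t + 1 : ℤ) : ZMod n)) -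
        v (((t + 1 : ℤ) : ZMod n)) * w ((t : ZMod n))) := by
  rw [omegaF_key hn hnd hlen]
  apply Finset.sum_nbij' (i := fun x : ZMod n => (x.val : ℤ)) (j := fun t => ((t : ZMod n)))
  · intro a _
    rw [Finset.mem_Ico]
    exact ⟨Int.ofNat_nonneg _, by exact_mod_cast ZMod.val_lt a⟩
  · intro a _; exact Finset.mem_univ _
  · intro a _; exact cast_val_int a
  · intro a ha
    rw [Finset.mem_Ico] at ha
    rw [ZMod.val_intCast]
    exact Int.emod_emod_of_dvd _ dvd_rfl ▸ Int.emod_eq_of_lt ha.1 ha.2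
  · intro x _
    have h1 : (((x.val : ℤ)) : ZMod n) = x := cast_val_int x
    have h2 : ((((x.val : ℤ)) + 1 : ℤ) : ZMod n) = x + 1 := by
      push_cast
      rw [show ((x.val : ℕ) : ZMod n) = x from ZMod.natCast_rightInverse x]
    rw [h1, h2]

lemma sum_Ico_bot (g : ℤ → ℝ) {a b : ℤ} (h : a < b) :
    ∑ t ∈ Finset.Ico a b, g t = g a + ∑ t ∈ Finset.Ico (a + 1) b, g t := by
  rw [show Finset.Ico a b = insert a (Finset.Ico (a + 1) b) from
    Finset.ext (fun x => by simp only [Finset.mem_Ico, Finset.mem_insert]; omega),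
    Finset.sum_insert (by simp)]

lemma sum_Ico_top (g : ℤ → ℝ) {a b : ℤ} (h : a < b) :
    ∑ t ∈ Finset.Ico a b, g t = (∑ t ∈ Finset.Ico a (b - 1), g t) + g (b - 1) := by
  rw [show Finset.Ico a b = insert (b - 1) (Finset.Ico a (b - 1)) from
    Finset.ext (fun x => by simp only [Finset.mem_Ico, Finset.mem_insert]; omega),
    Finset.sum_insert (by simp)]
  ring

lemma sum_Ico_singleton (g : ℤ → ℝ) (a : ℤ) :
    ∑ t ∈ Finset.Ico a (a + 1), g t = g a := by
  rw [show Finset.Ico a (a + 1) = {a} from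
    Finset.ext (fun x => by simp only [Finset.mem_Ico, Finset.mem_singleton]; omega),
    Finset.sum_singleton]

lemma sum_mul_chi_chi (g : ℤ → ℝ) (lo hi u v u' v' : ℤ) :
    ∑ t ∈ Finset.Ico lo hi, g t * chi u v t * chi u' v' t
      = ∑ t ∈ Finset.Ico (max lo (max u u')) (min hi (min v v')), g t := by
  have hset : Finset.Ico (max lo (max u u')) (min hi (min v v'))
      = (Finset.Ico lo hi).filter (fun t => (u ≤ t ∧ t < v) ∧ (u' ≤ t ∧ t < v')) := by
    ext x
    simp only [Finset.mem_Ico, Finset.mem_filter]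
    omega
  rw [hset, Finset.sum_filter]
  apply Finset.sum_congr rfl
  intro t _
  unfold chi
  split_ifs <;> try ring
  all_goals tauto

lemma sum_mul_chi (g : ℤ → ℝ) (lo hi u v : ℤ) :
    ∑ t ∈ Finset.Ico lo hi, g t * chi u v t
      = ∑ t ∈ Finset.Ico (max lo u) (min hi v), g t := by
  have hset : Finset.Ico (max lo u) (min hi v)
      = (Finset.Ico lo hi).filter (fun t => u ≤ t ∧ t < v) := by
    ext x
    simp only [Finset.mem_Ico, Finset.mem_filter]
    omega
  rw [hset, Finset.sum_filter]
  apply Finset.sum_congr rfl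
  intro t _
  unfold chi
  split_ifs <;> try ring
  all_goals tauto

end PartB2

section Core

lemma core (n : ℕ) (hn : 3 ≤ n) (g : ℤ → ℝ) (hg : g ((n : ℤ) - 1) = g (-1))
    (u v u' v' : ℤ) (hu : 0 ≤ u) (huv : u < v) (hv : v ≤ (n : ℤ) - 1)
    (hu' : 0 ≤ u') (huv' : u' < v') (hv' : v' ≤ (n : ℤ) - 1) (e1 e2 p q : ℝ) :
    ∑ t ∈ Finset.Ico (0 : ℤ) (n : ℤ), g t *
        ((e1 * chi u v t + p) * (e2 * (chi u' v' (t + 1) + chi (u' + n) (v' + n) (t + 1)) + q)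
          - (e1 * (chi u v (t + 1) + chi (u + n) (v + n) (t + 1)) + p) * (e2 * chi u' v' t + q))
      = e1 * e2 * ((∑ t ∈ Finset.Ico (max u (u' - 1)) (min v (v' - 1)), g t)
          - ∑ t ∈ Finset.Ico (max u' (u - 1)) (min v' (v - 1)), g t)
        + p * e2 * (g (u' - 1) - g (v' - 1)) + e1 * q * (g (v - 1) - g (u - 1)) := by
  have expand : ∀ t : ℤ, g t *
        ((e1 * chi u v t + p) * (e2 * (chi u' v' (t + 1) + chi (u' + n) (v' + n) (t + 1)) + q)
          - (e1 * (chi u v (t + 1) + chi (u + n) (v + n) (t + 1)) + p) * (e2 * chi u' v' t + q))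
      = e1 * e2 * (g t * chi u v t * chi (u' - 1) (v' - 1) t)
        - e1 * e2 * (g t * chi (u - 1) (v - 1) t * chi u' v' t)
        + e1 * e2 * (g t * chi u v t * chi (u' + n - 1) (v' + n - 1) t)
        - e1 * e2 * (g t * chi (u + n - 1) (v + n - 1) t * chi u' v' t)
        + (p * e2 * (g t * chi (u' - 1) (v' - 1) t)
          + p * e2 * (g t * chi (u' + n - 1) (v' + n - 1) t)
          - p * e2 * (g t * chi u' v' t))
        + (e1 * q * (g t * chi u v t)
          - e1 * q * (g t * chi (u - 1) (v - 1) t)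
          - e1 * q * (g t * chi (u + n - 1) (v + n - 1) t)) := by
    intro t
    rw [chi_shift u v, chi_shift u' v', chi_shift (u + n), chi_shift (u' + n)]
    ring
  rw [Finset.sum_congr rfl (fun t _ => expand t)]
  simp only [Finset.sum_add_distrib, Finset.sum_sub_distrib, ← Finset.mul_sum]
  rw [sum_mul_chi_chi, sum_mul_chi_chi, sum_mul_chi_chi, sum_mul_chi_chi,
    sum_mul_chi, sum_mul_chi, sum_mul_chi, sum_mul_chi, sum_mul_chi, sum_mul_chi]
  -- cross terms vanish
  rw [show Finset.Ico (max (0:ℤ) (max u (u' + n - 1))) (min (n:ℤ) (min v (v' + n - 1))) =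
      ∅ from Finset.eq_empty_of_forall_notMem (fun x hx => by
        rw [Finset.mem_Ico] at hx; omega)]
  rw [show Finset.Ico (max (0:ℤ) (max (u + n - 1) u')) (min (n:ℤ) (min (v + n - 1) v')) =
      ∅ from Finset.eq_empty_of_forall_notMem (fun x hx => by
        rw [Finset.mem_Ico] at hx; omega)]
  -- normalize the two main intervals
  rw [show (max (0:ℤ) (max u (u' - 1))) = max u (u' - 1) by omega,
    show (min (n:ℤ) (min v (v' - 1))) = min v (v' - 1) by omega,
    show (max (0:ℤ) (max (u - 1) u')) = max u' (u - 1) by omega,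
    show (min (n:ℤ) (min (v - 1) v')) = min v' (v - 1) by omega]
  -- single-chi intervals
  rw [show (max (0:ℤ) u') = u' by omega, show (min (n:ℤ) v') = v' by omega,
    show (max (0:ℤ) u) = u by omega, show (min (n:ℤ) v) = v by omega,
    show (min (n:ℤ) (v' - 1)) = v' - 1 by omega, show (min (n:ℤ) (v - 1)) = v - 1 by omega,
    show (max (0:ℤ) (u' + n - 1)) = u' + n - 1 by omega,
    show (min (n:ℤ) (v' + n - 1)) = (n:ℤ) by omega,
    show (max (0:ℤ) (u + n - 1)) = u + n - 1 by omega,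
    show (min (n:ℤ) (v + n - 1)) = (n:ℤ) by omega]
  have hqpart : (∑ t ∈ Finset.Ico (max (0:ℤ) (u' - 1)) (v' - 1), g t)
        + (∑ t ∈ Finset.Ico (u' + n - 1) (n:ℤ), g t)
        - (∑ t ∈ Finset.Ico u' v', g t) = g (u' - 1) - g (v' - 1) := by
    by_cases h0 : u' = 0
    · subst h0
      rw [show (max (0:ℤ) (0 - 1)) = 0 by omega,
        show ((0:ℤ) + n - 1) = (n:ℤ) - 1 by ring,
        sum_Ico_top g (show (0:ℤ) < v' by omega),
        show Finset.Ico ((n:ℤ) - 1) (n:ℤ) = {(n:ℤ) - 1} from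
          Finset.ext (fun x => by simp only [Finset.mem_Ico, Finset.mem_singleton]; omega),
        Finset.sum_singleton, hg]
      ring
    · rw [show (max (0:ℤ) (u' - 1)) = u' - 1 by omega,
        show Finset.Ico (u' + n - 1) (n:ℤ) = ∅ from Finset.eq_empty_of_forall_notMem
          (fun x hx => by rw [Finset.mem_Ico] at hx; omega),
        Finset.sum_empty,
        sum_Ico_bot g (show u' - 1 < v' - 1 by omega),
        sum_Ico_top g (show u' < v' by omega),
        show (u' - 1 + 1) = u' by ring]
      ring
  have hppart : (∑ t ∈ Finset.Ico u v, g t)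
        - (∑ t ∈ Finset.Ico (max (0:ℤ) (u - 1)) (v - 1), g t)
        - (∑ t ∈ Finset.Ico (u + n - 1) (n:ℤ), g t) = g (v - 1) - g (u - 1) := by
    by_cases h0 : u = 0
    · subst h0
      rw [show (max (0:ℤ) (0 - 1)) = 0 by omega,
        show ((0:ℤ) + n - 1) = (n:ℤ) - 1 by ring,
        sum_Ico_top g (show (0:ℤ) < v by omega),
        show Finset.Ico ((n:ℤ) - 1) (n:ℤ) = {(n:ℤ) - 1} from
          Finset.ext (fun x => by simp only [Finset.mem_Ico, Finset.mem_singleton]; omega),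
        Finset.sum_singleton, hg]
      ring
    · rw [show (max (0:ℤ) (u - 1)) = u - 1 by omega,
        show Finset.Ico (u + n - 1) (n:ℤ) = ∅ from Finset.eq_empty_of_forall_notMem
          (fun x hx => by rw [Finset.mem_Ico] at hx; omega),
        Finset.sum_empty,
        sum_Ico_bot g (show u - 1 < v - 1 by omega),
        sum_Ico_top g (show u < v by omega),
        show (u - 1 + 1) = u by ring]
      ring
  rw [Finset.sum_empty]
  linear_combination (p * e2) * hqpart + (e1 * q) * hppart

end Core

section Eval

variable {n : ℕ} {c : List (ZMod n)}

lemma beta0_cast [NeZero n] {u v t : ℤ} (hu : 0 ≤ u) (hv : v ≤ (n : ℤ))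
    (ht0 : 0 ≤ t) (htn : t < (n : ℤ)) :
    beta0 n u v ((t : ZMod n)) = chi u v t := by
  unfold beta0 chi
  have hcongr : ∀ s ∈ Finset.Ico u v,
      (if ((t : ZMod n)) = ((s : ZMod n)) then (1 : ℝ) else 0) = if t = s then 1 else 0 := by
    intro s hs
    rw [Finset.mem_Ico] at hs
    by_cases h : t = s
    · rw [if_pos (by rw [h]), if_pos h]
    · rw [if_neg _, if_neg h]
      intro hc
      rw [ZMod.intCast_eq_intCast_iff'] at hc
      rw [Int.emod_eq_of_lt ht0 htn, Int.emod_eq_of_lt (by omega) (by omega)] at hc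
      exact h hc
  rw [Finset.sum_congr rfl hcongr, Finset.sum_ite_eq]
  simp only [Finset.mem_Ico]

lemma beta0_cast_succ [NeZero n] {u v t : ℤ} (hu : 0 ≤ u) (hv : v ≤ (n : ℤ))
    (ht0 : 0 ≤ t) (htn : t < (n : ℤ)) :
    beta0 n u v (((t + 1 : ℤ) : ZMod n)) = chi u v (t + 1) + chi (u + n) (v + n) (t + 1) := by
  by_cases hend : t + 1 < (n : ℤ)
  · rw [beta0_cast hu hv (by omega) hend]
    have h0 : chi (u + n) (v + n) (t + 1) = 0 := by
      unfold chi
      rw [if_neg (by omega)]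
    rw [h0, add_zero]
  · have ht1 : t + 1 = (n : ℤ) := by omega
    have hcast : (((t + 1 : ℤ)) : ZMod n) = (((0 : ℤ)) : ZMod n) := by
      rw [ht1]
      simp only [Int.cast_zero]
      rw [ZMod.intCast_zmod_eq_zero_iff_dvd]
    rw [hcast, beta0_cast hu hv (le_refl 0) (by omega), ht1]
    unfold chi
    split_ifs <;> try norm_num
    all_goals omega

lemma betaT_cast_lt [NeZero n] {i j : ℤ} (hij : i < j) (hi : 0 ≤ i) (hj : j ≤ (n : ℤ)) (p : ℕ)
    {t : ℤ} (ht0 : 0 ≤ t) (htn : t < (n : ℤ)) :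
    betaT n i j p ((t : ZMod n)) = 1 * chi i j t + (p : ℝ) := by
  unfold betaT
  rw [if_pos hij, beta0_cast hi hj ht0 htn]
  ring

lemma betaT_cast_gt [NeZero n] {i j : ℤ} (hij : j < i) (hj : 0 ≤ j) (hi : i ≤ (n : ℤ)) (p : ℕ)
    {t : ℤ} (ht0 : 0 ≤ t) (htn : t < (n : ℤ)) :
    betaT n i j p ((t : ZMod n)) = (-1) * chi j i t + (p : ℝ) := by
  unfold betaT
  rw [if_neg (by omega), beta0_cast hj hi ht0 htn]
  ring

lemma betaT_succ_lt [NeZero n] {i j : ℤ} (hij : i < j) (hi : 0 ≤ i) (hj : j ≤ (n : ℤ)) (p : ℕ)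
    {t : ℤ} (ht0 : 0 ≤ t) (htn : t < (n : ℤ)) :
    betaT n i j p (((t + 1 : ℤ) : ZMod n))
      = 1 * (chi i j (t + 1) + chi (i + n) (j + n) (t + 1)) + (p : ℝ) := by
  unfold betaT
  rw [if_pos hij, beta0_cast_succ hi hj ht0 htn]
  ring

lemma betaT_succ_gt [NeZero n] {i j : ℤ} (hij : j < i) (hj : 0 ≤ j) (hi : i ≤ (n : ℤ)) (p : ℕ)
    {t : ℤ} (ht0 : 0 ≤ t) (htn : t < (n : ℤ)) :
    betaT n i j p (((t + 1 : ℤ) : ZMod n))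
      = (-1) * (chi j i (t + 1) + chi (j + n) (i + n) (t + 1)) + (p : ℝ) := by
  unfold betaT
  rw [if_neg (by omega), beta0_cast_succ hj hi ht0 htn]
  ring

lemma rsgn_eq (a : ℤ) : rsgn n c a = 1 - 2 * rInd n c a := by
  unfold rsgn rInd
  split_ifs <;> norm_num

end Eval

theorem statement3 (n : ℕ) (hn : 2 ≤ n) (c : List (ZMod n))
    (hnd : c.Nodup) (hlen : c.length = n)
    (i j k : ℤ) (hi : 0 ≤ i) (hi' : i < n) (hj : 0 ≤ j) (hj' : j < n)
    (hk : 0 ≤ k) (hk' : k < n) (hij : i ≠ j) (hjk : j ≠ k) (hik : i ≠ k)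
    (p q : ℕ) (hp : j < i → 1 ≤ p) (hq : k < j → 1 ≤ q) :
    omegaF n c (betaT n i j p) (betaT n j k q) =
        sgn3 i j k * rsgn n c (med3 i j k)
          - 2 * (p : ℝ) * (rInd n c j - rInd n c k)
          + 2 * (q : ℝ) * (rInd n c i - rInd n c j) ∧
      (∃ m : ℤ, Odd m ∧ omegaF n c (betaT n i j p) (betaT n j k q) = (m : ℝ)) ∧
      omegaF n c (betaT n i j p) (betaT n j k q) ≠ 0 := by
  have hn3 : 3 ≤ n := by omega
  haveI : NeZero n := ⟨by omega⟩
  have hg : 1 - 2 * rInd n c ((n : ℤ) - 1 + 1) = 1 - 2 * rInd n c (-1 + 1) := by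
    rw [rInd_congr (a := (n : ℤ) - 1 + 1) (b := (-1 : ℤ) + 1)
      (by push_cast [ZMod.natCast_self]; ring)]
  have heq : omegaF n c (betaT n i j p) (betaT n j k q) =
      sgn3 i j k * rsgn n c (med3 i j k)
        - 2 * (p : ℝ) * (rInd n c j - rInd n c k)
        + 2 * (q : ℝ) * (rInd n c i - rInd n c j) := by
    rw [key_int hn3 hnd hlen]
    rcases lt_or_gt_of_ne hij with h1 | h1 <;> rcases lt_or_gt_of_ne hjk with h2 | h2 <;>
      rcases lt_or_gt_of_ne hik with h3 | h3
    · -- i < j < k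
      refine Eq.trans (Finset.sum_congr rfl fun t ht => ?_)
        ((core n hn3 (fun t => 1 - 2 * rInd n c (t + 1)) hg i j j k (by omega) (by omega)
          (by omega) (by omega) (by omega) (by omega) 1 1 (p : ℝ) (q : ℝ)).trans ?_)
      · rw [Finset.mem_Ico] at ht
        beta_reduce
        rw [betaT_cast_lt h1 (by omega) (by omega) p ht.1 ht.2,
          betaT_succ_lt h2 (by omega) (by omega) q ht.1 ht.2,
          betaT_succ_lt h1 (by omega) (by omega) p ht.1 ht.2,
          betaT_cast_lt h2 (by omega) (by omega) q ht.1 ht.2]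
      · beta_reduce
        rw [show Finset.Ico (max i (j - 1)) (min j (k - 1)) = Finset.Ico (j - 1) ((j - 1) + 1)
            from by congr 1 <;> omega,
          sum_Ico_singleton,
          show Finset.Ico (max j (i - 1)) (min k (j - 1)) = ∅ from
            Finset.eq_empty_of_forall_notMem (fun x hx => by rw [Finset.mem_Ico] at hx; omega),
          Finset.sum_empty,
          show med3 i j k = j from by unfold med3; omega,
          show sgn3 i j k = 1 from by unfold sgn3; rw [if_pos (Or.inl ⟨h1, h2⟩)],
          rsgn_eq,
          show j - 1 + 1 = j from by ring,
          show k - 1 + 1 = k from by ring,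
          show i - 1 + 1 = i from by ring]
        ring
    · -- i < j, j < k, k < i : impossible
      omega
    · -- i < k < j
      refine Eq.trans (Finset.sum_congr rfl fun t ht => ?_)
        ((core n hn3 (fun t => 1 - 2 * rInd n c (t + 1)) hg i j k j (by omega) (by omega)
          (by omega) (by omega) (by omega) (by omega) 1 (-1) (p : ℝ) (q : ℝ)).trans ?_)
      · rw [Finset.mem_Ico] at ht
        beta_reduce
        rw [betaT_cast_lt h1 (by omega) (by omega) p ht.1 ht.2,
          betaT_succ_gt h2 (by omega) (by omega) q ht.1 ht.2,
          betaT_succ_lt h1 (by omega) (by omega) p ht.1 ht.2,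
          betaT_cast_gt h2 (by omega) (by omega) q ht.1 ht.2]
      · beta_reduce
        rw [show Finset.Ico (max i (k - 1)) (min j (j - 1)) = Finset.Ico (k - 1) (j - 1)
            from by congr 1 <;> omega,
          show Finset.Ico (max k (i - 1)) (min j (j - 1)) = Finset.Ico k (j - 1)
            from by congr 1 <;> omega,
          sum_Ico_bot (fun t => 1 - 2 * rInd n c (t + 1)) (show k - 1 < j - 1 by omega),
          show k - 1 + 1 = k from by ring,
          show med3 i j k = k from by unfold med3; omega,
          show sgn3 i j k = -1 from by unfold sgn3; rw [if_neg (by omega)],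
          rsgn_eq,
          show i - 1 + 1 = i from by ring,
          show j - 1 + 1 = j from by ring]
        beta_reduce
        ring
    · -- k < i < j
      refine Eq.trans (Finset.sum_congr rfl fun t ht => ?_)
        ((core n hn3 (fun t => 1 - 2 * rInd n c (t + 1)) hg i j k j (by omega) (by omega)
          (by omega) (by omega) (by omega) (by omega) 1 (-1) (p : ℝ) (q : ℝ)).trans ?_)
      · rw [Finset.mem_Ico] at ht
        beta_reduce
        rw [betaT_cast_lt h1 (by omega) (by omega) p ht.1 ht.2,
          betaT_succ_gt h2 (by omega) (by omega) q ht.1 ht.2,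
          betaT_succ_lt h1 (by omega) (by omega) p ht.1 ht.2,
          betaT_cast_gt h2 (by omega) (by omega) q ht.1 ht.2]
      · beta_reduce
        rw [show Finset.Ico (max i (k - 1)) (min j (j - 1)) = Finset.Ico i (j - 1)
            from by congr 1 <;> omega,
          show Finset.Ico (max k (i - 1)) (min j (j - 1)) = Finset.Ico (i - 1) (j - 1)
            from by congr 1 <;> omega,
          sum_Ico_bot (fun t => 1 - 2 * rInd n c (t + 1)) (show i - 1 < j - 1 by omega),
          show i - 1 + 1 = i from by ring,
          show med3 i j k = i from by unfold med3; omega,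
          show sgn3 i j k = 1 from by unfold sgn3; rw [if_pos (Or.inr (Or.inr ⟨h3, h1⟩))],
          rsgn_eq,
          show j - 1 + 1 = j from by ring,
          show k - 1 + 1 = k from by ring]
        beta_reduce
        ring
    · -- j < i < k
      refine Eq.trans (Finset.sum_congr rfl fun t ht => ?_)
        ((core n hn3 (fun t => 1 - 2 * rInd n c (t + 1)) hg j i j k (by omega) (by omega)
          (by omega) (by omega) (by omega) (by omega) (-1) 1 (p : ℝ) (q : ℝ)).trans ?_)
      · rw [Finset.mem_Ico] at ht
        beta_reduce
        rw [betaT_cast_gt h1 (by omega) (by omega) p ht.1 ht.2,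
          betaT_succ_lt h2 (by omega) (by omega) q ht.1 ht.2,
          betaT_succ_gt h1 (by omega) (by omega) p ht.1 ht.2,
          betaT_cast_lt h2 (by omega) (by omega) q ht.1 ht.2]
      · beta_reduce
        rw [show Finset.Ico (max j (j - 1)) (min i (k - 1)) = Finset.Ico j i
            from by congr 1 <;> omega,
          show Finset.Ico (max j (j - 1)) (min k (i - 1)) = Finset.Ico j (i - 1)
            from by congr 1 <;> omega,
          sum_Ico_top (fun t => 1 - 2 * rInd n c (t + 1)) (show j < i by omega),
          show med3 i j k = i from by unfold med3; omega,
          show sgn3 i j k = -1 from by unfold sgn3; rw [if_neg (by omega)],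
          rsgn_eq,
          show i - 1 + 1 = i from by ring,
          show j - 1 + 1 = j from by ring,
          show k - 1 + 1 = k from by ring]
        beta_reduce
        ring
    · -- j < k < i
      refine Eq.trans (Finset.sum_congr rfl fun t ht => ?_)
        ((core n hn3 (fun t => 1 - 2 * rInd n c (t + 1)) hg j i j k (by omega) (by omega)
          (by omega) (by omega) (by omega) (by omega) (-1) 1 (p : ℝ) (q : ℝ)).trans ?_)
      · rw [Finset.mem_Ico] at ht
        beta_reduce
        rw [betaT_cast_gt h1 (by omega) (by omega) p ht.1 ht.2,
          betaT_succ_lt h2 (by omega) (by omega) q ht.1 ht.2,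
          betaT_succ_gt h1 (by omega) (by omega) p ht.1 ht.2,
          betaT_cast_lt h2 (by omega) (by omega) q ht.1 ht.2]
      · beta_reduce
        rw [show Finset.Ico (max j (j - 1)) (min i (k - 1)) = Finset.Ico j (k - 1)
            from by congr 1 <;> omega,
          show Finset.Ico (max j (j - 1)) (min k (i - 1)) = Finset.Ico j k
            from by congr 1 <;> omega,
          sum_Ico_top (fun t => 1 - 2 * rInd n c (t + 1)) (show j < k by omega),
          show med3 i j k = k from by unfold med3; omega,
          show sgn3 i j k = 1 from by unfold sgn3; rw [if_pos (Or.inr (Or.inl ⟨h2, h3⟩))],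
          rsgn_eq,
          show i - 1 + 1 = i from by ring,
          show j - 1 + 1 = j from by ring,
          show k - 1 + 1 = k from by ring]
        beta_reduce
        ring
    · -- j < i, k < j, i < k : impossible
      omega
    · -- k < j < i
      refine Eq.trans (Finset.sum_congr rfl fun t ht => ?_)
        ((core n hn3 (fun t => 1 - 2 * rInd n c (t + 1)) hg j i k j (by omega) (by omega)
          (by omega) (by omega) (by omega) (by omega) (-1) (-1) (p : ℝ) (q : ℝ)).trans ?_)
      · rw [Finset.mem_Ico] at ht
        beta_reduce
        rw [betaT_cast_gt h1 (by omega) (by omega) p ht.1 ht.2,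
          betaT_succ_gt h2 (by omega) (by omega) q ht.1 ht.2,
          betaT_succ_gt h1 (by omega) (by omega) p ht.1 ht.2,
          betaT_cast_gt h2 (by omega) (by omega) q ht.1 ht.2]
      · beta_reduce
        rw [show Finset.Ico (max j (k - 1)) (min i (j - 1)) = ∅ from
            Finset.eq_empty_of_forall_notMem (fun x hx => by rw [Finset.mem_Ico] at hx; omega),
          Finset.sum_empty,
          show Finset.Ico (max k (j - 1)) (min j (i - 1)) = Finset.Ico (j - 1) ((j - 1) + 1)
            from by congr 1 <;> omega,
          sum_Ico_singleton,
          show med3 i j k = j from by unfold med3; omega,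
          show sgn3 i j k = -1 from by unfold sgn3; rw [if_neg (by omega)],
          rsgn_eq,
          show i - 1 + 1 = i from by ring,
          show j - 1 + 1 = j from by ring,
          show k - 1 + 1 = k from by ring]
        beta_reduce
        ring
  have hm : ∃ m : ℤ, Odd m ∧
      omegaF n c (betaT n i j p) (betaT n j k q) = (m : ℝ) := by
    refine ⟨(if (i < j ∧ j < k) ∨ (j < k ∧ k < i) ∨ (k < i ∧ i < j) then (1 : ℤ) else -1) *
        (if coxC n c (med3 i j k) < med3 i j k then (-1 : ℤ) else 1)
        - 2 * (p : ℤ) * ((if coxC n c j < j then (1 : ℤ) else 0)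
            - (if coxC n c k < k then (1 : ℤ) else 0))
        + 2 * (q : ℤ) * ((if coxC n c i < i then (1 : ℤ) else 0)
            - (if coxC n c j < j then (1 : ℤ) else 0)), ?_, ?_⟩
    · rw [Int.odd_iff]
      split_ifs <;> omega
    · rw [heq]
      unfold sgn3 rsgn rInd
      split_ifs <;> push_cast <;> ring
  refine ⟨heq, hm, ?_⟩
  obtain ⟨m, hodd, hval⟩ := hm
  rw [hval]
  rw [Int.cast_ne_zero]
  rintro rfl
  simp [Int.odd_iff] at hodd

end
end

section
/- In the affine symmetric group of order n, if t₁ = (a,b)_u and t₂ = (c,d)_v are affine transpositions with {a,b} = {c,d} as sets of residue classes modulo n (and t₁ ≠ t₂), then the product t₁t₂ has infinite order. Explicitly, (a,b)_u (a,b)_v = (a)_{[v−u]}(b)_{[u−v]} and (a,b)_u (b,a)_v = (a)_{[−u−v]}(b)_{[u+v]}, which are nontrivial translations. -/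
open scoped Classical

noncomputable section

/-- The cycle with shift `m` on the residue class of `a`: the affine permutation
`(a)_{[m]}` sending `a + qn` to `a + (q+m)n` and fixing everything else. -/
def shiftCycle (n : ℕ) (a m : ℤ) : ℤ → ℤ := fun x =>
  if (x : ZMod n) = (a : ZMod n) then x + m * n else x

/-! Both products are computed pointwise on the two residue classes: each class is moved by a
multiple of `n` and returns to itself, which gives the two cycle factorizations. The second
product reduces to the first since `(b,a)_v = (a,b)_{-v}`. On the class of `a` the product is
translation by a nonzero multiple of `n`, so no positive power of it is the identity. -/

namespace AffineSymmetricGroup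

variable {n : ℕ}

lemma intCast_add_mul_self (x k : ℤ) : ((x + k * n : ℤ) : ZMod n) = x := by
  simp

lemma affT_apply_of_eq_left {i j x : ℤ} (hx : (x : ZMod n) = i) : affT n i j x = x + (j - i) := by
  simp [affT, hx]

lemma affT_apply_of_eq_right {i j x : ℤ} (hij : (i : ZMod n) ≠ j) (hx : (x : ZMod n) = j) :
    affT n i j x = x + (i - j) := by
  simp [affT, hx, hij.symm]

lemma affT_apply_of_ne {i j x : ℤ} (hi : (x : ZMod n) ≠ i) (hj : (x : ZMod n) ≠ j) :
    affT n i j x = x := by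
  simp [affT, hi, hj]

lemma affT_comm {i j : ℤ} (hij : (i : ZMod n) ≠ j) : affT n j i = affT n i j := by
  funext x
  by_cases hi : (x : ZMod n) = i
  · rw [affT_apply_of_eq_right (Ne.symm hij) hi, affT_apply_of_eq_left hi]
  by_cases hj : (x : ZMod n) = j
  · rw [affT_apply_of_eq_left hj, affT_apply_of_eq_right hij hj]
  rw [affT_apply_of_ne hj hi, affT_apply_of_ne hi hj]

lemma affT_add_mul (i j k : ℤ) : affT n (i + k * n) (j + k * n) = affT n i j := by
  funext x
  simp only [affT, intCast_add_mul_self]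
  congr 2 <;> ring

lemma affT_swap {a b : ℤ} (hab : (a : ZMod n) ≠ b) (v : ℤ) :
    affT n b (a + v * n) = affT n a (b + -v * n) := by
  have hab' : ((a + v * n : ℤ) : ZMod n) ≠ b := by rwa [intCast_add_mul_self]
  rw [affT_comm hab', ← affT_add_mul a (b + -v * n) v]
  congr 1
  ring

lemma shiftCycle_apply_of_eq {a m x : ℤ} (hx : (x : ZMod n) = a) :
    shiftCycle n a m x = x + m * n := by
  simp [shiftCycle, hx]

lemma shiftCycle_apply_of_ne {a m x : ℤ} (hx : (x : ZMod n) ≠ a) : shiftCycle n a m x = x := by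
  simp [shiftCycle, hx]

lemma affT_comp_affT {a b : ℤ} (hab : (a : ZMod n) ≠ b) (u v : ℤ) :
    affT n a (b + u * n) ∘ affT n a (b + v * n) =
      shiftCycle n a (v - u) ∘ shiftCycle n b (u - v) := by
  have hab' (k : ℤ) : (a : ZMod n) ≠ ((b + k * n : ℤ) : ZMod n) := by
    rwa [intCast_add_mul_self]
  funext x
  simp only [Function.comp_apply]
  by_cases ha : (x : ZMod n) = a
  · have hb : (x : ZMod n) ≠ b := ha ▸ hab
    have hv : ((x + (b + v * n - a) : ℤ) : ZMod n) = ((b + u * n : ℤ) : ZMod n) := by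
      push_cast; simp [ha]
    rw [affT_apply_of_eq_left ha, affT_apply_of_eq_right (hab' u) hv, shiftCycle_apply_of_ne hb,
      shiftCycle_apply_of_eq ha]
    ring
  by_cases hb : (x : ZMod n) = b
  · have hb' (k : ℤ) : (x : ZMod n) = ((b + k * n : ℤ) : ZMod n) := by
      rw [intCast_add_mul_self, hb]
    have hv : ((x + (a - (b + v * n)) : ℤ) : ZMod n) = a := by
      push_cast; simp [hb]
    rw [affT_apply_of_eq_right (hab' v) (hb' v), affT_apply_of_eq_left hv,
      shiftCycle_apply_of_eq hb, shiftCycle_apply_of_ne (by rwa [intCast_add_mul_self])]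
    ring
  · have hb' (k : ℤ) : (x : ZMod n) ≠ ((b + k * n : ℤ) : ZMod n) := by
      rwa [intCast_add_mul_self]
    rw [affT_apply_of_ne ha (hb' v), affT_apply_of_ne ha (hb' u), shiftCycle_apply_of_ne hb,
      shiftCycle_apply_of_ne ha]

lemma iterate_shiftCycle_comp_apply {a b : ℤ} (hab : (a : ZMod n) ≠ b) (s t : ℤ) (m : ℕ) :
    (shiftCycle n a s ∘ shiftCycle n b t)^[m] a = a + m * s * n := by
  induction m with
  | zero => simp
  | succ m ih =>
    have hres : ((a + m * s * n : ℤ) : ZMod n) = a := by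
      rw [mul_assoc, ← mul_assoc]; exact intCast_add_mul_self a _
    rw [Function.iterate_succ_apply', ih, Function.comp_apply,
      shiftCycle_apply_of_ne (m := t) (hres ▸ hab), shiftCycle_apply_of_eq hres]
    push_cast; ring

lemma iterate_shiftCycle_comp_ne_id {a b s : ℤ} (hab : (a : ZMod n) ≠ b) (hs : s * n ≠ 0)
    (t : ℤ) {m : ℕ} (hm : 0 < m) : (shiftCycle n a s ∘ shiftCycle n b t)^[m] ≠ id := by
  intro hid
  have h := iterate_shiftCycle_comp_apply hab s t m
  rw [hid, id_eq, mul_assoc, left_eq_add] at h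
  exact mul_ne_zero (by exact_mod_cast hm.ne') hs h

lemma iterate_affT_comp_affT_ne_id {a b u v : ℤ} (hab : (a : ZMod n) ≠ b)
    (hne : affT n a (b + u * n) ≠ affT n a (b + v * n)) {m : ℕ} (hm : 0 < m) :
    (affT n a (b + u * n) ∘ affT n a (b + v * n))^[m] ≠ id := by
  have hs : (v - u) * n ≠ 0 := by
    rw [sub_mul, sub_ne_zero]
    exact fun h => hne (by rw [h])
  rw [affT_comp_affT hab]
  exact iterate_shiftCycle_comp_ne_id hab hs _ hm

end AffineSymmetricGroup

open AffineSymmetricGroup in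
theorem statement5_general (n : ℕ) (a b u v : ℤ)
    (hab : (a : ZMod n) ≠ (b : ZMod n)) :
    -- (a,b)_u (a,b)_v = (a)_{[v−u]} (b)_{[u−v]}
    (affT n a (b + u * n) ∘ affT n a (b + v * n) =
        shiftCycle n a (v - u) ∘ shiftCycle n b (u - v)) ∧
    -- (a,b)_u (b,a)_v = (a)_{[−u−v]} (b)_{[u+v]}
    (affT n a (b + u * n) ∘ affT n b (a + v * n) =
        shiftCycle n a (-(u + v)) ∘ shiftCycle n b (u + v)) ∧
    -- if t₁ ≠ t₂ (same residue pair, same orientation), t₁t₂ has infinite order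
    (affT n a (b + u * n) ≠ affT n a (b + v * n) →
      ∀ m : ℕ, 0 < m → (affT n a (b + u * n) ∘ affT n a (b + v * n))^[m] ≠ id) ∧
    -- if t₁ ≠ t₂ (same residue pair, opposite orientation), t₁t₂ has infinite order
    (affT n a (b + u * n) ≠ affT n b (a + v * n) →
      ∀ m : ℕ, 0 < m → (affT n a (b + u * n) ∘ affT n b (a + v * n))^[m] ≠ id) := by
  rw [affT_swap hab v]
  refine ⟨affT_comp_affT hab u v, ?_, fun hne _ => iterate_affT_comp_affT_ne_id hab hne,
    fun hne _ => iterate_affT_comp_affT_ne_id hab hne⟩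
  rw [affT_comp_affT hab]
  ring_nf

theorem statement5 (n : ℕ) (hn : 0 < n) (a b u v : ℤ)
    (hab : (a : ZMod n) ≠ (b : ZMod n)) :
    -- (a,b)_u (a,b)_v = (a)_{[v−u]} (b)_{[u−v]}
    (affT n a (b + u * n) ∘ affT n a (b + v * n) =
        shiftCycle n a (v - u) ∘ shiftCycle n b (u - v)) ∧
    -- (a,b)_u (b,a)_v = (a)_{[−u−v]} (b)_{[u+v]}
    (affT n a (b + u * n) ∘ affT n b (a + v * n) =
        shiftCycle n a (-(u + v)) ∘ shiftCycle n b (u + v)) ∧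
    -- if t₁ ≠ t₂ (same residue pair, same orientation), t₁t₂ has infinite order
    (affT n a (b + u * n) ≠ affT n a (b + v * n) →
      ∀ m : ℕ, 0 < m → (affT n a (b + u * n) ∘ affT n a (b + v * n))^[m] ≠ id) ∧
    -- if t₁ ≠ t₂ (same residue pair, opposite orientation), t₁t₂ has infinite order
    (affT n a (b + u * n) ≠ affT n b (a + v * n) →
      ∀ m : ℕ, 0 < m → (affT n a (b + u * n) ∘ affT n b (a + v * n))^[m] ≠ id) :=
  statement5_general n a b u v hab
end
end

section
/- In the affine symmetric group of order n (n ≥ 2), for pairwise distinct i, j, k ∈ {1,…,n} and p ≥ δ(i>j), q ≥ δ(j>k), the affine transpositions t₁ = (i,j)_p and t₂ = (j,k)_q satisfy t₁t₂t₁ = t₂t₁t₂ = (i,k)_{p+q}. Consequently, t₁t₂ has order 3 and the subgroup ⟨t₁,t₂⟩ is a Coxeter group of type A₂ whose reflections are exactly {(i,j)_p, (i,k)_{p+q}, (j,k)_q}. -/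
/- Statement 6: for pairwise distinct i,j,k ∈ {1,…,n} and p ≥ δ(i>j), q ≥ δ(j>k),
the affine transpositions t₁ = (i,j)_p, t₂ = (j,k)_q satisfy
t₁t₂t₁ = t₂t₁t₂ = (i,k)_{p+q}; t₁t₂ has order 3, and the reflections lying in ⟨t₁,t₂⟩
are exactly {(i,j)_p, (i,k)_{p+q}, (j,k)_q}. -/

open scoped Classical

noncomputable section

/-- `f` is an affine reflection (an affine transposition of two distinct residue classes). -/
def IsAffRefl (n : ℕ) (f : ℤ → ℤ) : Prop :=
  ∃ a b : ℤ, (a : ZMod n) ≠ (b : ZMod n) ∧ f = affT n a b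

section helpers
variable {n : ℕ}

lemma affT_left {a b x : ℤ} (h : (x : ZMod n) = a) :
    affT n a b x = x + (b - a) := by simp only [affT]; rw [if_pos h]

lemma affT_right {a b x : ℤ} (h : (x : ZMod n) = b) (hab : (a : ZMod n) ≠ b) :
    affT n a b x = x + (a - b) := by
  have hx : (x : ZMod n) ≠ a := by rw [h]; exact fun hh => hab hh.symm
  simp only [affT]; rw [if_neg hx, if_pos h]

lemma affT_none {a b x : ℤ} (ha : (x : ZMod n) ≠ a) (hb : (x : ZMod n) ≠ b) :
    affT n a b x = x := by simp only [affT]; rw [if_neg ha, if_neg hb]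

lemma affT_congr {a b a' b' : ℤ} (ha : (a : ZMod n) = a') (hd : b - a = b' - a') :
    affT n a b = affT n a' b' := by
  have hb : (b : ZMod n) = b' := by
    have hb' : b = b' - a' + a := by omega
    rw [hb']; push_cast; rw [ha]; ring
  have h2 : a - b = a' - b' := by omega
  funext x
  simp only [affT, ha, hb, hd, h2]

lemma cast_ne_of {a b : ℤ} (ha : 1 ≤ a) (ha' : a ≤ n) (hb : 1 ≤ b) (hb' : b ≤ n)
    (hab : a ≠ b) : (a : ZMod n) ≠ (b : ZMod n) := by
  intro h
  have hd : (n : ℤ) ∣ b - a := ((ZMod.intCast_eq_intCast_iff _ _ _).mp h).dvd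
  rcases lt_or_gt_of_ne (sub_ne_zero.mpr (Ne.symm hab)) with h1 | h1
  · have := Int.le_of_dvd (by omega) (dvd_neg.mpr hd); omega
  · have := Int.le_of_dvd h1 hd; omega

lemma affT_sq {a b : ℤ} (hab : (a : ZMod n) ≠ b) :
    affT n a b ∘ affT n a b = id := by
  funext x
  simp only [Function.comp_apply, id_eq]
  rcases eq_or_ne ((x : ZMod n)) (a : ZMod n) with hxa | hxa
  · have e1 : affT n a b x = x + (b - a) := affT_left hxa
    have hr1 : ((x + (b - a) : ℤ) : ZMod n) = (b : ZMod n) := by push_cast; rw [hxa]; ring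
    have e2 : affT n a b (x + (b - a)) = x + (b - a) + (a - b) := affT_right hr1 hab
    rw [e1, e2]; ring
  · rcases eq_or_ne ((x : ZMod n)) (b : ZMod n) with hxb | hxb
    · have e1 : affT n a b x = x + (a - b) := affT_right hxb hab
      have hr1 : ((x + (a - b) : ℤ) : ZMod n) = (a : ZMod n) := by push_cast; rw [hxb]; ring
      have e2 : affT n a b (x + (a - b)) = x + (a - b) + (b - a) := affT_left hr1
      rw [e1, e2]; ring
    · have e1 : affT n a b x = x := affT_none hxa hxb
      rw [e1, e1]

lemma affT_ne_id {a b : ℤ} (hab : (a : ZMod n) ≠ b) :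
    affT n a b ≠ id := by
  intro h
  have ha : affT n a b a = a + (b - a) := affT_left rfl
  have h2 := congrFun h a
  rw [ha, id_eq] at h2
  have hba : b = a := by omega
  exact hab (by rw [hba])

lemma affT_braid1 {a b c : ℤ} (hab : (a : ZMod n) ≠ b) (hbc : (b : ZMod n) ≠ c)
    (hac : (a : ZMod n) ≠ c) :
    (affT n a b ∘ affT n b c) ∘ affT n a b = affT n a c := by
  funext x
  simp only [Function.comp_apply]
  rcases eq_or_ne ((x : ZMod n)) (a : ZMod n) with hxa | hxa
  · have e1 : affT n a b x = x + (b - a) := affT_left hxa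
    have hr1 : ((x + (b - a) : ℤ) : ZMod n) = (b : ZMod n) := by push_cast; rw [hxa]; ring
    have e2 : affT n b c (x + (b - a)) = x + (b - a) + (c - b) := affT_left hr1
    have hr2 : ((x + (b - a) + (c - b) : ℤ) : ZMod n) = (c : ZMod n) := by
      push_cast; rw [hxa]; ring
    have e3 : affT n a b (x + (b - a) + (c - b)) = x + (b - a) + (c - b) :=
      affT_none (by rw [hr2]; exact fun h => hac h.symm)
        (by rw [hr2]; exact fun h => hbc h.symm)
    have e4 : affT n a c x = x + (c - a) := affT_left hxa
    rw [e1, e2, e3, e4]; ring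
  · rcases eq_or_ne ((x : ZMod n)) (b : ZMod n) with hxb | hxb
    · have e1 : affT n a b x = x + (a - b) := affT_right hxb hab
      have hr1 : ((x + (a - b) : ℤ) : ZMod n) = (a : ZMod n) := by push_cast; rw [hxb]; ring
      have e2 : affT n b c (x + (a - b)) = x + (a - b) :=
        affT_none (by rw [hr1]; exact hab) (by rw [hr1]; exact hac)
      have e3 : affT n a b (x + (a - b)) = x + (a - b) + (b - a) := affT_left hr1
      have e4 : affT n a c x = x :=
        affT_none (by rw [hxb]; exact fun h => hab h.symm) (by rw [hxb]; exact hbc)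
      rw [e1, e2, e3, e4]; ring
    · rcases eq_or_ne ((x : ZMod n)) (c : ZMod n) with hxc | hxc
      · have e1 : affT n a b x = x :=
          affT_none hxa (by rw [hxc]; exact fun h => hbc h.symm)
        have e2 : affT n b c x = x + (b - c) := affT_right hxc hbc
        have hr1 : ((x + (b - c) : ℤ) : ZMod n) = (b : ZMod n) := by
          push_cast; rw [hxc]; ring
        have e3 : affT n a b (x + (b - c)) = x + (b - c) + (a - b) := affT_right hr1 hab
        have e4 : affT n a c x = x + (a - c) := affT_right hxc hac
        rw [e1, e2, e3, e4]; ring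
      · have e1 : affT n a b x = x := affT_none hxa hxb
        have e2 : affT n b c x = x := affT_none hxb hxc
        have e4 : affT n a c x = x := affT_none hxa hxc
        rw [e1, e2, e1, e4]

lemma affT_braid2 {a b c : ℤ} (hab : (a : ZMod n) ≠ b) (hbc : (b : ZMod n) ≠ c)
    (hac : (a : ZMod n) ≠ c) :
    (affT n b c ∘ affT n a b) ∘ affT n b c = affT n a c := by
  funext x
  simp only [Function.comp_apply]
  rcases eq_or_ne ((x : ZMod n)) (a : ZMod n) with hxa | hxa
  · have e1 : affT n b c x = x :=
      affT_none (by rw [hxa]; exact hab) (by rw [hxa]; exact hac)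
    have e2 : affT n a b x = x + (b - a) := affT_left hxa
    have hr1 : ((x + (b - a) : ℤ) : ZMod n) = (b : ZMod n) := by push_cast; rw [hxa]; ring
    have e3 : affT n b c (x + (b - a)) = x + (b - a) + (c - b) := affT_left hr1
    have e4 : affT n a c x = x + (c - a) := affT_left hxa
    rw [e1, e2, e3, e4]; ring
  · rcases eq_or_ne ((x : ZMod n)) (b : ZMod n) with hxb | hxb
    · have e1 : affT n b c x = x + (c - b) := affT_left hxb
      have hr1 : ((x + (c - b) : ℤ) : ZMod n) = (c : ZMod n) := by push_cast; rw [hxb]; ring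
      have e2 : affT n a b (x + (c - b)) = x + (c - b) :=
        affT_none (by rw [hr1]; exact fun h => hac h.symm)
          (by rw [hr1]; exact fun h => hbc h.symm)
      have e3 : affT n b c (x + (c - b)) = x + (c - b) + (b - c) := affT_right hr1 hbc
      have e4 : affT n a c x = x :=
        affT_none (by rw [hxb]; exact fun h => hab h.symm) (by rw [hxb]; exact hbc)
      rw [e1, e2, e3, e4]; ring
    · rcases eq_or_ne ((x : ZMod n)) (c : ZMod n) with hxc | hxc
      · have e1 : affT n b c x = x + (b - c) := affT_right hxc hbc
        have hr1 : ((x + (b - c) : ℤ) : ZMod n) = (b : ZMod n) := by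
          push_cast; rw [hxc]; ring
        have e2 : affT n a b (x + (b - c)) = x + (b - c) + (a - b) := affT_right hr1 hab
        have hr2 : ((x + (b - c) + (a - b) : ℤ) : ZMod n) = (a : ZMod n) := by
          push_cast; rw [hxc]; ring
        have e3 : affT n b c (x + (b - c) + (a - b)) = x + (b - c) + (a - b) :=
          affT_none (by rw [hr2]; exact hab) (by rw [hr2]; exact hac)
        have e4 : affT n a c x = x + (a - c) := affT_right hxc hac
        rw [e1, e2, e3, e4]; ring
      · have e1 : affT n b c x = x := affT_none hxb hxc
        have e2 : affT n a b x = x := affT_none hxa hxb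
        have e4 : affT n a c x = x := affT_none hxa hxc
        rw [e1, e2, e1, e4]

end helpers

set_option maxHeartbeats 1000000 in
theorem statement6 (n : ℕ) (hn : 2 ≤ n) (i j k : ℤ)
    (hi : 1 ≤ i) (hi' : i ≤ n) (hj : 1 ≤ j) (hj' : j ≤ n) (hk : 1 ≤ k) (hk' : k ≤ n)
    (hij : i ≠ j) (hjk : j ≠ k) (hik : i ≠ k)
    (p q : ℕ) (hp : j < i → 1 ≤ p) (hq : k < j → 1 ≤ q) :
    let t₁ : Function.End ℤ := affT n i (j + (p : ℤ) * (n : ℤ))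
    let t₂ : Function.End ℤ := affT n j (k + (q : ℤ) * (n : ℤ))
    let t₃ : Function.End ℤ := affT n i (k + ((p : ℤ) + (q : ℤ)) * (n : ℤ))
    t₁ * t₂ * t₁ = t₃ ∧ t₂ * t₁ * t₂ = t₃ ∧ orderOf (t₁ * t₂) = 3 ∧
      {x : Function.End ℤ | x ∈ Submonoid.closure {t₁, t₂} ∧ IsAffRefl n x} =
        {t₁, t₃, t₂} := by
  intro t₁ t₂ t₃
  -- residue facts
  have hij' : (i : ZMod n) ≠ (j : ZMod n) := cast_ne_of hi hi' hj hj' hij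
  have hjk' : (j : ZMod n) ≠ (k : ZMod n) := cast_ne_of hj hj' hk hk' hjk
  have hik' : (i : ZMod n) ≠ (k : ZMod n) := cast_ne_of hi hi' hk hk' hik
  have hb1 : ((j + (p : ℤ) * (n : ℤ) : ℤ) : ZMod n) = (j : ZMod n) := by
    push_cast; simp
  have hb2 : ((k + (q : ℤ) * (n : ℤ) : ℤ) : ZMod n) = (k : ZMod n) := by
    push_cast; simp
  have hb3 : ((k + ((p : ℤ) + (q : ℤ)) * (n : ℤ) : ℤ) : ZMod n) = (k : ZMod n) := by
    push_cast; simp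
  have hab : (i : ZMod n) ≠ ((j + (p : ℤ) * (n : ℤ) : ℤ) : ZMod n) := by
    rw [hb1]; exact hij'
  have hbc : ((j + (p : ℤ) * (n : ℤ) : ℤ) : ZMod n)
      ≠ ((k + ((p : ℤ) + (q : ℤ)) * (n : ℤ) : ℤ) : ZMod n) := by
    rw [hb1, hb3]; exact hjk'
  have hac : (i : ZMod n) ≠ ((k + ((p : ℤ) + (q : ℤ)) * (n : ℤ) : ℤ) : ZMod n) := by
    rw [hb3]; exact hik'
  -- rewrite t₂ in matching form
  have ht2 : t₂ = affT n (j + (p : ℤ) * (n : ℤ)) (k + ((p : ℤ) + (q : ℤ)) * (n : ℤ)) := by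
    show affT n j (k + (q : ℤ) * (n : ℤ)) = _
    exact affT_congr (by rw [hb1]) (by ring)
  -- reflection witnesses
  have hr₁ : IsAffRefl n t₁ := ⟨i, j + (p : ℤ) * (n : ℤ), hab, rfl⟩
  have hr₂ : IsAffRefl n t₂ := ⟨j, k + (q : ℤ) * (n : ℤ), by rw [hb2]; exact hjk', rfl⟩
  have hr₃ : IsAffRefl n t₃ := ⟨i, k + ((p : ℤ) + (q : ℤ)) * (n : ℤ), hac, rfl⟩
  -- the five relations
  have h1 : t₁ * t₁ = 1 := by
    rw [Function.End.mul_def, Function.End.one_def]; exact affT_sq hab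
  have h2 : t₂ * t₂ = 1 := by
    rw [Function.End.mul_def, Function.End.one_def, ht2]; exact affT_sq hbc
  have h3 : t₁ * t₂ * t₁ = t₃ := by
    rw [Function.End.mul_def, Function.End.mul_def, ht2]; exact affT_braid1 hab hbc hac
  have h4 : t₂ * t₁ * t₂ = t₃ := by
    rw [Function.End.mul_def, Function.End.mul_def, ht2]; exact affT_braid2 hab hbc hac
  have h5 : t₃ * t₃ = 1 := by
    rw [Function.End.mul_def, Function.End.one_def]; exact affT_sq hac
  -- t₁ * t₂ is not the identity
  have hne1 : t₁ * t₂ ≠ 1 := by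
    intro h
    have happ : (t₁ * t₂) i = j + (p : ℤ) * (n : ℤ) := by
      rw [Function.End.mul_def]
      show t₁ (t₂ i) = _
      have e1 : t₂ i = i := by
        rw [ht2]; exact affT_none (fun hh => hab hh) (fun hh => hac hh)
      rw [e1]
      show affT n i (j + (p : ℤ) * (n : ℤ)) i = _
      rw [affT_left rfl]; ring
    rw [h, Function.End.one_def, id_eq] at happ
    exact hab (by rw [← happ])
  -- now make t₁ t₂ t₃ opaque
  clear_value t₁ t₂ t₃
  haveI : Fact (Nat.Prime 3) := ⟨by norm_num⟩
  have hcube : (t₁ * t₂) ^ 3 = 1 := by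
    have e : (t₁ * t₂) ^ 3 = (t₁ * t₂ * t₁) * (t₂ * t₁ * t₂) := by
      rw [pow_succ, pow_two]; simp only [mul_assoc]
    rw [e, h3, h4, h5]
  have horder : orderOf (t₁ * t₂) = 3 := orderOf_eq_prime hcube hne1
  refine ⟨h3, h4, horder, ?_⟩
  -- the six-element set
  set S : Set (Function.End ℤ) := {1, t₁, t₂, t₁ * t₂, t₂ * t₁, t₃} with hS
  -- derived multiplication table
  have p_aab : t₁ * (t₁ * t₂) = t₂ := by rw [← mul_assoc, h1, one_mul]
  have p_aba : t₁ * (t₂ * t₁) = t₃ := by rw [← mul_assoc, h3]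
  have p_ac : t₁ * t₃ = t₂ * t₁ := by rw [← h3, ← mul_assoc, ← mul_assoc, h1, one_mul]
  have p_bab : t₂ * (t₁ * t₂) = t₃ := by rw [← mul_assoc, h4]
  have p_bba : t₂ * (t₂ * t₁) = t₁ := by rw [← mul_assoc, h2, one_mul]
  have p_bc : t₂ * t₃ = t₁ * t₂ := by rw [← h4, ← mul_assoc, ← mul_assoc, h2, one_mul]
  have p_ab_b : (t₁ * t₂) * t₂ = t₁ := by rw [mul_assoc, h2, mul_one]
  have p_ab_ab : (t₁ * t₂) * (t₁ * t₂) = t₂ * t₁ := by rw [mul_assoc, p_bab, p_ac]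
  have p_ab_ba : (t₁ * t₂) * (t₂ * t₁) = 1 := by rw [mul_assoc, p_bba, h1]
  have p_ab_c : (t₁ * t₂) * t₃ = t₂ := by rw [mul_assoc, p_bc, p_aab]
  have p_ba_a : (t₂ * t₁) * t₁ = t₂ := by rw [mul_assoc, h1, mul_one]
  have p_ba_ab : (t₂ * t₁) * (t₁ * t₂) = 1 := by rw [mul_assoc, p_aab, h2]
  have p_ba_ba : (t₂ * t₁) * (t₂ * t₁) = t₁ * t₂ := by rw [mul_assoc, p_aba, p_bc]
  have p_ba_c : (t₂ * t₁) * t₃ = t₁ := by rw [mul_assoc, p_ac, p_bba]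
  have p_c_a : t₃ * t₁ = t₁ * t₂ := by rw [← h3, mul_assoc, h1, mul_one]
  have p_c_b : t₃ * t₂ = t₂ * t₁ := by rw [← h4, mul_assoc, h2, mul_one]
  have p_c_ab : t₃ * (t₁ * t₂) = t₁ := by rw [← mul_assoc, p_c_a, p_ab_b]
  have p_c_ba : t₃ * (t₂ * t₁) = t₂ := by rw [← mul_assoc, p_c_b, p_ba_a]
  have key : ∀ x ∈ S, ∀ y ∈ S, x * y ∈ S := by
    intro x hx y hy
    simp only [hS, Set.mem_insert_iff, Set.mem_singleton_iff] at hx hy ⊢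
    rcases hx with h | h | h | h | h | h <;>
      rcases hy with h' | h' | h' | h' | h' | h' <;>
      rw [h, h'] <;>
      simp only [one_mul, mul_one, h1, h2, h3, h4, h5, p_aab, p_aba, p_ac, p_bab,
        p_bba, p_bc, p_ab_b, p_ab_ab, p_ab_ba, p_ab_c, p_ba_a, p_ba_ab, p_ba_ba,
        p_ba_c, p_c_a, p_c_b, p_c_ab, p_c_ba, true_or, or_true]
  have hclosure : ∀ x ∈ Submonoid.closure ({t₁, t₂} : Set (Function.End ℤ)), x ∈ S := by
    intro x hx
    induction hx using Submonoid.closure_induction with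
    | mem y hy =>
      rcases hy with rfl | rfl
      · simp [hS]
      · simp [hS]
    | one => simp [hS]
    | mul y z hy hz ihy ihz => exact key y ihy z ihz
  have refl_sq : ∀ f : Function.End ℤ, IsAffRefl n f → f * f = 1 := by
    rintro f ⟨a', b', hab', rfl⟩
    show affT n a' b' ∘ affT n a' b' = id
    exact affT_sq hab'
  have refl_ne : ∀ f : Function.End ℤ, IsAffRefl n f → f ≠ 1 := by
    rintro f ⟨a', b', hab', rfl⟩
    rw [Function.End.one_def]
    exact affT_ne_id hab'
  ext x
  simp only [Set.mem_setOf_eq, Set.mem_insert_iff, Set.mem_singleton_iff]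
  constructor
  · rintro ⟨hxc, hxr⟩
    have hxS := hclosure x hxc
    simp only [hS, Set.mem_insert_iff, Set.mem_singleton_iff] at hxS
    rcases hxS with rfl | rfl | rfl | rfl | rfl | rfl
    · exact absurd rfl (refl_ne _ hxr)
    · exact Or.inl rfl
    · exact Or.inr (Or.inr rfl)
    · exfalso
      have hsq := refl_sq _ hxr
      rw [p_ab_ab] at hsq
      have hone : t₁ * t₂ = 1 := by
        calc t₁ * t₂ = t₁ * (t₂ * t₁) * t₂ := by rw [hsq, mul_one]
          _ = (t₁ * t₂ * t₁) * t₂ := by rw [mul_assoc t₁ t₂ t₁]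
          _ = t₃ * t₂ := by rw [h3]
          _ = t₂ * t₁ := p_c_b
          _ = 1 := hsq
      rw [hone, orderOf_one] at horder
      norm_num at horder
    · exfalso
      have hsq := refl_sq _ hxr
      rw [p_ba_ba] at hsq
      rw [hsq, orderOf_one] at horder
      norm_num at horder
    · exact Or.inr (Or.inl rfl)
  · have hmem1 : t₁ ∈ Submonoid.closure ({t₁, t₂} : Set (Function.End ℤ)) :=
      Submonoid.subset_closure (by simp)
    have hmem2 : t₂ ∈ Submonoid.closure ({t₁, t₂} : Set (Function.End ℤ)) :=
      Submonoid.subset_closure (by simp)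
    have hmem3 : t₃ ∈ Submonoid.closure ({t₁, t₂} : Set (Function.End ℤ)) := by
      rw [← h3]; exact mul_mem (mul_mem hmem1 hmem2) hmem1
    rintro (rfl | rfl | rfl)
    · exact ⟨hmem1, hr₁⟩
    · exact ⟨hmem3, hr₃⟩
    · exact ⟨hmem2, hr₂⟩

end
end

section
/- Let W be the affine symmetric group of type Ã_{n−1} with n ≥ 2, and W' the reflection subgroup generated by t₁ = (i,j)_0 and t₂ = (j,i)_1 for 1 ≤ i < j ≤ n. Then every positive root β of W lying in the nonnegative real span of β_{t₁} and β_{t₂} is of the form β_{(i,j)_p} with p ∈ N or β_{(j,i)_p} with p ∈ N^*. Hence W' is a generalized rank two parabolic subgroup of W of type Ã₁ whose reflections are {(i,j)_p : p ∈ N} ∪ {(j,i)_p : p ∈ N^*}. -/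
/-!
The root `β_{t₁} = α_i + ⋯ + α_{j-1}` is a `0/1` vector taking both values, and every positive
root `±(α_a + ⋯ + α_{b-1}) + pδ` takes exactly two consecutive values `c` and `c + 1`, both
attained. A vector `λ β_{t₁} + μ (δ - β_{t₁})` equals `λ` on the support of `β_{t₁}` and `μ`
off it, so if it is a positive root then `{λ, μ} = {c, c + 1}`, which leaves exactly the two
families `β_{t₁} + cδ` and `-β_{t₁} + (c + 1)δ`.
-/

open scoped Classical

noncomputable section

/-- The imaginary root `δ = α_0 + ⋯ + α_{n-1}`. -/
def deltaVec (n : ℕ) : ZMod n → ℝ := fun _ => 1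

/-- The positive root system of type `Ã_{n-1}`:
`Φ⁺ = {β_{(i,j)} + pδ, −β_{(i,j)} + (p+1)δ : 0 ≤ i < j ≤ n, j − i < n, p ∈ ℕ}`. -/
def PhiPlus (n : ℕ) : Set (ZMod n → ℝ) :=
  {v | ∃ i j : ℤ, ∃ p : ℕ, 0 ≤ i ∧ i < j ∧ j ≤ n ∧ j - i < n ∧
    (v = beta0 n i j + (p : ℝ) • deltaVec n ∨
     v = -(beta0 n i j) + ((p : ℝ) + 1) • deltaVec n)}

section TwoLevel

variable {X : Type*}

def IsTwoLevel (v : X → ℝ) (c : ℝ) : Prop :=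
  (∀ k, v k = c ∨ v k = c + 1) ∧ (∃ k, v k = c) ∧ ∃ k, v k = c + 1

lemma IsTwoLevel.add_smul_one {B : X → ℝ} (hB : IsTwoLevel B 0) (c : ℝ) :
    IsTwoLevel (B + c • 1) c := by
  obtain ⟨hval, ⟨y, hy⟩, ⟨x, hx⟩⟩ := hB
  refine ⟨fun k => ?_, ⟨y, ?_⟩, ⟨x, ?_⟩⟩
  · rcases hval k with h | h <;> simp [h, add_comm]
  · simp [hy]
  · simp [hx, add_comm]

lemma IsTwoLevel.neg_add_smul_one {B : X → ℝ} (hB : IsTwoLevel B 0) (c : ℝ) :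
    IsTwoLevel (-B + (c + 1) • 1) c := by
  obtain ⟨hval, ⟨y, hy⟩, ⟨x, hx⟩⟩ := hB
  refine ⟨fun k => ?_, ⟨x, ?_⟩, ⟨y, ?_⟩⟩
  · rcases hval k with h | h <;> simp [h]
  · simp [hx]
  · simp [hy]

lemma IsTwoLevel.coeffs_eq {B v : X → ℝ} {lam mu c : ℝ} (hB : IsTwoLevel B 0)
    (hv : IsTwoLevel v c) (h : v = lam • B + mu • (1 - B)) :
    (lam = c + 1 ∧ mu = c) ∨ (lam = c ∧ mu = c + 1) := by
  obtain ⟨hBval, ⟨y, hy⟩, ⟨x, hx⟩⟩ := hB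
  obtain ⟨hval, ⟨k₀, hk₀⟩, ⟨k₁, hk₁⟩⟩ := hv
  have happly : ∀ k, v k = lam * B k + mu * (1 - B k) := fun k => by simp [h]
  have hlam : v x = lam := by simp [happly, hx]
  have hmu : v y = mu := by simp [happly, hy]
  have hv_of_eq : lam = mu → ∀ k, v k = lam := fun hlm k => by
    rcases hBval k with hk | hk <;> simp [happly, hk, hlm]
  rcases hval x with hx' | hx' <;> rcases hval y with hy' | hy'
  · have := hv_of_eq (by linarith) k₁; linarith
  · exact Or.inr ⟨by linarith, by linarith⟩
  · exact Or.inl ⟨by linarith, by linarith⟩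
  · have := hv_of_eq (by linarith) k₀; linarith

end TwoLevel

lemma Int.eq_of_intCast_eq_of_abs_sub_lt {n : ℕ} {t t' : ℤ} (h : (t : ZMod n) = t')
    (hlt : |t' - t| < n) : t = t' := by
  have hdvd : (n : ℤ) ∣ t' - t := (ZMod.intCast_eq_intCast_iff_dvd_sub t t' n).mp h
  have := Int.eq_zero_of_abs_lt_dvd hdvd hlt
  omega

section beta0

variable {n : ℕ} {a b : ℤ}

lemma beta0_eq_zero_or_eq_one (hba : b - a ≤ n) (k : ZMod n) :
    beta0 n a b k = 0 ∨ beta0 n a b k = 1 := by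
  by_cases h : ∃ t ∈ Finset.Ico a b, k = (t : ZMod n)
  · obtain ⟨t₀, ht₀, rfl⟩ := h
    refine Or.inr ((Finset.sum_eq_single_of_mem t₀ ht₀ fun t ht hne => if_neg fun heq => ?_).trans
      (if_pos rfl))
    simp only [Finset.mem_Ico] at ht ht₀
    exact hne (Int.eq_of_intCast_eq_of_abs_sub_lt heq.symm (abs_lt.mpr ⟨by omega, by omega⟩))
  · exact Or.inl (Finset.sum_eq_zero fun t ht => if_neg fun hk => h ⟨t, ht, hk⟩)

lemma beta0_intCast_left (hab : a < b) (hba : b - a ≤ n) : beta0 n a b a = 1 := by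
  rcases beta0_eq_zero_or_eq_one hba a with h | h
  · have hpos : 0 < beta0 n a b a :=
      Finset.sum_pos' (fun _ _ => by positivity) ⟨a, by simp [hab], by simp⟩
    linarith
  · exact h

lemma beta0_intCast_right (hba : b - a < n) : beta0 n a b b = 0 :=
  Finset.sum_eq_zero fun t ht => if_neg fun h => by
    simp only [Finset.mem_Ico] at ht
    have := Int.eq_of_intCast_eq_of_abs_sub_lt h (abs_lt.mpr ⟨by omega, by omega⟩)
    omega

lemma isTwoLevel_beta0 (hab : a < b) (hba : b - a < n) : IsTwoLevel (beta0 n a b) 0 :=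
  ⟨fun k => by simpa using beta0_eq_zero_or_eq_one hba.le k,
    ⟨b, beta0_intCast_right hba⟩, ⟨a, by simpa using beta0_intCast_left hab hba.le⟩⟩

end beta0

lemma deltaVec_eq_one (n : ℕ) : deltaVec n = 1 := rfl

lemma exists_isTwoLevel_of_mem_PhiPlus {n : ℕ} {β : ZMod n → ℝ} (hβ : β ∈ PhiPlus n) :
    ∃ c : ℕ, IsTwoLevel β c := by
  obtain ⟨a, b, p, -, hab, -, hba, rfl | rfl⟩ := hβ
  · exact ⟨p, (isTwoLevel_beta0 hab hba).add_smul_one p⟩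
  · exact ⟨p, (isTwoLevel_beta0 hab hba).neg_add_smul_one p⟩

lemma eq_of_mem_PhiPlus_of_eq_span {n : ℕ} {i j : ℤ} (hij : i < j) (hji : j - i < n)
    {β : ZMod n → ℝ} (hβ : β ∈ PhiPlus n) {lam mu : ℝ}
    (h : β = lam • beta0 n i j + mu • (deltaVec n - beta0 n i j)) :
    (∃ p : ℕ, β = beta0 n i j + (p : ℝ) • deltaVec n) ∨
      (∃ p : ℕ, 1 ≤ p ∧ β = -(beta0 n i j) + (p : ℝ) • deltaVec n) := by
  obtain ⟨c, hc⟩ := exists_isTwoLevel_of_mem_PhiPlus hβ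
  rw [deltaVec_eq_one] at h ⊢
  rcases (isTwoLevel_beta0 hij hji).coeffs_eq hc h with ⟨rfl, rfl⟩ | ⟨rfl, rfl⟩
  · exact Or.inl ⟨c, by rw [h]; module⟩
  · exact Or.inr ⟨c + 1, by omega, by rw [h]; push_cast; module⟩

theorem statement7_general (n : ℕ) (i j : ℤ)
    (hi : 1 ≤ i) (hij : i < j) (hj : j ≤ n) :
    (∀ β ∈ PhiPlus n,
      (∃ lam mu : ℝ, 0 ≤ lam ∧ 0 ≤ mu ∧
          β = lam • beta0 n i j + mu • (deltaVec n - beta0 n i j)) →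
        (∃ p : ℕ, β = beta0 n i j + (p : ℝ) • deltaVec n) ∨
        (∃ p : ℕ, 1 ≤ p ∧ β = -(beta0 n i j) + (p : ℝ) • deltaVec n)) ∧
    ({β ∈ PhiPlus n | ∃ lam mu : ℝ,
        β = lam • beta0 n i j + mu • (deltaVec n - beta0 n i j)} =
      {β | ∃ p : ℕ, β = beta0 n i j + (p : ℝ) • deltaVec n} ∪
        {β | ∃ p : ℕ, 1 ≤ p ∧ β = -(beta0 n i j) + (p : ℝ) • deltaVec n}) := by
  have hji : j - i < n := by omega
  refine ⟨fun β hβ ⟨lam, mu, _, _, h⟩ => eq_of_mem_PhiPlus_of_eq_span hij hji hβ h, ?_⟩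
  ext β
  constructor
  · rintro ⟨hβ, lam, mu, h⟩
    exact eq_of_mem_PhiPlus_of_eq_span hij hji hβ h
  · rintro (⟨p, rfl⟩ | ⟨p, hp, rfl⟩)
    · exact ⟨⟨i, j, p, by omega, hij, hj, hji, Or.inl rfl⟩, p + 1, p, by module⟩
    · obtain ⟨q, rfl⟩ := Nat.exists_eq_add_of_le' hp
      refine ⟨⟨i, j, q, by omega, hij, hj, hji, Or.inr (by push_cast; rfl)⟩, q, q + 1, ?_⟩
      push_cast
      module

theorem statement7 (n : ℕ) (hn : 2 ≤ n) (i j : ℤ)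
    (hi : 1 ≤ i) (hij : i < j) (hj : j ≤ n) :
    (∀ β ∈ PhiPlus n,
      (∃ lam mu : ℝ, 0 ≤ lam ∧ 0 ≤ mu ∧
          β = lam • beta0 n i j + mu • (deltaVec n - beta0 n i j)) →
        (∃ p : ℕ, β = beta0 n i j + (p : ℝ) • deltaVec n) ∨
        (∃ p : ℕ, 1 ≤ p ∧ β = -(beta0 n i j) + (p : ℝ) • deltaVec n)) ∧
    ({β ∈ PhiPlus n | ∃ lam mu : ℝ,
        β = lam • beta0 n i j + mu • (deltaVec n - beta0 n i j)} =
      {β | ∃ p : ℕ, β = beta0 n i j + (p : ℝ) • deltaVec n} ∪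
        {β | ∃ p : ℕ, 1 ≤ p ∧ β = -(beta0 n i j) + (p : ℝ) • deltaVec n}) :=
  statement7_general n i j hi hij hj

end
end

section
/- Let c be a Coxeter element of the affine symmetric group Ŝ_n and let ≺₁, ≺₂ be two c-sortable TITOs on Z. If ≺₁ and ≺₂ have the same set of cover reflections, then ≺₁ = ≺₂. Equivalently, a c-sortable TITO is uniquely determined by the set of pairs (p,q), p < q, such that q ≺ p is a cover relation. -/
open scoped Classical

noncomputable section

/-- A (real) translation-invariant total order on ℤ with period `n`: a strict total
order `≺` on ℤ with `x ≺ y ⟺ x+n ≺ y+n`, having no cover relation `x+n ≺ x`. -/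
structure TITO (n : ℕ) where
  lt : ℤ → ℤ → Prop
  lt_irrefl : ∀ x, ¬ lt x x
  lt_trans : ∀ {x y z}, lt x y → lt y z → lt x z
  lt_total : ∀ x y, x ≠ y → lt x y ∨ lt y x
  invariant : ∀ x y, lt x y ↔ lt (x + n) (y + n)
  real : ∀ x : ℤ, ¬ (lt (x + n) x ∧ ∀ z, ¬ (lt (x + n) z ∧ lt z x))

/-- `y` covers `x` in the order `≺` (they are ≺-consecutive). -/
def TITO.covers {n : ℕ} (T : TITO n) (x y : ℤ) : Prop :=
  T.lt x y ∧ ∀ z, ¬ (T.lt x z ∧ T.lt z y)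

/-- `x` lies in `S + nℤ` (e.g. `x ∈ L̄_c` for `S = L_c`). -/
def inBar (n : ℕ) (S : Finset ℤ) (x : ℤ) : Prop := ∃ s ∈ S, (n : ℤ) ∣ (x - s)

/-- The TITO consists of a single waxing block (the shape `[{0,…,n−1}]` of an affine
permutation): every pair of elements is at finite ≺-distance and `x ≺ x+n`. -/
def IsOneWaxingBlock (n : ℕ) (T : TITO n) : Prop :=
  (∀ x : ℤ, T.lt x (x + n)) ∧
  ∀ x y : ℤ, T.lt x y → {z : ℤ | T.lt x z ∧ T.lt z y}.Finite

/-- The TITO has shape `[L] [M̲] [R]`: the residues mod `n` are partitioned into `L`, `M`,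
`R`; the block `L̄` precedes `M̄` precedes `R̄`; `L̄` and `R̄` are waxing blocks, `M̄` is a
waning block; and elements of the same block are at finite ≺-distance. (Blocks
corresponding to empty parts are absent.) -/
def IsShapeLMR (n : ℕ) (T : TITO n) (L M R : Finset ℤ) : Prop :=
  (L ∪ M ∪ R = Finset.Ico (0 : ℤ) (n : ℤ)) ∧
  Disjoint L M ∧ Disjoint L R ∧ Disjoint M R ∧
  (∀ x y : ℤ, inBar n L x → inBar n M y → T.lt x y) ∧
  (∀ x y : ℤ, inBar n L x → inBar n R y → T.lt x y) ∧
  (∀ x y : ℤ, inBar n M x → inBar n R y → T.lt x y) ∧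
  (∀ x : ℤ, inBar n L x ∨ inBar n R x → T.lt x (x + n)) ∧
  (∀ x : ℤ, inBar n M x → T.lt (x + n) x) ∧
  (∀ x y : ℤ, T.lt x y →
    ((inBar n L x ∧ inBar n L y) ∨ (inBar n M x ∧ inBar n M y) ∨
      (inBar n R x ∧ inBar n R y)) →
    {z : ℤ | T.lt x z ∧ T.lt z y}.Finite)

/-- A `c`-sortable TITO (for the Coxeter element given by the partition `Lc ⊔ Rc` of
`{1,…,n}`): its shape is `[{0,…,n−1}]` or `[L][M̲][R]` with `L ⊆ L_c`, `R ⊆ R_c`,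
`M ∩ L_c ≠ ∅ ≠ M ∩ R_c` (as residues), and its one-line notation avoids the patterns
`k ≺ i ≺ j` with `i < j < k`, `j ∈ L̄_c`, and `j ≺ k ≺ i` with `i < j < k`, `j ∈ R̄_c`. -/
def IsCSortableTITO (n : ℕ) (Lc Rc : Finset ℤ) (T : TITO n) : Prop :=
  (IsOneWaxingBlock n T ∨
    ∃ L M R : Finset ℤ, IsShapeLMR n T L M R ∧
      (∀ x ∈ L, inBar n Lc x) ∧ (∀ x ∈ R, inBar n Rc x) ∧
      (∃ x ∈ M, inBar n Lc x) ∧ (∃ x ∈ M, inBar n Rc x)) ∧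
  (¬ ∃ i j k : ℤ, i < j ∧ j < k ∧ inBar n Lc j ∧ T.lt k i ∧ T.lt i j) ∧
  (¬ ∃ i j k : ℤ, i < j ∧ j < k ∧ inBar n Rc j ∧ T.lt j k ∧ T.lt k i)

/-- The cover reflection `(p,q)` of a TITO: `p < q`, `p ≢ q (mod n)` and `q ≺ p` is a
cover relation. -/
def CoverRefl (n : ℕ) (T : TITO n) (p q : ℤ) : Prop :=
  p < q ∧ ¬ (n : ℤ) ∣ (q - p) ∧ T.covers q p


section AuxStatement11

variable {n : ℕ}

theorem TITO.asymm (T : TITO n) {a b : ℤ} (h : T.lt a b) : ¬ T.lt b a :=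
  fun h' => T.lt_irrefl a (T.lt_trans h h')

theorem TITO.shift_dvd (T : TITO n) {d : ℤ} (hd : (n : ℤ) ∣ d) (x y : ℤ) :
    T.lt x y ↔ T.lt (x + d) (y + d) := by
  obtain ⟨t, rfl⟩ := hd
  induction t using Int.induction_on with
  | zero => simp
  | succ t ih =>
      have e1 : x + (n : ℤ) * ((t : ℤ) + 1) = (x + (n : ℤ) * t) + (n : ℤ) := by ring
      have e2 : y + (n : ℤ) * ((t : ℤ) + 1) = (y + (n : ℤ) * t) + (n : ℤ) := by ring
      rw [e1, e2, ← T.invariant, ← ih]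
  | pred t ih =>
      have e1 : x + (n : ℤ) * (-(t : ℤ)) = (x + (n : ℤ) * (-(t : ℤ) - 1)) + (n : ℤ) := by ring
      have e2 : y + (n : ℤ) * (-(t : ℤ)) = (y + (n : ℤ) * (-(t : ℤ) - 1)) + (n : ℤ) := by ring
      rw [e1, e2] at ih
      rw [ih, ← T.invariant]

theorem chain_up_nat (T : TITO n) {x : ℤ} (h : T.lt x (x + n)) :
    ∀ s : ℕ, T.lt x (x + (n : ℤ) + (s : ℤ) * (n : ℤ)) := by
  intro s
  induction s with
  | zero => simpa using h
  | succ s ih =>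
      have h2 := (T.shift_dvd (show (n : ℤ) ∣ (n : ℤ) + (s : ℤ) * n from ⟨1 + s, by ring⟩)
        x (x + n)).1 h
      rw [show x + ((n : ℤ) + (s : ℤ) * n) = x + (n : ℤ) + (s : ℤ) * n from by ring,
        show x + (n : ℤ) + ((n : ℤ) + (s : ℤ) * n) = x + (n : ℤ) + (s : ℤ) * n + n
          from by ring] at h2
      push_cast
      rw [show x + (n : ℤ) + ((s : ℤ) + 1) * n = x + (n : ℤ) + (s : ℤ) * n + n from by ring]
      exact T.lt_trans ih h2

theorem chain_up (T : TITO n) {x : ℤ} (h : T.lt x (x + n)) :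
    ∀ s : ℤ, 1 ≤ s → T.lt x (x + s * n) := by
  intro s hs
  obtain ⟨t, rfl⟩ : ∃ t : ℕ, s = 1 + (t : ℤ) := ⟨(s - 1).toNat, by omega⟩
  have h3 := chain_up_nat T h t
  rwa [show x + (n : ℤ) + (t : ℤ) * n = x + (1 + (t : ℤ)) * n from by ring] at h3

theorem chain_down_nat (T : TITO n) {x : ℤ} (h : T.lt (x + n) x) :
    ∀ s : ℕ, T.lt (x + (n : ℤ) + (s : ℤ) * (n : ℤ)) x := by
  intro s
  induction s with
  | zero => simpa using h
  | succ s ih =>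
      have h2 := (T.shift_dvd (show (n : ℤ) ∣ (n : ℤ) + (s : ℤ) * n from ⟨1 + s, by ring⟩)
        (x + n) x).1 h
      rw [show x + ((n : ℤ) + (s : ℤ) * n) = x + (n : ℤ) + (s : ℤ) * n from by ring,
        show x + (n : ℤ) + ((n : ℤ) + (s : ℤ) * n) = x + (n : ℤ) + (s : ℤ) * n + n
          from by ring] at h2
      push_cast
      rw [show x + (n : ℤ) + ((s : ℤ) + 1) * n = x + (n : ℤ) + (s : ℤ) * n + n from by ring]
      exact T.lt_trans h2 ih

theorem chain_down (T : TITO n) {x : ℤ} (h : T.lt (x + n) x) :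
    ∀ s : ℤ, 1 ≤ s → T.lt (x + s * n) x := by
  intro s hs
  obtain ⟨t, rfl⟩ : ∃ t : ℕ, s = 1 + (t : ℤ) := ⟨(s - 1).toNat, by omega⟩
  have h3 := chain_down_nat T h t
  rwa [show x + (n : ℤ) + (t : ℤ) * n = x + (1 + (t : ℤ)) * n from by ring] at h3

theorem eq_of_close_dvd {d e : ℤ} (hd : 0 < d) (h : d ∣ e) (h1 : -d < e) (h2 : e < d) :
    e = 0 := by
  have habs : |e| < d := abs_lt.2 ⟨h1, h2⟩
  exact Int.eq_zero_of_abs_lt_dvd h habs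

theorem rep_unique (hn : 0 < n) {s s' : ℤ} (hd : (n : ℤ) ∣ s - s')
    (h1 : -(n : ℤ) < s - s') (h2 : s - s' < n) : s = s' := by
  have hn' : (0 : ℤ) < n := by exact_mod_cast hn
  have := eq_of_close_dvd hn' hd h1 h2
  omega

theorem exists_rep_Icc (hn : 0 < n) (z : ℤ) :
    ∃ s, s ∈ Finset.Icc (1 : ℤ) (n : ℤ) ∧ (n : ℤ) ∣ z - s := by
  have hn' : (0 : ℤ) < n := by exact_mod_cast hn
  refine ⟨(z - 1) % n + 1, ?_, ⟨(z - 1) / n, ?_⟩⟩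
  · have h1 := Int.emod_nonneg (z - 1) (ne_of_gt hn')
    have h2 := Int.emod_lt_of_pos (z - 1) hn'
    rw [Finset.mem_Icc]
    omega
  · have h := Int.emod_def (z - 1) (n : ℤ)
    linear_combination -h

theorem exists_rep_Ico (hn : 0 < n) (z : ℤ) :
    ∃ s, s ∈ Finset.Ico (0 : ℤ) (n : ℤ) ∧ (n : ℤ) ∣ z - s := by
  have hn' : (0 : ℤ) < n := by exact_mod_cast hn
  refine ⟨z % n, ?_, ⟨z / n, ?_⟩⟩
  · rw [Finset.mem_Ico]
    exact ⟨Int.emod_nonneg z (ne_of_gt hn'), Int.emod_lt_of_pos z hn'⟩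
  · have h := Int.emod_def z (n : ℤ)
    linear_combination -h

theorem inBar_or {Lc Rc : Finset ℤ} (hn : 0 < n)
    (hun : Lc ∪ Rc = Finset.Icc (1 : ℤ) (n : ℤ)) (z : ℤ) :
    inBar n Lc z ∨ inBar n Rc z := by
  obtain ⟨s, hs, hd⟩ := exists_rep_Icc hn z
  rw [← hun] at hs
  rcases Finset.mem_union.1 hs with h | h
  · exact Or.inl ⟨s, h, hd⟩
  · exact Or.inr ⟨s, h, hd⟩

theorem inBar_not_both {Lc Rc : Finset ℤ} (hn : 0 < n) (hdis : Disjoint Lc Rc)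
    (hun : Lc ∪ Rc = Finset.Icc (1 : ℤ) (n : ℤ)) (z : ℤ) :
    ¬ (inBar n Lc z ∧ inBar n Rc z) := by
  rintro ⟨⟨s, hs, hd⟩, ⟨s', hs', hd'⟩⟩
  have hsI : s ∈ Finset.Icc (1 : ℤ) (n : ℤ) := by
    rw [← hun]; exact Finset.mem_union_left _ hs
  have hs'I : s' ∈ Finset.Icc (1 : ℤ) (n : ℤ) := by
    rw [← hun]; exact Finset.mem_union_right _ hs'
  rw [Finset.mem_Icc] at hsI hs'I
  have hdd : (n : ℤ) ∣ s - s' := by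
    have h := dvd_sub hd' hd
    have e : (z - s') - (z - s) = s - s' := by ring
    rwa [e] at h
  have heq := rep_unique hn hdd (by omega) (by omega)
  rw [← heq] at hs'
  exact Finset.disjoint_left.1 hdis hs hs'

theorem inBar_LMR (hn : 0 < n) {L M R : Finset ℤ}
    (hu : L ∪ M ∪ R = Finset.Ico (0 : ℤ) (n : ℤ)) (z : ℤ) :
    inBar n L z ∨ inBar n M z ∨ inBar n R z := by
  obtain ⟨s, hs, hd⟩ := exists_rep_Ico hn z
  rw [← hu] at hs
  rcases Finset.mem_union.1 hs with h | h
  · rcases Finset.mem_union.1 h with h' | h'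
    · exact Or.inl ⟨s, h', hd⟩
    · exact Or.inr (Or.inl ⟨s, h', hd⟩)
  · exact Or.inr (Or.inr ⟨s, h, hd⟩)

theorem inBar_mono {A B : Finset ℤ} (h : ∀ s ∈ A, inBar n B s) {z : ℤ}
    (hz : inBar n A z) : inBar n B z := by
  obtain ⟨s, hs, hd⟩ := hz
  obtain ⟨t, ht, hd2⟩ := h s hs
  refine ⟨t, ht, ?_⟩
  have h3 := dvd_add hd hd2
  have e : (z - s) + (s - t) = z - t := by ring
  rwa [e] at h3

theorem inBar_shift {A : Finset ℤ} {z : ℤ} (hz : inBar n A z) : inBar n A (z + n) := by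
  obtain ⟨s, hs, hd⟩ := hz
  refine ⟨s, hs, ?_⟩
  have h3 := dvd_add hd (dvd_refl (n : ℤ))
  have e : (z - s) + (n : ℤ) = z + n - s := by ring
  rwa [e] at h3

/-- The combinatorial closure of a set `C` of (candidate) cover reflections, under
transitivity and the two pattern-forcing rules. -/
inductive Gen (n : ℕ) (Lc Rc : Finset ℤ) (C : ℤ → ℤ → Prop) : ℤ → ℤ → Prop
  | cov {p q : ℤ} : C p q → Gen n Lc Rc C p q
  | gtrans {i j k : ℤ} : Gen n Lc Rc C i j → Gen n Lc Rc C j k → Gen n Lc Rc C i k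
  | f1 {i j k : ℤ} : Gen n Lc Rc C i k → i < j → j < k → inBar n Lc j → Gen n Lc Rc C i j
  | f2 {i j k : ℤ} : Gen n Lc Rc C i k → i < j → j < k → inBar n Rc j → Gen n Lc Rc C j k

theorem gen_sound {Lc Rc : Finset ℤ} {C : ℤ → ℤ → Prop} (T : TITO n)
    (hs : IsCSortableTITO n Lc Rc T) (hC : ∀ p q, C p q → CoverRefl n T p q)
    {p q : ℤ} (hg : Gen n Lc Rc C p q) : p < q ∧ T.lt q p := by
  induction hg with
  | cov h => exact ⟨(hC _ _ h).1, (hC _ _ h).2.2.1⟩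
  | gtrans h1 h2 ih1 ih2 => exact ⟨ih1.1.trans ih2.1, T.lt_trans ih2.2 ih1.2⟩
  | @f1 i j k h hij hjk hbar ih =>
      refine ⟨hij, ?_⟩
      by_contra hnot
      have hlt : T.lt i j := (T.lt_total i j (ne_of_lt hij)).resolve_right hnot
      exact hs.2.1 ⟨i, j, k, hij, hjk, hbar, ih.2, hlt⟩
  | @f2 i j k h hij hjk hbar ih =>
      refine ⟨hjk, ?_⟩
      by_contra hnot
      have hlt : T.lt j k := (T.lt_total j k (ne_of_lt hjk)).resolve_right hnot
      exact hs.2.2 ⟨i, j, k, hij, hjk, hbar, hlt, ih.2⟩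

theorem cover_of_no_wit (T : TITO n) (hn : 0 < n) {i k : ℤ} (hik : i < k) (hki : T.lt k i)
    (hnw : ∀ z, ¬ (T.lt k z ∧ T.lt z i)) : CoverRefl n T i k := by
  have hn' : (0 : ℤ) < n := by exact_mod_cast hn
  refine ⟨hik, ?_, hki, hnw⟩
  rintro ⟨t, ht⟩
  have ht1 : 1 ≤ t := by
    by_contra hq
    push_neg at hq
    have ht0 : t ≤ 0 := by omega
    nlinarith
  have hwane : T.lt (i + n) i := by
    by_contra hq
    have hx : T.lt i (i + n) := (T.lt_total i (i + n) (by omega)).resolve_right hq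
    have hch := chain_up T hx t ht1
    have hk : k = i + t * (n : ℤ) := by linarith
    rw [← hk] at hch
    exact T.asymm hki hch
  rcases eq_or_lt_of_le ht1 with ht1' | ht2
  · have hk : k = i + (n : ℤ) := by rw [← ht1'] at ht; linarith
    rw [hk] at hki hnw
    exact T.real i ⟨hki, hnw⟩
  · have h1 : T.lt (i + (n : ℤ) + (n : ℤ)) (i + (n : ℤ)) := (T.invariant _ _).1 hwane
    have h2 := chain_down T h1 (t - 1) (by omega)
    have e : i + (n : ℤ) + (t - 1) * (n : ℤ) = k := by linarith
    rw [e] at h2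
    exact hnw (i + n) ⟨h2, hwane⟩

theorem card_step {S S' : Set ℤ} (hf : S.Finite) (hf' : S'.Finite) (hsub : S' ⊆ S)
    {z : ℤ} (hz : z ∈ S) (hzne : z ∉ S') {m : ℕ} (hcard : hf.toFinset.card ≤ m + 1) :
    hf'.toFinset.card ≤ m := by
  have h1 : hf'.toFinset ⊆ hf.toFinset.erase z := by
    intro w hw
    rw [Set.Finite.mem_toFinset] at hw
    exact Finset.mem_erase.2 ⟨fun h => hzne (h ▸ hw), hf.mem_toFinset.2 (hsub hw)⟩
  have h2 := Finset.card_le_card h1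
  rw [Finset.card_erase_of_mem (hf.mem_toFinset.2 hz)] at h2
  omega

theorem gen_complete (T : TITO n) (hn : 0 < n) {Lc Rc : Finset ℤ}
    (hun : Lc ∪ Rc = Finset.Icc (1 : ℤ) (n : ℤ))
    (hs : IsCSortableTITO n Lc Rc T) :
    ∀ m : ℕ, ∀ i k : ℤ, i < k → T.lt k i →
      ∀ hf : {z : ℤ | T.lt k z ∧ T.lt z i}.Finite, hf.toFinset.card ≤ m →
      Gen n Lc Rc (CoverRefl n T) i k := by
  intro m
  induction m with
  | zero =>
      intro i k hik hki hf hcard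
      have hnw : ∀ z, ¬ (T.lt k z ∧ T.lt z i) := by
        intro z hz
        have hmem : z ∈ hf.toFinset := hf.mem_toFinset.2 hz
        have := Finset.card_pos.2 ⟨z, hmem⟩
        omega
      exact Gen.cov (cover_of_no_wit T hn hik hki hnw)
  | succ m ih =>
      intro i k hik hki hf hcard
      by_cases hw : ∃ z, T.lt k z ∧ T.lt z i
      · obtain ⟨z, hz1, hz2⟩ := hw
        have hzS : z ∈ {z : ℤ | T.lt k z ∧ T.lt z i} := ⟨hz1, hz2⟩
        rcases lt_trichotomy z k with hzk | rfl | hkz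
        · rcases lt_trichotomy i z with hiz | rfl | hzi
          · -- i < z < k
            have hsub1 : {w : ℤ | T.lt z w ∧ T.lt w i} ⊆ {w : ℤ | T.lt k w ∧ T.lt w i} :=
              fun w hw' => ⟨T.lt_trans hz1 hw'.1, hw'.2⟩
            have hf1 : ({w : ℤ | T.lt z w ∧ T.lt w i}).Finite := hf.subset hsub1
            have hc1 : hf1.toFinset.card ≤ m :=
              card_step hf hf1 hsub1 hzS (fun h => T.lt_irrefl z h.1) hcard
            have g1 := ih i z hiz hz2 hf1 hc1
            have hsub2 : {w : ℤ | T.lt k w ∧ T.lt w z} ⊆ {w : ℤ | T.lt k w ∧ T.lt w i} :=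
              fun w hw' => ⟨hw'.1, T.lt_trans hw'.2 hz2⟩
            have hf2 : ({w : ℤ | T.lt k w ∧ T.lt w z}).Finite := hf.subset hsub2
            have hc2 : hf2.toFinset.card ≤ m :=
              card_step hf hf2 hsub2 hzS (fun h => T.lt_irrefl z h.2) hcard
            have g2 := ih z k hzk hz1 hf2 hc2
            exact Gen.gtrans g1 g2
          · exact absurd hz2 (T.lt_irrefl i)
          · -- z < i
            have hRi : inBar n Rc i := by
              rcases inBar_or hn hun i with h | h
              · exact absurd ⟨z, i, k, hzi, hik, h, hz1, hz2⟩ hs.2.1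
              · exact h
            have hsub2 : {w : ℤ | T.lt k w ∧ T.lt w z} ⊆ {w : ℤ | T.lt k w ∧ T.lt w i} :=
              fun w hw' => ⟨hw'.1, T.lt_trans hw'.2 hz2⟩
            have hf2 : ({w : ℤ | T.lt k w ∧ T.lt w z}).Finite := hf.subset hsub2
            have hc2 : hf2.toFinset.card ≤ m :=
              card_step hf hf2 hsub2 hzS (fun h => T.lt_irrefl z h.2) hcard
            have g := ih z k (hzi.trans hik) hz1 hf2 hc2
            exact Gen.f2 g hzi hik hRi
        · exact absurd hz1 (T.lt_irrefl z)
        · -- k < z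
          have hLk : inBar n Lc k := by
            rcases inBar_or hn hun k with h | h
            · exact h
            · exact absurd ⟨i, k, z, hik, hkz, h, hz1, hz2⟩ hs.2.2
          have hsub1 : {w : ℤ | T.lt z w ∧ T.lt w i} ⊆ {w : ℤ | T.lt k w ∧ T.lt w i} :=
            fun w hw' => ⟨T.lt_trans hz1 hw'.1, hw'.2⟩
          have hf1 : ({w : ℤ | T.lt z w ∧ T.lt w i}).Finite := hf.subset hsub1
          have hc1 : hf1.toFinset.card ≤ m :=
            card_step hf hf1 hsub1 hzS (fun h => T.lt_irrefl z h.1) hcard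
          have g := ih i z (hik.trans hkz) hz2 hf1 hc1
          exact Gen.f1 g hik hkz hLk
      · push_neg at hw
        exact Gen.cov (cover_of_no_wit T hn hik hki fun z hz => hw z hz.1 hz.2)

theorem wane_gen (T : TITO n) (hn : 0 < n) {Lc Rc : Finset ℤ}
    (hun : Lc ∪ Rc = Finset.Icc (1 : ℤ) (n : ℤ))
    (hs : IsCSortableTITO n Lc Rc T) {x : ℤ} (hw : T.lt (x + n) x) :
    Gen n Lc Rc (CoverRefl n T) x (x + n) := by
  have hn' : (0 : ℤ) < n := by exact_mod_cast hn
  rcases hs.1 with hone | ⟨L, M, R, hsh, _⟩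
  · exact absurd (hone.1 x) (T.asymm hw)
  · obtain ⟨hu, _, _, _, _, _, _, hwax, hwane, hfin⟩ := hsh
    have hM : inBar n M x := by
      rcases inBar_LMR hn hu x with h | h | h
      · exact absurd (hwax x (Or.inl h)) (T.asymm hw)
      · exact h
      · exact absurd (hwax x (Or.inr h)) (T.asymm hw)
    have hf := hfin (x + n) x hw (Or.inr (Or.inl ⟨inBar_shift hM, hM⟩))
    exact gen_complete T hn hun hs hf.toFinset.card x (x + n) (by omega) hw hf le_rfl

theorem part_M_iff (T : TITO n) (hn : 0 < n) {L M R : Finset ℤ}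
    (hsh : IsShapeLMR n T L M R) (z : ℤ) :
    inBar n M z ↔ T.lt (z + n) z := by
  obtain ⟨hu, _, _, _, _, _, _, hwax, hwane, _⟩ := hsh
  constructor
  · exact hwane z
  · intro hw
    rcases inBar_LMR hn hu z with h | h | h
    · exact absurd (hwax z (Or.inl h)) (T.asymm hw)
    · exact h
    · exact absurd (hwax z (Or.inr h)) (T.asymm hw)

theorem part_L_iff (T : TITO n) (hn : 0 < n) {Lc Rc L M R : Finset ℤ}
    (hdis : Disjoint Lc Rc) (hun : Lc ∪ Rc = Finset.Icc (1 : ℤ) (n : ℤ))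
    (hsh : IsShapeLMR n T L M R)
    (hL : ∀ x ∈ L, inBar n Lc x) (hR : ∀ x ∈ R, inBar n Rc x) (z : ℤ) :
    inBar n L z ↔ (¬ T.lt (z + n) z ∧ inBar n Lc z) := by
  obtain ⟨hu, _, _, _, _, _, _, hwax, hwane, _⟩ := hsh
  constructor
  · intro h
    exact ⟨T.asymm (hwax z (Or.inl h)), inBar_mono hL h⟩
  · rintro ⟨hnw, hLc⟩
    rcases inBar_LMR hn hu z with h | h | h
    · exact h
    · exact absurd (hwane z h) hnw
    · exact absurd ⟨hLc, inBar_mono hR h⟩ (inBar_not_both hn hdis hun z)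

theorem part_R_iff (T : TITO n) (hn : 0 < n) {Lc Rc L M R : Finset ℤ}
    (hdis : Disjoint Lc Rc) (hun : Lc ∪ Rc = Finset.Icc (1 : ℤ) (n : ℤ))
    (hsh : IsShapeLMR n T L M R)
    (hL : ∀ x ∈ L, inBar n Lc x) (hR : ∀ x ∈ R, inBar n Rc x) (z : ℤ) :
    inBar n R z ↔ (¬ T.lt (z + n) z ∧ inBar n Rc z) := by
  obtain ⟨hu, _, _, _, _, _, _, hwax, hwane, _⟩ := hsh
  constructor
  · intro h
    exact ⟨T.asymm (hwax z (Or.inr h)), inBar_mono hR h⟩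
  · rintro ⟨hnw, hRc⟩
    rcases inBar_LMR hn hu z with h | h | h
    · exact absurd ⟨inBar_mono hL h, hRc⟩ (inBar_not_both hn hdis hun z)
    · exact absurd (hwane z h) hnw
    · exact h

theorem transfer {Lc Rc : Finset ℤ} (hn : 0 < n) (hdis : Disjoint Lc Rc)
    (hun : Lc ∪ Rc = Finset.Icc (1 : ℤ) (n : ℤ))
    (A B : TITO n) (hA : IsCSortableTITO n Lc Rc A) (hB : IsCSortableTITO n Lc Rc B)
    (hc : ∀ p q, CoverRefl n B p q → CoverRefl n A p q)
    (hc' : ∀ p q, CoverRefl n A p q → CoverRefl n B p q)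
    {x y : ℤ} (hxy : x < y) (h2 : B.lt y x) : A.lt y x := by
  have waneBA : ∀ z : ℤ, B.lt (z + n) z → A.lt (z + n) z := fun z hw =>
    (gen_sound A hA hc (wane_gen B hn hun hB hw)).2
  have waneAB : ∀ z : ℤ, A.lt (z + n) z → B.lt (z + n) z := fun z hw =>
    (gen_sound B hB hc' (wane_gen A hn hun hA hw)).2
  rcases hB.1 with ⟨_, hfinB⟩ | ⟨L, M, R, hsh, hLs, hRs, hML, hMR⟩
  · exact (gen_sound A hA hc
      (gen_complete B hn hun hB _ x y hxy h2 (hfinB y x h2) le_rfl)).2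
  · obtain ⟨hu, hd1, hd2, hd3, hLM, hLR, hMR2, hwax, hwane, hfin⟩ := id hsh
    have samecase : ((inBar n L y ∧ inBar n L x) ∨ (inBar n M y ∧ inBar n M x) ∨
        (inBar n R y ∧ inBar n R x)) → A.lt y x := by
      intro hmem
      exact (gen_sound A hA hc
        (gen_complete B hn hun hB _ x y hxy h2 (hfin y x h2 hmem) le_rfl)).2
    obtain ⟨m, hmM, _⟩ := hML
    have hwB : B.lt (m + n) m := hwane m ⟨m, hmM, by simp⟩
    have hwA : A.lt (m + n) m := waneBA m hwB
    have hAshape : ∃ L' M' R' : Finset ℤ, IsShapeLMR n A L' M' R' ∧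
        (∀ x ∈ L', inBar n Lc x) ∧ (∀ x ∈ R', inBar n Rc x) := by
      rcases hA.1 with hone | ⟨L', M', R', hsh', hL', hR', _, _⟩
      · exact absurd (hone.1 m) (A.asymm hwA)
      · exact ⟨L', M', R', hsh', hL', hR'⟩
    obtain ⟨L', M', R', hsh', hL', hR'⟩ := hAshape
    obtain ⟨hu', hd1', hd2', hd3', hLM', hLR', hMR2', hwax', hwane', hfin'⟩ := id hsh'
    have chL : ∀ z, inBar n L z → inBar n L' z := by
      intro z hz
      have h3 := (part_L_iff B hn hdis hun hsh hLs hRs z).1 hz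
      exact (part_L_iff A hn hdis hun hsh' hL' hR' z).2 ⟨fun hw => h3.1 (waneAB z hw), h3.2⟩
    have chM : ∀ z, inBar n M z → inBar n M' z := fun z hz =>
      (part_M_iff A hn hsh' z).2 (waneBA z ((part_M_iff B hn hsh z).1 hz))
    have chR : ∀ z, inBar n R z → inBar n R' z := by
      intro z hz
      have h3 := (part_R_iff B hn hdis hun hsh hLs hRs z).1 hz
      exact (part_R_iff A hn hdis hun hsh' hL' hR' z).2 ⟨fun hw => h3.1 (waneAB z hw), h3.2⟩
    rcases inBar_LMR hn hu y with hy | hy | hy <;> rcases inBar_LMR hn hu x with hx | hx | hx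
    · exact samecase (Or.inl ⟨hy, hx⟩)
    · exact hLM' y x (chL y hy) (chM x hx)
    · exact hLR' y x (chL y hy) (chR x hx)
    · exact absurd (hLM x y hx hy) (B.asymm h2)
    · exact samecase (Or.inr (Or.inl ⟨hy, hx⟩))
    · exact hMR2' y x (chM y hy) (chR x hx)
    · exact absurd (hLR x y hx hy) (B.asymm h2)
    · exact absurd (hMR2 x y hx hy) (B.asymm h2)
    · exact samecase (Or.inr (Or.inr ⟨hy, hx⟩))

end AuxStatement11

/- Statement 11: a c-sortable TITO is uniquely determined by its set of cover
reflections. -/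
theorem statement11 (n : ℕ) (hn : 0 < n) (Lc Rc : Finset ℤ)
    (hdis : Disjoint Lc Rc) (hun : Lc ∪ Rc = Finset.Icc (1 : ℤ) (n : ℤ))
    (hLne : Lc.Nonempty) (hRne : Rc.Nonempty)
    (T₁ T₂ : TITO n)
    (h₁ : IsCSortableTITO n Lc Rc T₁) (h₂ : IsCSortableTITO n Lc Rc T₂)
    (hcov : ∀ p q : ℤ, CoverRefl n T₁ p q ↔ CoverRefl n T₂ p q) :
    ∀ x y : ℤ, T₁.lt x y ↔ T₂.lt x y := by
  have key : ∀ (A B : TITO n), IsCSortableTITO n Lc Rc A → IsCSortableTITO n Lc Rc B →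
      (∀ p q : ℤ, CoverRefl n A p q ↔ CoverRefl n B p q) →
      ∀ x y : ℤ, A.lt x y → B.lt x y := by
    intro A B hA hB hc x y h
    by_contra hnot
    have hne : x ≠ y := fun h' => A.lt_irrefl x (h' ▸ h)
    have h2 : B.lt y x := (B.lt_total x y hne).resolve_left hnot
    rcases lt_trichotomy x y with hxy | heq | hyx
    · exact A.asymm h (transfer hn hdis hun A B hA hB
        (fun p q => (hc p q).2) (fun p q => (hc p q).1) hxy h2)
    · exact hne heq
    · exact hnot (transfer hn hdis hun B A hB hA
        (fun p q => (hc p q).1) (fun p q => (hc p q).2) hyx h)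
  intro x y
  exact ⟨fun h => key T₁ T₂ h₁ h₂ hcov x y h,
    fun h => key T₂ T₁ h₂ h₁ (fun p q => (hcov p q).symm) x y h⟩

end
end

section
/- Let c be a Coxeter element of Ŝ_n and let ≺ be a c-sortable TITO on Z that is not an affine permutation (i.e. has shape [L][M]̲[R]). Suppose there exist x, y in the waning block M̲ with x ≺ y and x < y. Then the elements of any window of M̲ decompose into consecutive maximal descending chains a₁^{(i)} > ⋯ > a_{r_i}^{(i)} (i = 1,…,k), and for every i, the first element a₁^{(i)} of each maximal descending chain lies in R̄_c and the last element a_{r_i}^{(i)} lies in L̄_c. -/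
open scoped Classical

noncomputable section

/-- A descending chain of a TITO: a nonempty sequence of strictly decreasing integers,
pairwise distinct mod `n` except possibly the first and last, each consecutive pair
being a cover reflection. -/
def IsDescChain (n : ℕ) (T : TITO n) (l : List ℤ) : Prop :=
  l ≠ [] ∧ l.Chain' (fun a b => b < a ∧ T.covers a b) ∧
  ∀ i j : Fin l.length, (i : ℕ) < (j : ℕ) → (n : ℤ) ∣ (l.get i - l.get j) →
    ((i : ℕ) = 0 ∧ (j : ℕ) + 1 = l.length)

/-- A maximal descending chain: one that cannot be properly extended. -/
def IsMaxDescChain (n : ℕ) (T : TITO n) (l : List ℤ) : Prop :=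
  IsDescChain n T l ∧ (∀ b : ℤ, ¬ IsDescChain n T (b :: l)) ∧
    (∀ b : ℤ, ¬ IsDescChain n T (l ++ [b]))

namespace TITO

variable {n : ℕ} (T : TITO n)

theorem asymm_s12 {x y : ℤ} (h : T.lt x y) : ¬ T.lt y x := fun h' =>
  T.lt_irrefl x (T.lt_trans h h')

theorem shift_nat (k : ℕ) (x y : ℤ) : T.lt x y ↔ T.lt (x + k * n) (y + k * n) := by
  induction k with
  | zero => simp
  | succ k ih =>
    rw [ih, T.invariant]
    have h1 : x + k * n + n = x + (k + 1 : ℕ) * n := by push_cast; ring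
    have h2 : y + k * n + n = y + (k + 1 : ℕ) * n := by push_cast; ring
    rw [h1, h2]

theorem shift (k : ℤ) (x y : ℤ) : T.lt x y ↔ T.lt (x + k * n) (y + k * n) := by
  rcases le_or_gt 0 k with hk | hk
  · lift k to ℕ using hk
    exact_mod_cast T.shift_nat k x y
  · have hk' : 0 ≤ -k := by omega
    lift (-k) to ℕ using hk' with m hm
    have := T.shift_nat m (x + k * n) (y + k * n)
    have e1 : x + k * n + (m : ℤ) * n = x := by
      have : (m : ℤ) = -k := by omega
      rw [this]; ring
    have e2 : y + k * n + (m : ℤ) * n = y := by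
      have : (m : ℤ) = -k := by omega
      rw [this]; ring
    rw [e1, e2] at this
    exact this.symm

theorem shift_dvd_s12 {d : ℤ} (hd : (n : ℤ) ∣ d) (x y : ℤ) :
    T.lt x y ↔ T.lt (x + d) (y + d) := by
  obtain ⟨k, rfl⟩ := hd
  have := T.shift k x y
  rwa [mul_comm] at this

theorem covers_shift {d : ℤ} (hd : (n : ℤ) ∣ d) {x y : ℤ} (h : T.covers x y) :
    T.covers (x + d) (y + d) := by
  refine ⟨(T.shift_dvd_s12 hd x y).1 h.1, fun z hz => ?_⟩
  refine h.2 (z - d) ⟨?_, ?_⟩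
  · have := (T.shift_dvd_s12 hd x (z - d)).2
    apply this
    convert hz.1 using 2
    ring
  · have := (T.shift_dvd_s12 hd (z - d) y).2
    apply this
    convert hz.2 using 2
    ring

theorem succ_unique {x u v : ℤ} (hu : T.covers x u) (hv : T.covers x v) : u = v := by
  by_contra hne
  rcases T.lt_total u v hne with h | h
  · exact hv.2 u ⟨hu.1, h⟩
  · exact hu.2 v ⟨hv.1, h⟩

theorem pred_unique {x u v : ℤ} (hu : T.covers u x) (hv : T.covers v x) : u = v := by
  by_contra hne
  rcases T.lt_total u v hne with h | h
  · exact hu.2 v ⟨h, hv.1⟩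
  · exact hv.2 u ⟨h, hu.1⟩

/-- In a nonempty finite set there is a ≺-maximum. -/
theorem exists_max {S : Set ℤ} (hS : S.Finite) (hne : S.Nonempty) :
    ∃ a ∈ S, ∀ b ∈ S, b ≠ a → T.lt b a := by
  classical
  obtain ⟨s, hs⟩ := hS.exists_finset_coe
  subst hs
  induction s using Finset.induction_on with
  | empty => simp at hne
  | @insert x s hx ih =>
    rcases s.eq_empty_or_nonempty with rfl | hsne
    · exact ⟨x, by simp, by simp +contextual⟩
    · obtain ⟨a, ha, hmax⟩ := ih (by simpa using s.finite_toSet) (by simpa using hsne)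
      simp only [Finset.coe_insert, Set.mem_insert_iff, Finset.mem_coe] at ha ⊢
      by_cases hax : x = a
      · refine ⟨a, Or.inr ha, ?_⟩
        rintro b (rfl | hb) hba
        · exact absurd hax hba
        · exact hmax b hb hba
      rcases T.lt_total x a (hax) with h | h
      · refine ⟨a, Or.inr ha, ?_⟩
        rintro b (rfl | hb) hba
        · exact h
        · exact hmax b hb hba
      · refine ⟨x, Or.inl rfl, ?_⟩
        rintro b (rfl | hb) hbx
        · exact absurd rfl hbx
        · by_cases hba : b = a
          · subst hba; exact h
          · exact T.lt_trans (hmax b hb hba) h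

theorem exists_min {S : Set ℤ} (hS : S.Finite) (hne : S.Nonempty) :
    ∃ a ∈ S, ∀ b ∈ S, b ≠ a → T.lt a b := by
  classical
  obtain ⟨s, hs⟩ := hS.exists_finset_coe
  subst hs
  induction s using Finset.induction_on with
  | empty => simp at hne
  | @insert x s hx ih =>
    rcases s.eq_empty_or_nonempty with rfl | hsne
    · exact ⟨x, by simp, by simp +contextual⟩
    · obtain ⟨a, ha, hmin⟩ := ih (by simpa using s.finite_toSet) (by simpa using hsne)
      simp only [Finset.coe_insert, Set.mem_insert_iff, Finset.mem_coe] at ha ⊢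
      by_cases hax : x = a
      · refine ⟨a, Or.inr ha, ?_⟩
        rintro b (rfl | hb) hba
        · exact absurd hax hba
        · exact hmin b hb hba
      rcases T.lt_total x a (hax) with h | h
      · refine ⟨x, Or.inl rfl, ?_⟩
        rintro b (rfl | hb) hbx
        · exact absurd rfl hbx
        · by_cases hba : b = a
          · subst hba; exact h
          · exact T.lt_trans h (hmin b hb hba)
      · refine ⟨a, Or.inr ha, ?_⟩
        rintro b (rfl | hb) hba
        · exact h
        · exact hmin b hb hba

end TITO

theorem inBar_of_dvd {n : ℕ} {S : Finset ℤ} {x y : ℤ} (h : (n : ℤ) ∣ (x - y))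
    (hy : inBar n S y) : inBar n S x := by
  obtain ⟨s, hs, hd⟩ := hy
  exact ⟨s, hs, by have := dvd_add h hd; simpa using this⟩

theorem inBar_total {n : ℕ} (hn : 0 < n) {A : Finset ℤ} {lo : ℤ}
    (hA : ∀ r : ℤ, lo ≤ r → r < lo + n → r ∈ A) (x : ℤ) : inBar n A x := by
  have hn' : (n : ℤ) ≠ 0 := by exact_mod_cast hn.ne'
  refine ⟨(x - lo) % n + lo, hA _ ?_ ?_, ?_⟩
  · have := Int.emod_nonneg (x - lo) hn'
    omega
  · have := Int.emod_lt_of_pos (x - lo) (by exact_mod_cast hn : (0:ℤ) < n)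
    omega
  · have := Int.emod_emod_of_dvd (x - lo) (dvd_refl (n:ℤ))
    have h2 : (n : ℤ) ∣ (x - lo) - (x - lo) % n := Int.dvd_self_sub_of_emod_eq rfl
    have : x - ((x - lo) % n + lo) = (x - lo) - (x - lo) % n := by ring
    rw [this]; exact h2

theorem inBar_unique {n : ℕ} {A B : Finset ℤ} {lo : ℤ}
    (hA : ∀ s ∈ A, lo ≤ s ∧ s < lo + n) (hB : ∀ s ∈ B, lo ≤ s ∧ s < lo + n)
    (hdis : Disjoint A B) (x : ℤ) : ¬ (inBar n A x ∧ inBar n B x) := by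
  rintro ⟨⟨s, hs, hds⟩, ⟨t, ht, hdt⟩⟩
  have h1 := hA s hs
  have h2 := hB t ht
  have hdd : (n : ℤ) ∣ (t - s) := by
    have h3 := dvd_sub hds hdt
    have : x - s - (x - t) = t - s := by ring
    rw [this] at h3; exact h3
  have hst : s = t := by
    rcases hdd with ⟨k, hk⟩
    have hk0 : k = 0 := by nlinarith [h1.1, h1.2, h2.1, h2.2]
    rw [hk0] at hk; omega
  subst hst
  exact Finset.disjoint_left.1 hdis hs ht

-- ===== section with the standing hypotheses =====
section St12

variable {n : ℕ} {Lc Rc : Finset ℤ} {T : TITO n} {L M R : Finset ℤ}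

-- totality and exclusivity of L̄c / R̄c
theorem lr_total (hn : 0 < n) (hun : Lc ∪ Rc = Finset.Icc (1 : ℤ) (n : ℤ)) (x : ℤ) :
    inBar n Lc x ∨ inBar n Rc x := by
  have h : inBar n (Lc ∪ Rc) x := by
    refine inBar_total hn (lo := 1) (fun r h1 h2 => ?_) x
    rw [hun, Finset.mem_Icc]; omega
  obtain ⟨s, hs, hd⟩ := h
  rcases Finset.mem_union.mp hs with h | h
  · exact Or.inl ⟨s, h, hd⟩
  · exact Or.inr ⟨s, h, hd⟩

theorem lr_not_both (hdis : Disjoint Lc Rc) (hun : Lc ∪ Rc = Finset.Icc (1 : ℤ) (n : ℤ))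
    (x : ℤ) : ¬ (inBar n Lc x ∧ inBar n Rc x) := by
  refine inBar_unique (lo := 1) (fun s hs => ?_) (fun s hs => ?_) hdis x
  · have : s ∈ Lc ∪ Rc := Finset.mem_union_left _ hs
    rw [hun, Finset.mem_Icc] at this; omega
  · have : s ∈ Lc ∪ Rc := Finset.mem_union_right _ hs
    rw [hun, Finset.mem_Icc] at this; omega

-- block structure
theorem block_total (hn : 0 < n) (hshape : IsShapeLMR n T L M R) (x : ℤ) :
    inBar n L x ∨ inBar n M x ∨ inBar n R x := by
  have h : inBar n (L ∪ M ∪ R) x := by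
    refine inBar_total hn (lo := 0) (fun r h1 h2 => ?_) x
    rw [hshape.1, Finset.mem_Ico]; omega
  obtain ⟨s, hs, hd⟩ := h
  rcases Finset.mem_union.mp hs with h | h
  · rcases Finset.mem_union.mp h with h | h
    · exact Or.inl ⟨s, h, hd⟩
    · exact Or.inr (Or.inl ⟨s, h, hd⟩)
  · exact Or.inr (Or.inr ⟨s, h, hd⟩)

theorem block_bound (hshape : IsShapeLMR n T L M R) {A : Finset ℤ}
    (hA : A = L ∨ A = M ∨ A = R) : ∀ s ∈ A, (0:ℤ) ≤ s ∧ s < 0 + n := by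
  intro s hs
  have : s ∈ L ∪ M ∪ R := by
    rcases hA with rfl | rfl | rfl
    · exact Finset.mem_union_left _ (Finset.mem_union_left _ hs)
    · exact Finset.mem_union_left _ (Finset.mem_union_right _ hs)
    · exact Finset.mem_union_right _ hs
  rw [hshape.1, Finset.mem_Ico] at this; omega

theorem not_LM (hshape : IsShapeLMR n T L M R) (x : ℤ) :
    ¬ (inBar n L x ∧ inBar n M x) :=
  inBar_unique (block_bound hshape (Or.inl rfl)) (block_bound hshape (Or.inr (Or.inl rfl)))
    hshape.2.1 x

theorem not_MR (hshape : IsShapeLMR n T L M R) (x : ℤ) :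
    ¬ (inBar n M x ∧ inBar n R x) :=
  inBar_unique (block_bound hshape (Or.inr (Or.inl rfl)))
    (block_bound hshape (Or.inr (Or.inr rfl))) hshape.2.2.2.1 x

-- waning block facts
theorem wan_nat (hshape : IsShapeLMR n T L M R) {m : ℤ} (hm : inBar n M m) :
    ∀ k : ℕ, T.lt (m + ((k : ℤ) + 1) * n) m := by
  intro k
  induction k with
  | zero => simpa using hshape.2.2.2.2.2.2.2.2.1 m hm
  | succ k ih =>
    have h2 : T.lt (m + n) m := by simpa using hshape.2.2.2.2.2.2.2.2.1 m hm
    have h3 := (T.invariant (m + ((k : ℤ) + 1) * n) m).mp ih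
    have e : m + ((k : ℤ) + 1) * n + n = m + (((k : ℕ) + 1 : ℤ) + 1) * n := by
      push_cast; ring
    rw [e] at h3
    exact T.lt_trans (by exact_mod_cast h3) h2

theorem wan (hshape : IsShapeLMR n T L M R) {m : ℤ} (hm : inBar n M m)
    {k : ℤ} (hk : 1 ≤ k) : T.lt (m + k * n) m := by
  have h0 : 0 ≤ k - 1 := by omega
  lift (k - 1) to ℕ using h0 with j hj
  have := wan_nat hshape hm j
  have e : m + ((j : ℤ) + 1) * n = m + k * n := by rw [hj]; ring
  rwa [e] at this

theorem M_class_lt (hshape : IsShapeLMR n T L M R) {m : ℤ} (hm : inBar n M m)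
    {k : ℤ} (h : T.lt (m + k * n) m) : 1 ≤ k := by
  by_contra hk
  push_neg at hk
  rcases eq_or_lt_of_le (by omega : k ≤ 0) with rfl | hk'
  · simp at h
    exact T.lt_irrefl m h
  · have hm' : inBar n M (m + k * n) := inBar_of_dvd ⟨k, by ring⟩ hm
    have : T.lt (m + k * n + (-k) * n) (m + k * n) := wan hshape hm' (by omega)
    have e : m + k * n + (-k) * n = m := by ring
    rw [e] at this
    exact T.asymm_s12 h this

theorem M_class_lt' (hshape : IsShapeLMR n T L M R) {m : ℤ} (hm : inBar n M m)
    {k : ℤ} (h : T.lt m (m + k * n)) : k ≤ -1 := by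
  by_contra hk
  push_neg at hk
  rcases eq_or_lt_of_le (by omega : 0 ≤ k) with hk' | hk'
  · rw [← hk'] at h; simp at h; exact T.lt_irrefl m h
  · exact T.asymm_s12 h (wan hshape hm (by omega))

theorem finM (hshape : IsShapeLMR n T L M R) {x y : ℤ} (hx : inBar n M x)
    (hy : inBar n M y) (h : T.lt x y) : {z : ℤ | T.lt x z ∧ T.lt z y}.Finite :=
  hshape.2.2.2.2.2.2.2.2.2 x y h (Or.inr (Or.inl ⟨hx, hy⟩))

-- the key ascent lemma
theorem asc (hn : 0 < n) (hdis : Disjoint Lc Rc)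
    (hun : Lc ∪ Rc = Finset.Icc (1 : ℤ) (n : ℤ))
    (hT : IsCSortableTITO n Lc Rc T) (hshape : IsShapeLMR n T L M R)
    {x y : ℤ} (hx : inBar n M x) (hy : inBar n M y) (hlt : T.lt x y) (hv : x < y) :
    inBar n Lc x ∧ inBar n Rc y := by
  have hnz : (0:ℤ) < n := by exact_mod_cast hn
  constructor
  · -- x ∈ L̄c : rule out x ∈ R̄c
    rcases lr_total hn hun x with hxL | hxR
    · exact hxL
    exfalso
    -- find K with y ≺ x - (K+1) n
    have hstep : ∃ K : ℕ, T.lt y (x - ((K : ℤ) + 1) * n) := by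
      by_contra hc
      push_neg at hc
      have hF := finM hshape hx hy hlt
      have hsub : ∀ K : ℕ, x - ((K : ℤ) + 1) * n ∈ {z : ℤ | T.lt x z ∧ T.lt z y} ∨
          x - ((K : ℤ) + 1) * n = y := by
        intro K
        have h1 : T.lt x (x - ((K : ℤ) + 1) * n) := by
          have hm' : inBar n M (x - ((K:ℤ)+1) * n) := inBar_of_dvd ⟨-((K:ℤ)+1), by ring⟩ hx
          have := wan hshape hm' (k := (K:ℤ)+1) (by omega)
          have e : x - ((K:ℤ)+1) * n + ((K:ℤ)+1) * n = x := by ring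
          rwa [e] at this
        by_cases he : x - ((K : ℤ) + 1) * n = y
        · exact Or.inr he
        rcases T.lt_total _ y he with h2 | h2
        · exact Or.inl ⟨h1, h2⟩
        · exact absurd h2 (hc K)
      -- injective map from ℕ into a finite set plus a single point
      have : (Set.univ : Set ℕ).Finite := by
        have hinj : Function.Injective (fun K : ℕ => x - ((K : ℤ) + 1) * n) := by
          intro a b hab
          simp only at hab
          have : ((a : ℤ) + 1) * n = ((b : ℤ) + 1) * n := by omega
          have := mul_right_cancel₀ (by omega : (n:ℤ) ≠ 0) this
          exact_mod_cast by omega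
        have h1 : ((fun K : ℕ => x - ((K : ℤ) + 1) * n) ⁻¹'
            ({z : ℤ | T.lt x z ∧ T.lt z y} ∪ {y})).Finite :=
          Set.Finite.preimage (hinj.injOn) (hF.union (Set.finite_singleton y))
        refine h1.subset (fun K _ => ?_)
        rcases hsub K with h | h
        · exact Or.inl h
        · exact Or.inr h
      exact Set.infinite_univ this
    obtain ⟨K, hK⟩ := hstep
    exact hT.2.2 ⟨x - ((K:ℤ)+1) * n, x, y, by nlinarith, hv, hxR, hlt, hK⟩
  · rcases lr_total hn hun y with hyL | hyR
    swap
    · exact hyR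
    exfalso
    have hstep : ∃ K : ℕ, T.lt (y + ((K : ℤ) + 1) * n) x := by
      by_contra hc
      push_neg at hc
      have hF := finM hshape hx hy hlt
      have hsub : ∀ K : ℕ, y + ((K : ℤ) + 1) * n ∈ {z : ℤ | T.lt x z ∧ T.lt z y} ∨
          y + ((K : ℤ) + 1) * n = x := by
        intro K
        have h1 : T.lt (y + ((K : ℤ) + 1) * n) y := wan hshape hy (by omega)
        by_cases he : y + ((K : ℤ) + 1) * n = x
        · exact Or.inr he
        rcases T.lt_total x _ (fun h => he h.symm) with h2 | h2
        · exact Or.inl ⟨h2, h1⟩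
        · exact absurd h2 (hc K)
      have : (Set.univ : Set ℕ).Finite := by
        have hinj : Function.Injective (fun K : ℕ => y + ((K : ℤ) + 1) * n) := by
          intro a b hab
          simp only at hab
          have : ((a : ℤ) + 1) * n = ((b : ℤ) + 1) * n := by omega
          have := mul_right_cancel₀ (by omega : (n:ℤ) ≠ 0) this
          exact_mod_cast by omega
        have h1 : ((fun K : ℕ => y + ((K : ℤ) + 1) * n) ⁻¹'
            ({z : ℤ | T.lt x z ∧ T.lt z y} ∪ {x})).Finite :=
          Set.Finite.preimage (hinj.injOn) (hF.union (Set.finite_singleton x))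
        refine h1.subset (fun K _ => ?_)
        rcases hsub K with h | h
        · exact Or.inl h
        · exact Or.inr h
      exact Set.infinite_univ this
    obtain ⟨K, hK⟩ := hstep
    exact hT.2.1 ⟨x, y, y + ((K:ℤ)+1) * n, hv, by nlinarith, hyL, hK, hlt⟩

-- covers stay in M̄
theorem cover_mem_M_left (hn : 0 < n) (hshape : IsShapeLMR n T L M R) {m p : ℤ}
    (hm : inBar n M m) (hc : T.covers p m) : inBar n M p := by
  rcases block_total hn hshape p with hp | hp | hp
  · exfalso
    have h1 : T.lt p (p + n) := hshape.2.2.2.2.2.2.2.1 p (Or.inl hp)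
    have h2 : T.lt (p + n) m :=
      hshape.2.2.2.2.1 (p + n) m (inBar_of_dvd (by simp) hp) hm
    exact hc.2 (p + n) ⟨h1, h2⟩
  · exact hp
  · exfalso
    exact T.asymm_s12 hc.1 (hshape.2.2.2.2.2.2.1 m p hm hp)

theorem cover_mem_M_right (hn : 0 < n) (hshape : IsShapeLMR n T L M R) {m s : ℤ}
    (hm : inBar n M m) (hc : T.covers m s) : inBar n M s := by
  rcases block_total hn hshape s with hs | hs | hs
  · exact absurd hc.1 (T.asymm_s12 (hshape.2.2.2.2.1 s m hs hm))
  · exact hs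
  · exfalso
    have hm' : inBar n M (m - n) := inBar_of_dvd ⟨-1, by ring⟩ hm
    have h1 : T.lt m (m - n) := by
      have := wan hshape hm' (k := 1) le_rfl
      have e : m - n + 1 * n = m := by ring
      rwa [e] at this
    have h2 : T.lt (m - n) s := hshape.2.2.2.2.2.2.1 (m - n) s hm' hs
    exact hc.2 (m - n) ⟨h1, h2⟩

-- predecessor and successor existence inside M̄
theorem pred_exists (hn : 0 < n) (hshape : IsShapeLMR n T L M R) {m : ℤ}
    (hm : inBar n M m) : ∃ p, T.covers p m := by
  have hwan : T.lt (m + n) m := by simpa using hshape.2.2.2.2.2.2.2.2.1 m hm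
  have hne : {z : ℤ | T.lt (m + n) z ∧ T.lt z m}.Nonempty := by
    by_contra hc
    rw [Set.not_nonempty_iff_eq_empty] at hc
    refine T.real m ⟨hwan, fun z hz => ?_⟩
    have : z ∈ {z : ℤ | T.lt (m + n) z ∧ T.lt z m} := hz
    rw [hc] at this; exact this
  have hF : {z : ℤ | T.lt (m + n) z ∧ T.lt z m}.Finite :=
    finM hshape (inBar_of_dvd (by simp) hm) hm hwan
  obtain ⟨a, ha, hmax⟩ := T.exists_max hF hne
  refine ⟨a, ha.2, fun z hz => ?_⟩
  have hz1 : T.lt (m + n) z := T.lt_trans ha.1 hz.1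
  have hzne : z ≠ a := fun he => T.lt_irrefl a (he ▸ hz.1)
  exact T.asymm_s12 hz.1 (hmax z ⟨hz1, hz.2⟩ hzne)

theorem succ_exists (hn : 0 < n) (hshape : IsShapeLMR n T L M R) {m : ℤ}
    (hm : inBar n M m) : ∃ s, T.covers m s := by
  have hm' : inBar n M (m - n) := inBar_of_dvd ⟨-1, by ring⟩ hm
  have hwan : T.lt m (m - n) := by
    have := wan hshape hm' (k := 1) le_rfl
    have e : m - n + 1 * n = m := by ring
    rwa [e] at this
  have hne : {z : ℤ | T.lt m z ∧ T.lt z (m - n)}.Nonempty := by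
    by_contra hc
    rw [Set.not_nonempty_iff_eq_empty] at hc
    refine T.real (m - n) ⟨by simpa using hwan, fun z hz => ?_⟩
    have : z ∈ {z : ℤ | T.lt m z ∧ T.lt z (m - n)} := ⟨by simpa using hz.1, hz.2⟩
    rw [hc] at this; exact this
  have hF : {z : ℤ | T.lt m z ∧ T.lt z (m - n)}.Finite := finM hshape hm hm' hwan
  obtain ⟨a, ha, hmin⟩ := T.exists_min hF hne
  refine ⟨a, ha.1, fun z hz => ?_⟩
  have hz2 : T.lt z (m - n) := T.lt_trans hz.2 ha.2
  have hzne : z ≠ a := fun he => T.lt_irrefl a (he ▸ hz.2)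
  exact T.asymm_s12 hz.2 (hmin z ⟨hz.1, hz2⟩ hzne)

theorem pred_props (hn : 0 < n) (hdis : Disjoint Lc Rc)
    (hun : Lc ∪ Rc = Finset.Icc (1 : ℤ) (n : ℤ))
    (hT : IsCSortableTITO n Lc Rc T) (hshape : IsShapeLMR n T L M R)
    {m p : ℤ} (hm : inBar n M m) (hLcm : inBar n Lc m) (hc : T.covers p m) :
    m < p ∧ ¬ (n : ℤ) ∣ (p - m) := by
  have hp : inBar n M p := cover_mem_M_left hn hshape hm hc
  have hne : p ≠ m := fun he => T.lt_irrefl m (he ▸ hc.1)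
  have hgt : m < p := by
    rcases lt_trichotomy p m with h | h | h
    · exfalso
      have := (asc hn hdis hun hT hshape hp hm hc.1 h).2
      exact lr_not_both hdis hun m ⟨hLcm, this⟩
    · exact absurd h hne
    · exact h
  refine ⟨hgt, fun hdvd => ?_⟩
  obtain ⟨k, hk⟩ := hdvd
  have hpk : p = m + k * n := by rw [mul_comm] at hk; omega
  rw [hpk] at hc
  have hk1 : 1 ≤ k := M_class_lt hshape hm hc.1
  rcases eq_or_lt_of_le hk1 with rfl | hk2
  · refine T.real m ⟨by simpa using hshape.2.2.2.2.2.2.2.2.1 m hm, fun z hz => ?_⟩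
    exact hc.2 z ⟨by simpa using hz.1, hz.2⟩
  · have h1 : T.lt (m + k * n) (m + n) := by
      have hm' : inBar n M (m + n) := inBar_of_dvd (by simp) hm
      have := wan hshape hm' (k := k - 1) (by omega)
      have e : m + n + (k - 1) * n = m + k * n := by ring
      rwa [e] at this
    have h2 : T.lt (m + n) m := by simpa using hshape.2.2.2.2.2.2.2.2.1 m hm
    exact hc.2 (m + n) ⟨h1, h2⟩

theorem succ_props (hn : 0 < n) (hdis : Disjoint Lc Rc)
    (hun : Lc ∪ Rc = Finset.Icc (1 : ℤ) (n : ℤ))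
    (hT : IsCSortableTITO n Lc Rc T) (hshape : IsShapeLMR n T L M R)
    {m s : ℤ} (hm : inBar n M m) (hRcm : inBar n Rc m) (hc : T.covers m s) :
    s < m ∧ ¬ (n : ℤ) ∣ (s - m) := by
  have hs : inBar n M s := cover_mem_M_right hn hshape hm hc
  have hne : s ≠ m := fun he => T.lt_irrefl m (he ▸ hc.1)
  have hlt : s < m := by
    rcases lt_trichotomy s m with h | h | h
    · exact h
    · exact absurd h hne
    · exfalso
      have := (asc hn hdis hun hT hshape hm hs hc.1 h).1
      exact lr_not_both hdis hun m ⟨this, hRcm⟩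
  refine ⟨hlt, fun hdvd => ?_⟩
  obtain ⟨k, hk⟩ := hdvd
  have hsk : s = m + k * n := by rw [mul_comm] at hk; omega
  rw [hsk] at hc
  have hk1 : k ≤ -1 := M_class_lt' hshape hm hc.1
  rcases eq_or_lt_of_le (by omega : k ≤ -1) with hke | hk2
  · -- k = -1 : s = m - n, cover (m, m-n) contradicts real at m - n
    have hkm : k = -1 := hke
    rw [hkm] at hc
    refine T.real (m - n) ⟨?_, fun z hz => ?_⟩
    · have := hc.1
      have e : m + (-1) * n = m - n := by ring
      rw [e] at this
      simpa using this
    · refine hc.2 z ⟨by simpa using hz.1, ?_⟩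
      have := hz.2
      have e : m + (-1) * n = m - n := by ring
      rwa [← e] at this
  · -- k ≤ -2 : m ≺ m - n ≺ m + k n contradicts the cover
    have hmk : inBar n M (m + k * n) := inBar_of_dvd ⟨k, by ring⟩ hm
    have h1 : T.lt (m - n) (m + k * n) := by
      have := wan hshape hmk (k := -1 - k) (by omega)
      have e : m + k * n + (-1 - k) * n = m - n := by ring
      rwa [e] at this
    have h2 : T.lt m (m - n) := by
      have hm' : inBar n M (m - n) := inBar_of_dvd ⟨-1, by ring⟩ hm
      have := wan hshape hm' (k := 1) le_rfl
      have e : m - n + 1 * n = m := by ring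
      rwa [e] at this
    exact hc.2 (m - n) ⟨h2, h1⟩

-- ===== chain lemmas =====

theorem chain_pairwise {l : List ℤ}
    (h : l.Chain' (fun a b => b < a ∧ T.covers a b)) :
    l.Pairwise (fun a b => b < a ∧ T.lt a b) := by
  letI : Trans (fun a b : ℤ => b < a ∧ T.lt a b) (fun a b : ℤ => b < a ∧ T.lt a b)
      (fun a b : ℤ => b < a ∧ T.lt a b) :=
    ⟨fun h1 h2 => ⟨h2.1.trans h1.1, T.lt_trans h1.2 h2.2⟩⟩
  exact List.isChain_iff_pairwise.mp (h.imp fun a b hab => ⟨hab.1, hab.2.1⟩)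

theorem descChain_singleton (a : ℤ) : IsDescChain n T [a] := by
  refine ⟨by simp, List.isChain_singleton a, fun i j hij _ => ?_⟩
  have h1 : i.1 < 1 := i.2
  have h2 : j.1 < 1 := j.2
  omega

theorem chainLen (hn : 0 < n) {l : List ℤ} (hl : IsDescChain n T l) :
    l.length ≤ n + 1 := by
  haveI : NeZero n := ⟨hn.ne'⟩
  by_cases h1 : l.length ≤ 1
  · omega
  push_neg at h1
  have hinj : Function.Injective
      (fun i : Fin (l.length - 1) => ((l.get ⟨i.1, by omega⟩ : ℤ) : ZMod n)) := by
    intro i j hij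
    by_contra hne
    have hij' : i.1 ≠ j.1 := fun h => hne (Fin.ext h)
    simp only at hij
    rw [ZMod.intCast_eq_intCast_iff] at hij
    have hdvd := hij.dvd
    -- n ∣ get j - get i
    rcases lt_or_gt_of_ne hij' with h | h
    · have hd2 : (n:ℤ) ∣ (l.get ⟨i.1, by omega⟩ - l.get ⟨j.1, by omega⟩) := by
        have h2 : (n:ℤ) ∣ -(l.get ⟨j.1, by omega⟩ - l.get ⟨i.1, by omega⟩) :=
          dvd_neg.mpr hdvd
        rwa [neg_sub] at h2
      have := hl.2.2 ⟨i.1, by omega⟩ ⟨j.1, by omega⟩ h hd2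
      have hj2 : j.1 < l.length - 1 := j.2
      simp only [Fin.val_mk] at this
      omega
    · have := hl.2.2 ⟨j.1, by omega⟩ ⟨i.1, by omega⟩ h hdvd
      have hi2 : i.1 < l.length - 1 := i.2
      simp only [Fin.val_mk] at this
      omega
  have := Fintype.card_le_of_injective _ hinj
  simp [ZMod.card] at this
  omega

theorem descChain_prefix {u v : List ℤ} (hu : u ≠ [])
    (h : IsDescChain n T (u ++ v)) : IsDescChain n T u := by
  refine ⟨hu, (List.isChain_append.mp h.2.1).1, fun i j hij hdvd => ?_⟩
  have hi : i.1 < (u ++ v).length := by simp; omega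
  have hj : j.1 < (u ++ v).length := by simp; omega
  have hgi : (u ++ v).get ⟨i.1, hi⟩ = u.get i := List.getElem_append_left i.2
  have hgj : (u ++ v).get ⟨j.1, hj⟩ = u.get j := List.getElem_append_left j.2
  have := h.2.2 ⟨i.1, hi⟩ ⟨j.1, hj⟩ hij (by rw [hgi, hgj]; exact hdvd)
  simp at this
  have hj2 := j.2
  constructor
  · exact this.1
  · omega

-- the trap lemma: an element strictly between the ends of a saturated chain is on it
theorem trap {m : ℤ} : ∀ (C : List ℤ) (hC : C ≠ []),
    C.Chain' (fun x y => T.covers x y) →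
    T.lt C.headI m → T.lt m (C.getLast hC) → m ∈ C := by
  intro C
  induction C with
  | nil => simp
  | cons x t ih =>
    intro hC hch h1 h2
    cases t with
    | nil =>
      simp only [List.headI] at h1
      simp only [List.getLast_singleton] at h2
      exact absurd (T.lt_trans h1 h2) (T.lt_irrefl x)
    | cons y r =>
      rw [List.Chain', List.isChain_cons_cons] at hch
      by_cases hmy : m = y
      · subst hmy; simp
      rcases T.lt_total m y hmy with h | h
      · exact absurd ⟨h1, h⟩ (hch.1.2 m)
      · have hne : (y :: r) ≠ [] := List.cons_ne_nil _ _
        have hlast : (x :: y :: r).getLast hC = (y :: r).getLast hne :=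
          List.getLast_cons hne
        have := ih hne hch.2 (by simpa using h) (by rwa [← hlast])
        exact List.mem_cons_of_mem _ this

-- ===== reaching lemmas =====

theorem reach_below (hshape : IsShapeLMR n T L M R) {a w d : ℤ}
    (ha : inBar n M a) (hw : inBar n M w) (hd : (n : ℤ) ∣ d) (hdpos : 0 < d) :
    ∃ q : ℕ, T.lt (a + ((q : ℤ) + 1) * d) w := by
  have hn' : (0:ℤ) < n := by
    rcases hd with ⟨k, hk⟩
    rcases Nat.eq_zero_or_pos n with h | h
    · subst h; simp at hk; omega
    · exact_mod_cast h
  obtain ⟨kd, hkd⟩ := hd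
  have hkd1 : 1 ≤ kd := by nlinarith
  have hwanstep : ∀ q : ℕ, T.lt (a + ((q : ℤ) + 1) * d) a := by
    intro q
    have := wan hshape ha (k := ((q:ℤ)+1) * kd) (by nlinarith)
    have e : a + ((q:ℤ)+1) * kd * n = a + ((q:ℤ)+1) * d := by rw [hkd]; ring
    rwa [e] at this
  by_cases hcmp : T.lt w a
  · -- finiteness argument inside the interval (w, a)
    by_contra hc
    push_neg at hc
    have hF := finM hshape hw ha hcmp
    have hsub : ∀ q : ℕ, a + ((q : ℤ) + 1) * d ∈ {z : ℤ | T.lt w z ∧ T.lt z a} ∨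
        a + ((q : ℤ) + 1) * d = w := by
      intro q
      by_cases he : a + ((q : ℤ) + 1) * d = w
      · exact Or.inr he
      rcases T.lt_total w _ (fun h => he h.symm) with h | h
      · exact Or.inl ⟨h, hwanstep q⟩
      · exact absurd h (hc q)
    have : (Set.univ : Set ℕ).Finite := by
      have hinj : Function.Injective (fun q : ℕ => a + ((q : ℤ) + 1) * d) := by
        intro p q hpq
        simp only at hpq
        have : ((p : ℤ) + 1) * d = ((q : ℤ) + 1) * d := by omega
        have := mul_right_cancel₀ (by omega : d ≠ 0) this
        exact_mod_cast by omega
      have h1 : ((fun q : ℕ => a + ((q : ℤ) + 1) * d) ⁻¹'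
          ({z : ℤ | T.lt w z ∧ T.lt z a} ∪ {w})).Finite :=
        Set.Finite.preimage (hinj.injOn) (hF.union (Set.finite_singleton w))
      refine h1.subset (fun q _ => ?_)
      rcases hsub q with h | h
      · exact Or.inl h
      · exact Or.inr h
    exact Set.infinite_univ this
  · by_cases he : w = a
    · exact ⟨0, he ▸ hwanstep 0⟩
    rcases T.lt_total w a he with h | h
    · exact absurd h hcmp
    · exact ⟨0, T.lt_trans (hwanstep 0) h⟩

theorem reach_above (hshape : IsShapeLMR n T L M R) {a w d : ℤ}
    (ha : inBar n M a) (hw : inBar n M w) (hd : (n : ℤ) ∣ d) (hdpos : 0 < d) :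
    ∃ q : ℕ, T.lt w (a - ((q : ℤ) + 1) * d) := by
  have hn' : (0:ℤ) < n := by
    rcases hd with ⟨k, hk⟩
    rcases Nat.eq_zero_or_pos n with h | h
    · subst h; simp at hk; omega
    · exact_mod_cast h
  obtain ⟨kd, hkd⟩ := hd
  have hkd1 : 1 ≤ kd := by nlinarith
  have hwanstep : ∀ q : ℕ, T.lt a (a - ((q : ℤ) + 1) * d) := by
    intro q
    have hm' : inBar n M (a - ((q:ℤ)+1) * d) :=
      inBar_of_dvd ⟨-((q:ℤ)+1) * kd, by rw [hkd]; ring⟩ ha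
    have := wan hshape hm' (k := ((q:ℤ)+1) * kd) (by nlinarith)
    have e : a - ((q:ℤ)+1) * d + ((q:ℤ)+1) * kd * n = a := by rw [hkd]; ring
    rwa [e] at this
  by_cases hcmp : T.lt a w
  · by_contra hc
    push_neg at hc
    have hF := finM hshape ha hw hcmp
    have hsub : ∀ q : ℕ, a - ((q : ℤ) + 1) * d ∈ {z : ℤ | T.lt a z ∧ T.lt z w} ∨
        a - ((q : ℤ) + 1) * d = w := by
      intro q
      by_cases he : a - ((q : ℤ) + 1) * d = w
      · exact Or.inr he
      rcases T.lt_total _ w he with h | h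
      · exact Or.inl ⟨hwanstep q, h⟩
      · exact absurd h (hc q)
    have : (Set.univ : Set ℕ).Finite := by
      have hinj : Function.Injective (fun q : ℕ => a - ((q : ℤ) + 1) * d) := by
        intro p q hpq
        simp only at hpq
        have : ((p : ℤ) + 1) * d = ((q : ℤ) + 1) * d := by omega
        have := mul_right_cancel₀ (by omega : d ≠ 0) this
        exact_mod_cast by omega
      have h1 : ((fun q : ℕ => a - ((q : ℤ) + 1) * d) ⁻¹'
          ({z : ℤ | T.lt a z ∧ T.lt z w} ∪ {w})).Finite :=
        Set.Finite.preimage (hinj.injOn) (hF.union (Set.finite_singleton w))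
      refine h1.subset (fun q _ => ?_)
      rcases hsub q with h | h
      · exact Or.inl h
      · exact Or.inr h
    exact Set.infinite_univ this
  · by_cases he : w = a
    · exact ⟨0, he ▸ hwanstep 0⟩
    rcases T.lt_total a w (fun h => he h.symm) with h | h
    · exact absurd h hcmp
    · exact ⟨0, T.lt_trans h (hwanstep 0)⟩

-- ===== the wrapped-chain construction =====

theorem buildChain {l : List ℤ}
    (hch : l.Chain' (fun a b => b < a ∧ T.covers a b)) (hlen : 2 ≤ l.length)
    {d : ℤ} (hd : (n : ℤ) ∣ d) (hwrap : l.getLast? = some (l.headI - d)) :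
    ∀ N : ℕ, ∃ C : List ℤ, C ≠ [] ∧ C.Chain' (fun a b => b < a ∧ T.covers a b) ∧
      C.headI = l.headI ∧ C.getLast? = some (l.headI - ((N : ℤ) + 1) * d) := by
  obtain ⟨a, b, r, rfl⟩ : ∃ a b r, l = a :: b :: r := by
    cases l with
    | nil => simp at hlen
    | cons a t =>
      cases t with
      | nil => simp at hlen
      | cons b r => exact ⟨a, b, r, rfl⟩
  intro N
  induction N with
  | zero =>
    refine ⟨a :: b :: r, by simp, hch, rfl, ?_⟩
    rw [hwrap]
    congr 1
    push_cast
    ring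
  | succ N ih =>
    obtain ⟨C, hCne, hCch, hChead, hClast⟩ := ih
    set c : ℤ := ((N : ℤ) + 1) * d with hc
    have hdc : (n : ℤ) ∣ c := Dvd.dvd.mul_left hd _
    refine ⟨C ++ (b :: r).map (· - c), by simp, ?_, ?_, ?_⟩
    · rw [List.Chain', List.isChain_append]
      refine ⟨hCch, ?_, ?_⟩
      · rw [List.isChain_map]
        refine (List.IsChain.tail hch).imp (fun x y hxy => ⟨by omega, ?_⟩)
        have := T.covers_shift (d := -c) (dvd_neg.mpr hdc) hxy.2
        have e1 : x + -c = x - c := by ring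
        have e2 : y + -c = y - c := by ring
        rwa [e1, e2] at this
      · intro x hx y hy
        rw [hClast] at hx
        simp only [Option.mem_def, Option.some.injEq] at hx
        have hhd : (a :: b :: r).headI = a := rfl
        rw [hhd] at hx
        simp only [List.map_cons, List.head?_cons, Option.mem_def,
          Option.some.injEq] at hy
        have hab : b < a ∧ T.covers a b := (List.isChain_cons_cons.mp hch).1
        subst hx; subst hy
        refine ⟨by omega, ?_⟩
        have := T.covers_shift (d := -c) (dvd_neg.mpr hdc) hab.2
        have e1 : a + -c = a - c := by ring
        have e2 : b + -c = b - c := by ring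
        rw [e1, e2] at this
        convert this using 2
    · cases C with
      | nil => exact absurd rfl hCne
      | cons c0 t => exact hChead
    · rw [List.getLast?_append_of_ne_nil _ (by simp)]
      have hbr : ((b :: r).map (· - c)) ≠ [] := by simp
      rw [List.getLast?_eq_getLast hbr, List.getLast_map]
      have h1 : (b :: r).getLast (by simp) = (a :: b :: r).getLast (by simp) :=
        (List.getLast_cons (by simp)).symm
      have h2 : (a :: b :: r).getLast (by simp) = (a :: b :: r).headI - d := by
        have := hwrap
        rw [List.getLast?_eq_getLast (by simp)] at this
        exact Option.some.inj this
      rw [h1, h2]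
      congr 1
      simp only [List.headI]
      push_cast
      ring

theorem noWrap (hn : 0 < n) (hdis : Disjoint Lc Rc)
    (hun : Lc ∪ Rc = Finset.Icc (1 : ℤ) (n : ℤ))
    (hT : IsCSortableTITO n Lc Rc T) (hshape : IsShapeLMR n T L M R)
    (hxy : ∃ x y : ℤ, inBar n M x ∧ inBar n M y ∧ T.lt x y ∧ x < y)
    {l : List ℤ} (hl : IsDescChain n T l) (hlen : 2 ≤ l.length) (hne : l ≠ [])
    (hmem : ∀ y ∈ l, inBar n M y)
    (hdvd : (n : ℤ) ∣ (l.headI - l.getLast hne)) : False := by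
  obtain ⟨x₀, y₀, hx₀, hy₀, hlt₀, hv₀⟩ := hxy
  set a := l.headI with ha
  set d := l.headI - l.getLast hne with hdd
  have hget0 : l.get ⟨0, by omega⟩ = l.headI := by
    cases l with
    | nil => simp at hne
    | cons c t => rfl
  have hgetlast : l.get ⟨l.length - 1, by omega⟩ = l.getLast hne := by
    simp [List.getLast_eq_getElem]
  have hpw := chain_pairwise (T := T) hl.2.1
  rw [List.pairwise_iff_get] at hpw
  have hda : l.getLast hne < l.headI := by
    have := hpw ⟨0, by omega⟩ ⟨l.length - 1, by omega⟩ (by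
      simp only [Fin.mk_lt_mk]; omega)
    rw [hget0, hgetlast] at this
    exact this.1
  have hdpos : 0 < d := by omega
  have haM : inBar n M a := hmem _ (by
    cases l with
    | nil => simp at hne
    | cons c t => simp [ha])
  obtain ⟨Q, hQ⟩ := reach_below hshape haM hx₀ hdvd hdpos
  set c : ℤ := ((Q : ℤ) + 1) * d with hc
  have hdc : (n : ℤ) ∣ c := Dvd.dvd.mul_left hdvd _
  set l' : List ℤ := l.map (· + c) with hl'
  have hl'ne : l' ≠ [] := by simp [hl', hne]
  have hl'len : 2 ≤ l'.length := by simp [hl']; omega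
  have hl'head : l'.headI = a + c := by
    cases l with
    | nil => simp at hne
    | cons c0 t => rfl
  have hl'ch : l'.Chain' (fun x y => y < x ∧ T.covers x y) := by
    rw [hl', List.Chain', List.isChain_map]
    refine hl.2.1.imp (fun x y hxy => ⟨by omega, ?_⟩)
    exact T.covers_shift hdc hxy.2
  have hgl' : l'.getLast hl'ne = l.getLast hne + c :=
    List.getLast_map hl'ne
  have hl'wrap : l'.getLast? = some (l'.headI - d) := by
    rw [List.getLast?_eq_getLast hl'ne, hgl', hl'head]
    congr 1
    rw [hdd, ha]
    ring
  have ha'M : inBar n M (a + c) := inBar_of_dvd (by simpa using hdc) haM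
  obtain ⟨N, hN⟩ := reach_above hshape ha'M hy₀ hdvd hdpos
  obtain ⟨C, hCne, hCch, hChead, hClast⟩ := buildChain hl'ch hl'len hdvd hl'wrap N
  rw [hl'head] at hChead
  have hClast' : C.getLast hCne = a + c - ((N : ℤ) + 1) * d := by
    rw [List.getLast?_eq_getLast hCne] at hClast
    have := Option.some.inj hClast
    rw [this, hl'head]
  have hCcov : C.Chain' (fun x y => T.covers x y) := hCch.imp (fun _ _ h => h.2)
  have hNlast : T.lt y₀ (C.getLast hCne) := by rw [hClast']; exact hN
  have hx₀C : x₀ ∈ C := by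
    refine trap C hCne hCcov ?_ ?_
    · rw [hChead]; exact hQ
    · exact T.lt_trans hlt₀ hNlast
  have hy₀C : y₀ ∈ C := by
    refine trap C hCne hCcov ?_ ?_
    · rw [hChead]; exact T.lt_trans hQ hlt₀
    · exact hNlast
  have hpwC := chain_pairwise (T := T) hCch
  rw [List.pairwise_iff_get] at hpwC
  obtain ⟨i, hi⟩ := List.mem_iff_get.mp hx₀C
  obtain ⟨j, hj⟩ := List.mem_iff_get.mp hy₀C
  rcases lt_trichotomy i j with h | h | h
  · have := hpwC i j h
    rw [hi, hj] at this
    omega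
  · rw [h, hj] at hi
    omega
  · have := hpwC j i h
    rw [hi, hj] at this
    exact T.asymm_s12 hlt₀ this.2

-- ===== greedy extension =====

theorem extendLeft (hn : 0 < n) (hshape : IsShapeLMR n T L M R) :
    ∀ (k : ℕ) (l : List ℤ), IsDescChain n T l → (∀ y ∈ l, inBar n M y) →
      n + 2 ≤ l.length + k →
      ∃ t, IsDescChain n T (t ++ l) ∧ (∀ y ∈ t ++ l, inBar n M y) ∧
        ∀ b, ¬ IsDescChain n T (b :: (t ++ l)) := by
  intro k
  induction k with
  | zero =>
    intro l hl _ hlen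
    exact absurd (chainLen hn hl) (by omega)
  | succ k ih =>
    intro l hl hm hlen
    by_cases hb : ∃ b, IsDescChain n T (b :: l)
    · obtain ⟨b, hbl⟩ := hb
      obtain ⟨a0, t0, rfl⟩ : ∃ a0 t0, l = a0 :: t0 := by
        cases l with
        | nil => exact absurd rfl hl.1
        | cons a0 t0 => exact ⟨a0, t0, rfl⟩
      have hcov : T.covers b a0 := (List.isChain_cons_cons.mp hbl.2.1).1.2
      have hbM : inBar n M b := cover_mem_M_left hn hshape (hm a0 (by simp)) hcov
      have hm' : ∀ y ∈ b :: a0 :: t0, inBar n M y := by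
        intro y hy
        rcases List.mem_cons.mp hy with rfl | hy
        · exact hbM
        · exact hm y hy
      obtain ⟨t, h1, h2, h3⟩ := ih (b :: a0 :: t0) hbl hm' (by simp at hlen ⊢; omega)
      have e : (t ++ [b]) ++ a0 :: t0 = t ++ b :: a0 :: t0 := by simp
      refine ⟨t ++ [b], by rw [e]; exact h1, by rw [e]; exact h2, fun c => ?_⟩
      rw [e]
      exact h3 c
    · push_neg at hb
      exact ⟨[], by simpa using hl, by simpa using hm, by simpa using hb⟩

theorem extendRight (hn : 0 < n) (hshape : IsShapeLMR n T L M R) :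
    ∀ (k : ℕ) (l : List ℤ), IsDescChain n T l → (∀ y ∈ l, inBar n M y) →
      n + 2 ≤ l.length + k →
      ∃ t, IsDescChain n T (l ++ t) ∧ (∀ y ∈ l ++ t, inBar n M y) ∧
        ∀ b, ¬ IsDescChain n T ((l ++ t) ++ [b]) := by
  intro k
  induction k with
  | zero =>
    intro l hl _ hlen
    exact absurd (chainLen hn hl) (by omega)
  | succ k ih =>
    intro l hl hm hlen
    by_cases hb : ∃ b, IsDescChain n T (l ++ [b])
    · obtain ⟨b, hbl⟩ := hb
      have hcov : T.covers (l.getLast hl.1) b := by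
        have := (List.isChain_append.mp hbl.2.1).2.2
        have h1 := this (l.getLast hl.1) (by rw [List.getLast?_eq_getLast hl.1]; rfl)
          b (by rfl)
        exact h1.2
      have hbM : inBar n M b :=
        cover_mem_M_right hn hshape (hm _ (List.getLast_mem hl.1)) hcov
      have hm' : ∀ y ∈ l ++ [b], inBar n M y := by
        intro y hy
        rcases List.mem_append.mp hy with hy | hy
        · exact hm y hy
        · simp at hy; subst hy; exact hbM
      obtain ⟨t, h1, h2, h3⟩ := ih (l ++ [b]) hbl hm' (by simp at hlen ⊢; omega)
      have e : (l ++ [b]) ++ t = l ++ (b :: t) := by simp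
      refine ⟨b :: t, by rw [← e]; exact h1, by rw [← e]; exact h2, fun c => ?_⟩
      rw [← e]
      exact h3 c
    · push_neg at hb
      exact ⟨[], by simpa using hl, by simpa using hm, by simpa using hb⟩

-- ===== the head of a maximal chain lies in R̄c =====

theorem head_mem_Rc (hn : 0 < n) (hdis : Disjoint Lc Rc)
    (hun : Lc ∪ Rc = Finset.Icc (1 : ℤ) (n : ℤ))
    (hT : IsCSortableTITO n Lc Rc T) (hshape : IsShapeLMR n T L M R)
    (hxy : ∃ x y : ℤ, inBar n M x ∧ inBar n M y ∧ T.lt x y ∧ x < y)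
    {l : List ℤ} (hmax : IsMaxDescChain n T l) (hmem : ∀ y ∈ l, inBar n M y)
    (hne : l ≠ []) : inBar n Rc l.headI := by
  have hdesc := hmax.1
  by_contra hR
  have hLc : inBar n Lc l.headI := (lr_total hn hun _).resolve_right hR
  have hM : inBar n M l.headI := hmem _ (by
    cases l with
    | nil => exact absurd rfl hne
    | cons a t => simp)
  obtain ⟨p, hp⟩ := pred_exists hn hshape hM
  obtain ⟨hgt, hndvd⟩ := pred_props hn hdis hun hT hshape hM hLc hp
  have hget0 : ∀ h0 : 0 < l.length, l.get ⟨0, h0⟩ = l.headI := by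
    intro h0
    cases l with
    | nil => simp at h0
    | cons a t => rfl
  have hpw : ∀ i j : Fin l.length, i < j →
      l.get j < l.get i ∧ T.lt (l.get i) (l.get j) := by
    have := chain_pairwise (T := T) hdesc.2.1
    rw [List.pairwise_iff_get] at this
    exact this
  apply hmax.2.1 p
  refine ⟨by simp, ?_, ?_⟩
  · cases l with
    | nil => exact absurd rfl hne
    | cons a t => exact List.isChain_cons_cons.mpr ⟨⟨hgt, hp⟩, hdesc.2.1⟩
  · intro i j hij hdvd
    have hjlen : j.1 < l.length + 1 := by
      have := j.2; simpa using this
    by_cases hi0 : i.1 = 0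
    · by_cases hjl : j.1 = l.length
      · exact ⟨hi0, by simp [hjl]⟩
      exfalso
      -- 1 ≤ j.1 ≤ l.length - 1
      obtain ⟨j', hj'⟩ : ∃ j', j.1 = j' + 1 := ⟨j.1 - 1, by omega⟩
      have hj'lt : j' < l.length := by omega
      have hgi : (p :: l).get i = p := by
        have : i = ⟨0, by simp⟩ := Fin.ext (by simpa using hi0)
        rw [this]
        rfl
      have hgj : (p :: l).get j = l.get ⟨j', hj'lt⟩ := by
        have : j = ⟨j' + 1, by simpa using Nat.add_lt_add_right hj'lt 1⟩ :=
          Fin.ext (by simpa using hj')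
        rw [this]
        exact List.get_cons_succ
      rw [hgi, hgj] at hdvd
      by_cases hj'0 : j' = 0
      · subst hj'0
        rw [hget0 _] at hdvd
        exact hndvd hdvd
      · -- j' ≥ 1 : use successor uniqueness to force a wrap
        have hult : T.lt l.headI (l.get ⟨j', hj'lt⟩) := by
          have h9 := hpw ⟨0, by omega⟩ ⟨j', hj'lt⟩ (by simp [Fin.mk_lt_mk]; omega)
          rw [hget0 _] at h9
          exact h9.2
        have hpu : T.lt p (l.get ⟨j', hj'lt⟩) := T.lt_trans hp.1 hult
        have hj'1lt : j' + 1 < l.length := by omega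
        have hstep : T.covers (l.get ⟨j', hj'lt⟩) (l.get ⟨j' + 1, hj'1lt⟩) := by
          have hc := List.isChain_iff_getElem.mp hdesc.2.1 j' (by omega)
          exact hc.2
        have hcovshift := T.covers_shift (d := p - l.get ⟨j', hj'lt⟩) hdvd hstep
        have e1 : l.get ⟨j', hj'lt⟩ + (p - l.get ⟨j', hj'lt⟩) = p := by ring
        rw [e1] at hcovshift
        have huniq := T.succ_unique hcovshift hp
        -- n ∣ l.get 0 - l.get (j'+1)
        have hdvd2 : (n : ℤ) ∣ (l.get ⟨0, by omega⟩ - l.get ⟨j' + 1, hj'1lt⟩) := by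
          rw [hget0 _, ← huniq]
          have e2 : l.get ⟨j' + 1, hj'1lt⟩ + (p - l.get ⟨j', hj'lt⟩) -
              l.get ⟨j' + 1, hj'1lt⟩ = p - l.get ⟨j', hj'lt⟩ := by ring
          rw [e2]
          exact hdvd
        have hcon := hdesc.2.2 ⟨0, by omega⟩ ⟨j' + 1, hj'1lt⟩ (by
          simp only [Fin.val_mk]; omega) hdvd2
        simp only [Fin.val_mk] at hcon
        -- wrap: n ∣ headI - getLast
        have hwrapdvd : (n : ℤ) ∣ (l.headI - l.getLast hne) := by
          have hlast : l.getLast hne = l.get ⟨l.length - 1, by omega⟩ :=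
            List.getLast_eq_getElem hne
          have efin : (⟨l.length - 1, by omega⟩ : Fin l.length) = ⟨j' + 1, hj'1lt⟩ :=
            Fin.ext (by simp only [Fin.val_mk]; omega)
          rw [hlast, efin, ← hget0 (by omega)]
          exact hdvd2
        exact noWrap hn hdis hun hT hshape hxy hdesc (by omega) hne hmem hwrapdvd
    · exfalso
      obtain ⟨i', hi'⟩ : ∃ i', i.1 = i' + 1 := ⟨i.1 - 1, by omega⟩
      obtain ⟨j', hj'⟩ : ∃ j', j.1 = j' + 1 := ⟨j.1 - 1, by omega⟩
      have hi'lt : i' < l.length := by omega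
      have hj'lt : j' < l.length := by omega
      have hgi : (p :: l).get i = l.get ⟨i', hi'lt⟩ := by
        have : i = ⟨i' + 1, by simpa using Nat.add_lt_add_right hi'lt 1⟩ :=
          Fin.ext (by simpa using hi')
        rw [this]
        exact List.get_cons_succ
      have hgj : (p :: l).get j = l.get ⟨j', hj'lt⟩ := by
        have : j = ⟨j' + 1, by simpa using Nat.add_lt_add_right hj'lt 1⟩ :=
          Fin.ext (by simpa using hj')
        rw [this]
        exact List.get_cons_succ
      rw [hgi, hgj] at hdvd
      have hcon := hdesc.2.2 ⟨i', hi'lt⟩ ⟨j', hj'lt⟩ (by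
        simp only [Fin.val_mk]; omega) hdvd
      simp only [Fin.val_mk] at hcon
      have hwrapdvd : (n : ℤ) ∣ (l.headI - l.getLast hne) := by
        have hlast : l.getLast hne = l.get ⟨l.length - 1, by omega⟩ :=
          List.getLast_eq_getElem hne
        have h1 : i' = 0 := hcon.1
        have efin : (⟨l.length - 1, by omega⟩ : Fin l.length) = ⟨j', hj'lt⟩ :=
          Fin.ext (by simp only [Fin.val_mk]; omega)
        have efin2 : (⟨i', hi'lt⟩ : Fin l.length) = ⟨0, by omega⟩ :=
          Fin.ext (by simp only [Fin.val_mk]; omega)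
        rw [hlast, efin, ← hget0 (by omega), ← efin2]
        exact hdvd
      exact noWrap hn hdis hun hT hshape hxy hdesc (by omega) hne hmem hwrapdvd

-- ===== the last element of a maximal chain lies in L̄c =====

theorem last_mem_Lc (hn : 0 < n) (hdis : Disjoint Lc Rc)
    (hun : Lc ∪ Rc = Finset.Icc (1 : ℤ) (n : ℤ))
    (hT : IsCSortableTITO n Lc Rc T) (hshape : IsShapeLMR n T L M R)
    (hxy : ∃ x y : ℤ, inBar n M x ∧ inBar n M y ∧ T.lt x y ∧ x < y)
    {l : List ℤ} (hmax : IsMaxDescChain n T l) (hmem : ∀ y ∈ l, inBar n M y)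
    (hne : l ≠ []) : inBar n Lc (l.getLast hne) := by
  have hdesc := hmax.1
  by_contra hL
  have hRc : inBar n Rc (l.getLast hne) := (lr_total hn hun _).resolve_left hL
  have hM : inBar n M (l.getLast hne) := hmem _ (List.getLast_mem hne)
  obtain ⟨s, hs⟩ := succ_exists hn hshape hM
  obtain ⟨hlts, hndvd⟩ := succ_props hn hdis hun hT hshape hM hRc hs
  have hget0 : ∀ h0 : 0 < l.length, l.get ⟨0, h0⟩ = l.headI := by
    intro h0
    cases l with
    | nil => simp at h0
    | cons a t => rfl
  have hgetlast : l.get ⟨l.length - 1, by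
      have := List.length_pos_iff.mpr hne; omega⟩ = l.getLast hne :=
    (List.getLast_eq_getElem hne).symm
  have hpw : ∀ i j : Fin l.length, i < j →
      l.get j < l.get i ∧ T.lt (l.get i) (l.get j) := by
    have := chain_pairwise (T := T) hdesc.2.1
    rw [List.pairwise_iff_get] at this
    exact this
  apply hmax.2.2 s
  refine ⟨by simp, ?_, ?_⟩
  · rw [List.Chain', List.isChain_append]
    refine ⟨hdesc.2.1, List.isChain_singleton s, ?_⟩
    intro x hx y hy
    rw [List.getLast?_eq_getLast hne] at hx
    simp only [Option.mem_def, Option.some.injEq] at hx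
    simp only [List.head?_cons, Option.mem_def, Option.some.injEq] at hy
    subst hx; subst hy
    exact ⟨hlts, hs⟩
  · intro i j hij hdvd
    have hlen' : (l ++ [s]).length = l.length + 1 := by simp
    have hjlen : j.1 < l.length + 1 := by
      have h := j.2
      simp only [List.length_append, List.length_cons, List.length_nil] at h
      omega
    have hilen : i.1 < l.length := by omega
    have hgi : (l ++ [s]).get i = l.get ⟨i.1, hilen⟩ := by
      rcases i with ⟨iv, hiv⟩
      exact List.getElem_append_left hilen
    by_cases hjl : j.1 = l.length
    · have hgj : (l ++ [s]).get j = s := by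
        rcases j with ⟨jv, hjv⟩
        simp only [Fin.val_mk] at hjl
        subst hjl
        exact List.getElem_concat_length rfl _
      by_cases hi0 : i.1 = 0
      · refine ⟨hi0, ?_⟩
        simp only [List.length_append, List.length_cons, List.length_nil]
        omega
      exfalso
      rw [hgi, hgj] at hdvd
      by_cases hil : i.1 = l.length - 1
      · have efin : (⟨i.1, hilen⟩ : Fin l.length) =
            ⟨l.length - 1, by omega⟩ := Fin.ext (by simp only [Fin.val_mk]; omega)
        rw [efin, hgetlast] at hdvd
        apply hndvd
        have h2 := dvd_neg.mpr hdvd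
        rwa [neg_sub] at h2
      · -- interior: use predecessor uniqueness
        obtain ⟨i0, hi0e⟩ : ∃ i0, i.1 = i0 + 1 := ⟨i.1 - 1, by omega⟩
        have hi01 : i0 + 1 < l.length := by omega
        have hult : T.lt (l.get ⟨i0 + 1, hi01⟩) (l.getLast hne) := by
          have h9 := hpw ⟨i0 + 1, hi01⟩ ⟨l.length - 1, by omega⟩ (by
            simp only [Fin.mk_lt_mk]; omega)
          rw [hgetlast] at h9
          exact h9.2
        have hus : T.lt (l.get ⟨i0 + 1, hi01⟩) s := T.lt_trans hult hs.1
        have hdvd' : (n : ℤ) ∣ (s - l.get ⟨i0 + 1, hi01⟩) := by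
          have efin : (⟨i.1, hilen⟩ : Fin l.length) = ⟨i0 + 1, hi01⟩ :=
            Fin.ext (by simp only [Fin.val_mk]; omega)
          rw [efin] at hdvd
          have h2 := dvd_neg.mpr hdvd
          rwa [neg_sub] at h2
        have hstep : T.covers (l.get ⟨i0, by omega⟩) (l.get ⟨i0 + 1, hi01⟩) :=
          (List.isChain_iff_getElem.mp hdesc.2.1 i0 (by omega)).2
        have hcovshift := T.covers_shift (d := s - l.get ⟨i0 + 1, hi01⟩) hdvd' hstep
        have e1 : l.get ⟨i0 + 1, hi01⟩ + (s - l.get ⟨i0 + 1, hi01⟩) = s := by ring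
        rw [e1] at hcovshift
        have huniq := T.pred_unique hcovshift hs
        have hdvd2 : (n : ℤ) ∣ (l.get ⟨i0, by omega⟩ - l.get ⟨l.length - 1, by omega⟩) := by
          rw [hgetlast, ← huniq]
          have e2 : l.get ⟨i0, by omega⟩ -
              (l.get ⟨i0, by omega⟩ + (s - l.get ⟨i0 + 1, hi01⟩)) =
              -(s - l.get ⟨i0 + 1, hi01⟩) := by ring
          rw [e2]
          exact dvd_neg.mpr hdvd'
        have hcon := hdesc.2.2 ⟨i0, by omega⟩ ⟨l.length - 1, by omega⟩ (by
          simp only [Fin.val_mk]; omega) hdvd2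
        simp only [Fin.val_mk] at hcon
        have hwrapdvd : (n : ℤ) ∣ (l.headI - l.getLast hne) := by
          have efin : (⟨i0, by omega⟩ : Fin l.length) = ⟨0, by omega⟩ :=
            Fin.ext (by simp only [Fin.val_mk]; omega)
          rw [← hgetlast, ← hget0 (by omega), ← efin]
          exact hdvd2
        exact noWrap hn hdis hun hT hshape hxy hdesc (by omega) hne hmem hwrapdvd
    · exfalso
      have hjlen2 : j.1 < l.length := by omega
      have hgj : (l ++ [s]).get j = l.get ⟨j.1, hjlen2⟩ := by
        rcases j with ⟨jv, hjv⟩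
        exact List.getElem_append_left hjlen2
      rw [hgi, hgj] at hdvd
      have hcon := hdesc.2.2 ⟨i.1, hilen⟩ ⟨j.1, hjlen2⟩ (by
        simp only [Fin.val_mk]; omega) hdvd
      simp only [Fin.val_mk] at hcon
      have hwrapdvd : (n : ℤ) ∣ (l.headI - l.getLast hne) := by
        have efin : (⟨i.1, hilen⟩ : Fin l.length) = ⟨0, by omega⟩ :=
          Fin.ext (by simp only [Fin.val_mk]; omega)
        have efin2 : (⟨j.1, hjlen2⟩ : Fin l.length) = ⟨l.length - 1, by omega⟩ :=
          Fin.ext (by simp only [Fin.val_mk]; omega)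
        have e1 : l.get ⟨i.1, hilen⟩ = l.headI := by rw [efin]; exact hget0 _
        have e2 : l.get ⟨j.1, hjlen2⟩ = l.getLast hne := by rw [efin2]; exact hgetlast
        rw [e1, e2] at hdvd
        exact hdvd
      exact noWrap hn hdis hun hT hshape hxy hdesc (by omega) hne hmem hwrapdvd

theorem statement12' (hn : 0 < n)
    (hdis : Disjoint Lc Rc) (hun : Lc ∪ Rc = Finset.Icc (1 : ℤ) (n : ℤ))
    (hT : IsCSortableTITO n Lc Rc T) (hshape : IsShapeLMR n T L M R)
    (hxy : ∃ x y : ℤ, inBar n M x ∧ inBar n M y ∧ T.lt x y ∧ x < y) :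
    (∀ a : ℤ, inBar n M a →
      ∃ l : List ℤ, IsMaxDescChain n T l ∧ a ∈ l ∧ ∀ y ∈ l, inBar n M y) ∧
    (∀ l : List ℤ, IsMaxDescChain n T l → (∀ y ∈ l, inBar n M y) → l ≠ [] →
      inBar n Rc l.headI ∧ inBar n Lc l.getLastI) := by
  constructor
  · intro a haM
    have h1 : IsDescChain n T [a] := descChain_singleton a
    obtain ⟨t, hlt1, hm1, hnoleft⟩ := extendLeft hn hshape (n + 2) [a] h1 (by
      intro y hy
      simp at hy
      subst hy
      exact haM) (by simp)
    obtain ⟨t', hrt, hm2, hnoright⟩ :=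
      extendRight hn hshape (n + 2) (t ++ [a]) hlt1 hm1 (by omega)
    refine ⟨(t ++ [a]) ++ t', ⟨hrt, ?_, hnoright⟩, ?_, hm2⟩
    · intro b hb
      apply hnoleft b
      have e : b :: ((t ++ [a]) ++ t') = (b :: (t ++ [a])) ++ t' := by simp
      rw [e] at hb
      exact descChain_prefix (by simp) hb
    · exact List.mem_append.mpr (Or.inl (by simp))
  · intro l hmax hmem hne
    refine ⟨head_mem_Rc hn hdis hun hT hshape hxy hmax hmem hne, ?_⟩
    have e : l.getLastI = l.getLast hne := by
      rw [List.getLastI_eq_getLast?, List.getLast?_eq_getLast hne]; rfl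
    rw [e]
    exact last_mem_Lc hn hdis hun hT hshape hxy hmax hmem hne

end St12

/- Statement 12: in a c-sortable TITO of shape [L][M̲][R] possessing x ≺ y in M̄ with
x < y, the elements of M̄ decompose into (orbits of) maximal descending chains, and each
maximal descending chain contained in M̄ starts in R̄_c and ends in L̄_c. -/
theorem statement12 (n : ℕ) (hn : 0 < n) (Lc Rc : Finset ℤ)
    (hdis : Disjoint Lc Rc) (hun : Lc ∪ Rc = Finset.Icc (1 : ℤ) (n : ℤ))
    (hLne : Lc.Nonempty) (hRne : Rc.Nonempty)
    (T : TITO n) (hT : IsCSortableTITO n Lc Rc T)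
    (L M R : Finset ℤ) (hshape : IsShapeLMR n T L M R)
    (hL : ∀ x ∈ L, inBar n Lc x) (hR : ∀ x ∈ R, inBar n Rc x)
    (hML : ∃ x ∈ M, inBar n Lc x) (hMR : ∃ x ∈ M, inBar n Rc x)
    (hxy : ∃ x y : ℤ, inBar n M x ∧ inBar n M y ∧ T.lt x y ∧ x < y) :
    (∀ a : ℤ, inBar n M a →
      ∃ l : List ℤ, IsMaxDescChain n T l ∧ a ∈ l ∧ ∀ y ∈ l, inBar n M y) ∧
    (∀ l : List ℤ, IsMaxDescChain n T l → (∀ y ∈ l, inBar n M y) → l ≠ [] →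
      inBar n Rc l.headI ∧ inBar n Lc l.getLastI) :=
  statement12' hn hdis hun hT hshape hxy

end
end

section
/- Let c be a Coxeter element of Ŝ_n and let ≺ be a c-sortable TITO on Z with waning block M̲ (i.e. not a single waxing block). Then every a ∈ M̲ occurs in some cover reflection of ≺ together with another element of M̲: there exist b ∈ M̲ and a cover reflection t of ≺ with t = (a,b). -/
open scoped Classical

noncomputable section

/-!
Let `a ∈ M̄`, so `a + n ≺ a`. Reality of `≺` makes the `≺`-interval `(a + n, a)` nonempty, and it
is finite because both ends lie in the block `M̄`; its `≺`-largest element `b` is covered by `a`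
and lies in `M̄` by convexity of the blocks. If `a ∈ L̄_c`, avoidance of the pattern
`k ≺ i ≺ j` forces `a < b`, so `(a, b)` is a cover reflection. If `a ∈ R̄_c`, the same argument
applied to the reversed, reflected order produces a cover reflection `(b, a)`.
-/

section Residues

variable {n : ℕ} {S S' : Finset ℤ} {x : ℤ}

theorem inBar_union : inBar n (S ∪ S') x ↔ inBar n S x ∨ inBar n S' x := by
  simp only [inBar, Finset.mem_union, or_and_right, exists_or]

theorem inBar.add_of_dvd {t : ℤ} (hx : inBar n S x) (ht : (n : ℤ) ∣ t) :
    inBar n S (x + t) := by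
  obtain ⟨s, hs, hdvd⟩ := hx
  exact ⟨s, hs, by simpa only [add_sub_right_comm] using dvd_add hdvd ht⟩

theorem inBar_Ico (hn : 0 < n) (x : ℤ) : inBar n (Finset.Ico 0 n) x :=
  ⟨x % n, Finset.mem_Ico.mpr ⟨Int.emod_nonneg x (by omega), Int.emod_lt_of_pos x (by omega)⟩,
    Int.dvd_self_sub_of_emod_eq rfl⟩

theorem inBar_Icc (hn : 0 < n) (x : ℤ) : inBar n (Finset.Icc 1 n) x := by
  have h0 := Int.emod_nonneg (x - 1) (by omega : (n : ℤ) ≠ 0)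
  have h1 := Int.emod_lt_of_pos (x - 1) (by omega : (0 : ℤ) < n)
  refine ⟨(x - 1) % n + 1, Finset.mem_Icc.mpr ⟨by omega, by omega⟩, ?_⟩
  simpa only [sub_add_eq_sub_sub, sub_right_comm] using
    Int.dvd_self_sub_of_emod_eq (a := x - 1) rfl

end Residues

namespace TITO

variable {n : ℕ} (T : TITO n)

/-- The order reversed and reflected through `0`. It exchanges the two forbidden patterns of
`IsCSortableTITO`, which reduces the case `a ∈ R̄_c` to the case `a ∈ L̄_c`. -/
def dual : TITO n where
  lt x y := T.lt (-y) (-x)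
  lt_irrefl x := T.lt_irrefl (-x)
  lt_trans h₁ h₂ := T.lt_trans h₂ h₁
  lt_total x y hxy := T.lt_total (-y) (-x) (by omega)
  invariant x y := by
    have e : ∀ z : ℤ, -(z + n) + n = -z := fun z => by ring
    rw [T.invariant (-(y + n)) (-(x + n)), e, e]
  real x := by
    have h := T.real (-(x + n))
    rw [show -(x + n) + n = -x by ring] at h
    exact fun ⟨hx, hz⟩ => h ⟨hx, fun z ⟨h₁, h₂⟩ => hz (-z) ⟨by rwa [neg_neg], by rwa [neg_neg]⟩⟩

variable {T}

@[simp]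
theorem dual_lt {x y : ℤ} : T.dual.lt x y ↔ T.lt (-y) (-x) := Iff.rfl

theorem coverRefl_dual {a b : ℤ} : CoverRefl n T.dual a b ↔ CoverRefl n T (-b) (-a) := by
  simp only [CoverRefl, TITO.covers, dual_lt]
  refine and_congr (by omega) (and_congr (by rw [neg_sub_neg]) (and_congr_right fun _ => ?_))
  exact ⟨fun h z hz => h (-z) (by simpa [and_comm] using hz),
    fun h z hz => h (-z) (by simpa [and_comm] using hz)⟩

theorem pos_of_lt_add_self {x : ℤ} (hx : T.lt (x + n) x) : 0 < n :=
  Nat.pos_of_ne_zero fun h => T.lt_irrefl x (by simpa [h] using hx)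

theorem add_mul_lt_self {x : ℤ} (hx : T.lt (x + n) x) {s : ℤ} (hs : 1 ≤ s) :
    T.lt (x + s * n) x := by
  induction s, hs using Int.leInduction with
  | base => simpa using hx
  | succ s _ ih =>
    have h := T.lt_trans ((T.invariant _ _).mp ih) hx
    rwa [add_one_mul, ← add_assoc]

theorem not_lt_add_mul {x : ℤ} (hx : T.lt (x + n) x) {s : ℤ} (hs : 0 ≤ s) :
    ¬ T.lt x (x + s * n) := by
  rcases hs.eq_or_lt with rfl | hs
  · simpa using T.lt_irrefl x
  · exact fun h => T.lt_irrefl x (T.lt_trans h (T.add_mul_lt_self hx hs))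

theorem exists_covers_of_finite {x y : ℤ} (hfin : {z | T.lt x z ∧ T.lt z y}.Finite)
    (hne : ∃ z, T.lt x z ∧ T.lt z y) : ∃ z, T.lt x z ∧ T.covers z y := by
  have : IsStrictOrder ℤ fun u v => T.lt v u :=
    { irrefl := T.lt_irrefl, trans := fun _ _ _ h₁ h₂ => T.lt_trans h₂ h₁ }
  obtain ⟨z, hz⟩ := hne
  obtain ⟨⟨m, hxm, hmy⟩, -, hmax⟩ :=
    (hfin.wellFoundedOn (r := fun u v => T.lt v u)).has_min Set.univ ⟨⟨z, hz⟩, trivial⟩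
  exact ⟨m, hxm, hmy, fun u ⟨hmu, huy⟩ => hmax ⟨u, T.lt_trans hxm hmu, huy⟩ trivial hmu⟩

/-- The witness `b` is the `≺`-largest element of `(a + n, a)`. Here `b < a` is impossible,
since `b < a < b + kn` with `b + kn ≺ b ≺ a` would be an occurrence of the forbidden pattern;
and `b ≢ a` because `a + kn ≼ a + n ≺ b` for `k ≥ 1`. -/
theorem exists_coverRefl_of_lt_add_self {a : ℤ} (ha : T.lt (a + n) a)
    (hfin : {z | T.lt (a + n) z ∧ T.lt z a}.Finite)
    (hwaning : ∀ z, T.lt (a + n) z → T.lt z a → T.lt (z + n) z)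
    (hpat : ¬ ∃ i k, i < a ∧ a < k ∧ T.lt k i ∧ T.lt i a) :
    ∃ b, T.lt (a + n) b ∧ T.lt b a ∧ CoverRefl n T a b := by
  have hn : (0 : ℤ) < n := by exact_mod_cast T.pos_of_lt_add_self ha
  have hne : ∃ z, T.lt (a + n) z ∧ T.lt z a := by
    by_contra h
    exact T.real a ⟨ha, fun z hz => h ⟨z, hz⟩⟩
  obtain ⟨b, hab, hcov⟩ := T.exists_covers_of_finite hfin hne
  have hb : T.lt (b + n) b := hwaning b hab hcov.1
  have hlt : a < b := by
    by_contra hle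
    have hba : b < a := lt_of_le_of_ne (not_lt.mp hle) fun h => T.lt_irrefl a (h ▸ hcov.1)
    exact hpat ⟨b, b + (a - b + 1) * n, hba, by nlinarith, T.add_mul_lt_self hb (by omega),
      hcov.1⟩
  refine ⟨b, hab, hcov.1, hlt, fun ⟨k, hk⟩ => ?_, hcov⟩
  have hbk : b = a + n + (k - 1) * n := by linarith
  have hk1 : 0 ≤ k - 1 := by nlinarith
  exact T.not_lt_add_mul ((T.invariant _ _).mp ha) hk1 (hbk ▸ hab)

end TITO

theorem IsShapeLMR.inBar_of_lt_of_lt {n : ℕ} {T : TITO n} {L M R : Finset ℤ}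
    (h : IsShapeLMR n T L M R) (hn : 0 < n) {x y z : ℤ} (hx : inBar n M x) (hy : inBar n M y)
    (hxz : T.lt x z) (hzy : T.lt z y) : inBar n M z := by
  obtain ⟨hunion, -, -, -, hLM, -, hMR, -⟩ := h
  have hz := inBar_Ico hn z
  rw [← hunion, inBar_union, inBar_union] at hz
  rcases hz with (hz | hz) | hz
  · exact absurd (T.lt_trans (hLM z x hz hx) hxz) (T.lt_irrefl z)
  · exact hz
  · exact absurd (T.lt_trans hzy (hMR y z hy hz)) (T.lt_irrefl z)

theorem statement13_general (n : ℕ) (Lc Rc : Finset ℤ)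
    (hun : Lc ∪ Rc = Finset.Icc (1 : ℤ) (n : ℤ))
    (T : TITO n) (hT : IsCSortableTITO n Lc Rc T)
    (L M R : Finset ℤ) (hshape : IsShapeLMR n T L M R) :
    ∀ a : ℤ, inBar n M a →
      ∃ b : ℤ, inBar n M b ∧ (CoverRefl n T a b ∨ CoverRefl n T b a) := by
  intro a ha
  obtain ⟨-, hpatL, hpatR⟩ := hT
  have ⟨_, _, _, _, _, _, _, _, hwan, hfin⟩ := hshape
  have hn : 0 < n := T.pos_of_lt_add_self (hwan a ha)
  have hLR := inBar_Icc hn a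
  rw [← hun, inBar_union] at hLR
  rcases hLR with haL | haR
  · have ha' : inBar n M (a + n) := ha.add_of_dvd dvd_rfl
    obtain ⟨b, h₁, h₂, hab⟩ := T.exists_coverRefl_of_lt_add_self (hwan a ha)
      (hfin _ _ (hwan a ha) (Or.inr (Or.inl ⟨ha', ha⟩)))
      (fun z h₁ h₂ => hwan z (hshape.inBar_of_lt_of_lt hn ha' ha h₁ h₂))
      (fun ⟨i, k, hi, hk, hki, hia⟩ => hpatL ⟨i, a, k, hi, hk, haL, hki, hia⟩)
    exact ⟨b, hshape.inBar_of_lt_of_lt hn ha' ha h₁ h₂, Or.inl hab⟩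
  · have ha' : inBar n M (-n + a) := by
      simpa only [add_comm] using ha.add_of_dvd (dvd_neg.mpr dvd_rfl)
    have hlt : T.lt a (-n + a) := by simpa using hwan _ ha'
    obtain ⟨b, h₁, h₂, hba⟩ := T.dual.exists_coverRefl_of_lt_add_self (a := -a)
      (by simpa using hlt)
      (by
        convert (hfin _ _ hlt (Or.inr (Or.inl ⟨ha, ha'⟩))).preimage neg_injective.injOn using 1
        ext z
        simp [and_comm])
      (fun z h₁ h₂ => by
        simp only [TITO.dual_lt, neg_add_rev, neg_neg] at h₁ h₂ ⊢
        have hz := hshape.inBar_of_lt_of_lt hn ha ha' h₂ h₁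
        rw [add_comm]
        simpa using hwan _ (hz.add_of_dvd (dvd_neg.mpr dvd_rfl)))
      (fun ⟨i, k, hi, hk, hki, hia⟩ => hpatR ⟨-k, a, -i, by omega, by omega, haR,
        by simpa using hia, by simpa using hki⟩)
    simp only [TITO.dual_lt, TITO.coverRefl_dual, neg_add_rev, neg_neg] at h₁ h₂ hba
    exact ⟨-b, hshape.inBar_of_lt_of_lt hn ha ha' h₂ h₁, Or.inr hba⟩

theorem statement13 (n : ℕ) (hn : 0 < n) (Lc Rc : Finset ℤ)
    (hdis : Disjoint Lc Rc) (hun : Lc ∪ Rc = Finset.Icc (1 : ℤ) (n : ℤ))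
    (hLne : Lc.Nonempty) (hRne : Rc.Nonempty)
    (T : TITO n) (hT : IsCSortableTITO n Lc Rc T)
    (L M R : Finset ℤ) (hshape : IsShapeLMR n T L M R)
    (hL : ∀ x ∈ L, inBar n Lc x) (hR : ∀ x ∈ R, inBar n Rc x)
    (hML : ∃ x ∈ M, inBar n Lc x) (hMR : ∃ x ∈ M, inBar n Rc x) :
    ∀ a : ℤ, inBar n M a →
      ∃ b : ℤ, inBar n M b ∧ (CoverRefl n T a b ∨ CoverRefl n T b a) :=
  statement13_general n Lc Rc hun T hT L M R hshape

end
end
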